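/- arXiv:1506.01625 — 6 statements merged into one kernel-verified Lean document; each statement's English description precedes it below -/
import Mathlib

section
/- Let φ be a nondegenerate Bernstein function. Then the map u ↦ u/φ(u) is positive on (0,∞) and log-concave on (0,∞), i.e. u ↦ log u − log φ(u) is a concave function on (0,∞). (Paper: Proposition on Bernstein functions, item on log-concavity of u/φ(u).) -/
open MeasureTheory
open scoped ENNReal NNReal

section BernsteinAux

open Real Set

lemma bern_aux_interval (u : ℝ) (hu : 0 < u) (w : ℝ) :
    ∫ t in (0:ℝ)..w, Real.exp (-(u*t)) = (1 - Real.exp (-(u*w)))/u := by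
  have h1 : ∫ t in (0:ℝ)..w, Real.exp (-(u*t))
      = u⁻¹ • ∫ x in (u*0)..(u*w), Real.exp (-x) :=
    intervalIntegral.integral_comp_mul_left (fun x => Real.exp (-x)) hu.ne'
  rw [h1]
  have h2 : ∫ x in (u*0)..(u*w), Real.exp (-x)
      = ∫ x in (-(u*w))..(-(u*0)), Real.exp x := intervalIntegral.integral_comp_neg _
  rw [h2, integral_exp]
  rw [mul_zero, neg_zero, Real.exp_zero]
  rw [smul_eq_mul]
  field_simp

lemma bern_aux_Ioi (u : ℝ) (hu : 0 < u) :
    ∫ t in Set.Ioi (0:ℝ), Real.exp (-(u*t)) = 1/u := by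
  have h1 := MeasureTheory.integral_comp_mul_left_Ioi (fun x => Real.exp (-x)) 0 hu
  simp only [mul_zero] at h1
  rw [h1, integral_exp_neg_Ioi, neg_zero, Real.exp_zero, smul_eq_mul, mul_one, one_div]

lemma bern_aux_integrableOn (u : ℝ) (hu : 0 < u) :
    IntegrableOn (fun t : ℝ => Real.exp (-(u*t))) (Set.Ioi 0) := by
  simpa [neg_mul] using exp_neg_integrableOn_Ioi 0 hu

lemma bern_aux_min_bound (u y : ℝ) (hu : 0 < u) (hy : 0 < y) :
    |1 - Real.exp (-(u*y))| ≤ max 1 u * min 1 y := by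
  have h1 : Real.exp (-(u*y)) ≤ 1 := by
    rw [Real.exp_le_one_iff]; nlinarith
  have h0 : 0 ≤ 1 - Real.exp (-(u*y)) := by linarith
  rw [abs_of_nonneg h0]
  have hexp : 1 - u*y ≤ Real.exp (-(u*y)) := by
    have := Real.add_one_le_exp (-(u*y)); linarith
  rcases le_total y 1 with hy1 | hy1
  · rw [min_eq_right hy1]
    calc 1 - Real.exp (-(u*y)) ≤ u * y := by linarith
      _ ≤ max 1 u * y := by nlinarith [le_max_right 1 u]
  · rw [min_eq_left hy1, mul_one]
    have : (0:ℝ) ≤ Real.exp (-(u*y)) := (Real.exp_pos _).le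
    calc 1 - Real.exp (-(u*y)) ≤ 1 := by linarith
      _ ≤ max 1 u := le_max_left 1 u

end BernsteinAux

/-- for a nondegenerate Bernstein function φ, the map u ↦ u/φ(u) is positive
and log-concave on (0,∞). -/
theorem bernstein_u_div_phi_logConcave
    (φ : ℝ → ℝ) (m σ2 : ℝ) (μ : Measure ℝ)
    (hm : 0 ≤ m) (hσ : 0 ≤ σ2)
    (hμ0 : μ (Set.Iic 0) = 0)
    (hμint : Integrable (fun y : ℝ => min 1 y) μ)
    (hrep : ∀ u : ℝ, 0 < u →
      φ u = m + σ2 * u + ∫ y, (1 - Real.exp (-(u * y))) ∂μ)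
    (hnd : ¬ (m = 0 ∧ σ2 = 0 ∧ μ = 0)) :
    (∀ u : ℝ, 0 < u → 0 < u / φ u)
    ∧ ConcaveOn ℝ (Set.Ioi 0) (fun u : ℝ => Real.log u - Real.log (φ u)) := by
  -- a.e. positivity of y under μ
  have hae : ∀ᵐ y ∂μ, 0 < y := by
    rw [ae_iff]
    convert hμ0 using 2
    ext y; simp [not_lt]
  -- integrability of the integrand
  have hInt : ∀ u : ℝ, 0 < u → Integrable (fun y => 1 - Real.exp (-(u*y))) μ := by
    intro u hu
    refine (hμint.const_mul (max 1 u)).mono' ?_ ?_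
    · exact (Continuous.aestronglyMeasurable (by continuity))
    · filter_upwards [hae] with y hy
      rw [Real.norm_eq_abs]
      exact bern_aux_min_bound u y hu hy
  -- a.e. nonnegativity of the integrand
  have hnn : ∀ u : ℝ, 0 < u → (0:ℝ→ℝ) ≤ᵐ[μ] fun y => 1 - Real.exp (-(u*y)) := by
    intro u hu
    filter_upwards [hae] with y hy
    have : Real.exp (-(u*y)) ≤ 1 := by rw [Real.exp_le_one_iff]; nlinarith
    simp only [Pi.zero_apply]; linarith
  -- positivity of φ
  have hφpos : ∀ u : ℝ, 0 < u → 0 < φ u := by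
    intro u hu
    have hint0 : 0 ≤ ∫ y, (1 - Real.exp (-(u*y))) ∂μ := integral_nonneg_of_ae (hnn u hu)
    rw [hrep u hu]
    rcases eq_or_lt_of_le hm with hm0 | hm0
    · rcases eq_or_lt_of_le hσ with hσ0 | hσ0
      · have hμne : μ ≠ 0 := fun h => hnd ⟨hm0.symm, hσ0.symm, h⟩
        have hμpos : 0 < μ (Set.Ioi 0) := by
          rcases eq_or_lt_of_le (zero_le : 0 ≤ μ (Set.Ioi 0)) with h0 | h0
          · exfalso
            apply hμne
            have huniv : μ Set.univ ≤ 0 := by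
              have hsub : (Set.univ : Set ℝ) ⊆ Set.Iic 0 ∪ Set.Ioi 0 := by
                intro x _
                rcases le_or_gt x 0 with h | h
                · exact Or.inl h
                · exact Or.inr h
              calc μ Set.univ ≤ μ (Set.Iic 0 ∪ Set.Ioi 0) := measure_mono hsub
                _ ≤ μ (Set.Iic 0) + μ (Set.Ioi 0) := measure_union_le _ _
                _ = 0 := by rw [hμ0, ← h0, add_zero]
            exact Measure.measure_univ_eq_zero.mp (le_antisymm huniv zero_le)
          · exact h0
        have hpos : 0 < ∫ y, (1 - Real.exp (-(u*y))) ∂μ := by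
          rw [integral_pos_iff_support_of_nonneg_ae (hnn u hu) (hInt u hu)]
          refine lt_of_lt_of_le hμpos (measure_mono ?_)
          intro y hy
          have hy' : 0 < y := hy
          have hlt : Real.exp (-(u*y)) < 1 := by
            rw [Real.exp_lt_one_iff]; nlinarith
          simp only [Function.mem_support]
          intro h; linarith [h]
        nlinarith
      · nlinarith
    · nlinarith
  -- tail measure machinery
  have hFmeas : Measurable (fun t : ℝ => μ (Set.Ioi t)) :=
    Antitone.measurable (fun s t hst => measure_mono (Set.Ioi_subset_Ioi hst))
  set D : ℝ → ℝ≥0∞ := fun t => ENNReal.ofReal m + μ (Set.Ioi t) with hD_def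
  have hDmeas : Measurable D := measurable_const.add hFmeas
  set ν : Measure ℝ := (ENNReal.ofReal σ2) • Measure.dirac 0
      + (volume.restrict (Set.Ioi 0)).withDensity D with hν_def
  set L : ℝ → ℝ≥0∞ := fun u => ∫⁻ t, ENNReal.ofReal (Real.exp (-(u*t))) ∂ν with hL_def
  have hemeas : ∀ u : ℝ, Measurable (fun t : ℝ => ENNReal.ofReal (Real.exp (-(u*t)))) := by
    intro u
    exact ((measurable_id.const_mul u).neg.exp).ennreal_ofReal
  have hLsplit : ∀ u : ℝ, L u = ENNReal.ofReal σ2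
      + ∫⁻ t in Set.Ioi (0:ℝ), D t * ENNReal.ofReal (Real.exp (-(u*t))) := by
    intro u
    simp only [hL_def, hν_def]
    rw [lintegral_add_measure, lintegral_smul_measure, lintegral_dirac,
      lintegral_withDensity_eq_lintegral_mul _ hDmeas (hemeas u)]
    simp [mul_zero, neg_zero, Real.exp_zero]
  have hLeq : ∀ u : ℝ, 0 < u → L u = ENNReal.ofReal (φ u / u) := by
    intro u hu
    have hsplit2 : ∫⁻ t in Set.Ioi (0:ℝ), D t * ENNReal.ofReal (Real.exp (-(u*t)))
        = (∫⁻ t in Set.Ioi (0:ℝ), ENNReal.ofReal m * ENNReal.ofReal (Real.exp (-(u*t))))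
          + ∫⁻ t in Set.Ioi (0:ℝ), μ (Set.Ioi t) * ENNReal.ofReal (Real.exp (-(u*t))) := by
      rw [← lintegral_add_left (f := fun t => ENNReal.ofReal m * ENNReal.ofReal (Real.exp (-(u*t)))) (measurable_const.mul (hemeas u))]
      congr 1
      ext t
      rw [hD_def, add_mul]
    -- first piece
    have hterm1 : (∫⁻ t in Set.Ioi (0:ℝ), ENNReal.ofReal m * ENNReal.ofReal (Real.exp (-(u*t))))
        = ENNReal.ofReal (m * (1/u)) := by
      have h1 : ∀ t : ℝ, ENNReal.ofReal m * ENNReal.ofReal (Real.exp (-(u*t)))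
          = ENNReal.ofReal (m * Real.exp (-(u*t))) := fun t =>
        (ENNReal.ofReal_mul hm).symm
      rw [lintegral_congr h1]
      rw [← ofReal_integral_eq_lintegral_ofReal ((bern_aux_integrableOn u hu).const_mul m)
        (Filter.Eventually.of_forall fun t => by positivity)]
      rw [integral_const_mul, bern_aux_Ioi u hu]
    -- second piece: layercake
    have hterm2 : (∫⁻ t in Set.Ioi (0:ℝ), μ (Set.Ioi t) * ENNReal.ofReal (Real.exp (-(u*t))))
        = ENNReal.ofReal ((∫ y, (1 - Real.exp (-(u*y))) ∂μ) / u) := by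
      have hlc := lintegral_comp_eq_lintegral_meas_lt_mul μ (f := fun y => y)
        (g := fun t => Real.exp (-(u*t)))
        (hae.mono fun y hy => hy.le) measurable_id.aemeasurable
        (fun t _ => (Continuous.intervalIntegrable (by continuity) 0 t))
        (Filter.Eventually.of_forall fun t => (Real.exp_pos _).le)
      have hlhs : (∫⁻ y, ENNReal.ofReal (∫ t in (0:ℝ)..y, Real.exp (-(u*t))) ∂μ)
          = ENNReal.ofReal ((∫ y, (1 - Real.exp (-(u*y))) ∂μ) / u) := by
        have h1 : ∀ y : ℝ, ENNReal.ofReal (∫ t in (0:ℝ)..y, Real.exp (-(u*t)))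
            = ENNReal.ofReal ((1 - Real.exp (-(u*y)))/u) := fun y => by
          rw [bern_aux_interval u hu y]
        rw [lintegral_congr h1]
        rw [← ofReal_integral_eq_lintegral_ofReal ((hInt u hu).div_const u) ?_]
        · rw [integral_div]
        · filter_upwards [hnn u hu] with y hy
          have := hy
          simp only [Pi.zero_apply] at this
          positivity
      rw [← hlhs, hlc]
      rfl
    rw [hLsplit u, hsplit2, hterm1, hterm2]
    have hint0 : 0 ≤ ∫ y, (1 - Real.exp (-(u*y))) ∂μ := integral_nonneg_of_ae (hnn u hu)
    rw [← ENNReal.ofReal_add (by positivity) (by positivity),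
      ← ENNReal.ofReal_add hσ (by positivity)]
    congr 1
    rw [hrep u hu]
    field_simp
    ring
  -- Hölder: log-convexity of L
  have hHolder : ∀ x y a b : ℝ, 0 < x → 0 < y → 0 < a → 0 < b → a + b = 1 →
      L (a*x + b*y) ≤ L x ^ a * L y ^ b := by
    intro x y a b hx hy ha hb hab
    have ha1 : a < 1 := by linarith
    have hpq : Real.HolderConjugate (1/a) (1/b) := by
      rw [Real.holderConjugate_iff]
      constructor
      · exact (one_lt_one_div ha ha1)
      · rw [one_div, one_div, inv_inv, inv_inv]; exact hab
    set f : ℝ → ℝ≥0∞ := fun t => ENNReal.ofReal (Real.exp (-(x*t))) ^ a with hf_def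
    set g : ℝ → ℝ≥0∞ := fun t => ENNReal.ofReal (Real.exp (-(y*t))) ^ b with hg_def
    have hfm : AEMeasurable f ν := ((hemeas x).pow measurable_const).aemeasurable
    have hgm : AEMeasurable g ν := ((hemeas y).pow measurable_const).aemeasurable
    have key := ENNReal.lintegral_mul_le_Lp_mul_Lq ν hpq hfm hgm
    have e1 : ∀ t : ℝ, f t ^ ((1:ℝ)/a) = ENNReal.ofReal (Real.exp (-(x*t))) := by
      intro t
      rw [hf_def, ← ENNReal.rpow_mul]
      rw [mul_one_div, div_self ha.ne', ENNReal.rpow_one]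
    have e2 : ∀ t : ℝ, g t ^ ((1:ℝ)/b) = ENNReal.ofReal (Real.exp (-(y*t))) := by
      intro t
      rw [hg_def, ← ENNReal.rpow_mul]
      rw [mul_one_div, div_self hb.ne', ENNReal.rpow_one]
    have e3 : ∀ t : ℝ, (f * g) t = ENNReal.ofReal (Real.exp (-((a*x + b*y)*t))) := by
      intro t
      have hx1 : ENNReal.ofReal (Real.exp (-(x*t))) ^ a
          = ENNReal.ofReal (Real.exp (-(x*t)) ^ a) :=
        ENNReal.ofReal_rpow_of_nonneg (Real.exp_pos _).le ha.le
      have hy1 : ENNReal.ofReal (Real.exp (-(y*t))) ^ b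
          = ENNReal.ofReal (Real.exp (-(y*t)) ^ b) :=
        ENNReal.ofReal_rpow_of_nonneg (Real.exp_pos _).le hb.le
      have hprod : Real.exp (-(x*t)) ^ a * Real.exp (-(y*t)) ^ b
          = Real.exp (-((a*x + b*y)*t)) := by
        rw [← Real.exp_mul, ← Real.exp_mul, ← Real.exp_add]
        ring_nf
      simp only [Pi.mul_apply, hf_def, hg_def, hx1, hy1]
      rw [← ENNReal.ofReal_mul (by positivity), hprod]
    calc L (a*x + b*y) = ∫⁻ t, (f * g) t ∂ν := lintegral_congr fun t => (e3 t).symm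
      _ ≤ (∫⁻ t, f t ^ ((1:ℝ)/a) ∂ν) ^ (1/(1/a)) * (∫⁻ t, g t ^ ((1:ℝ)/b) ∂ν) ^ (1/(1/b)) := key
      _ = L x ^ a * L y ^ b := by
          rw [lintegral_congr e1, lintegral_congr e2, one_div_one_div, one_div_one_div]
  -- conclusion
  refine ⟨fun u hu => div_pos hu (hφpos u hu), convex_Ioi 0, ?_⟩
  intro x hx y hy a b ha hb hab
  simp only [smul_eq_mul]
  have hx' : 0 < x := hx
  have hy' : 0 < y := hy
  rcases eq_or_lt_of_le ha with ha0 | ha0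
  · obtain rfl : b = 1 := by linarith
    simp [← ha0]
  rcases eq_or_lt_of_le hb with hb0 | hb0
  · obtain rfl : a = 1 := by linarith
    simp [← hb0]
  have hc : 0 < a*x + b*y := by positivity
  have hφx := hφpos x hx'
  have hφy := hφpos y hy'
  have hφc := hφpos _ hc
  have hkey : φ (a*x + b*y) / (a*x + b*y) ≤ (φ x / x) ^ a * (φ y / y) ^ b := by
    have h1 := hHolder x y a b hx' hy' ha0 hb0 hab
    rw [hLeq _ hc, hLeq x hx', hLeq y hy'] at h1
    rw [ENNReal.ofReal_rpow_of_nonneg (by positivity) ha0.le,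
      ENNReal.ofReal_rpow_of_nonneg (by positivity) hb0.le,
      ← ENNReal.ofReal_mul (by positivity)] at h1
    exact (ENNReal.ofReal_le_ofReal_iff (by positivity)).mp h1
  have hlog : Real.log (φ (a*x + b*y) / (a*x + b*y))
      ≤ a * Real.log (φ x / x) + b * Real.log (φ y / y) := by
    calc Real.log (φ (a*x + b*y) / (a*x + b*y))
        ≤ Real.log ((φ x / x) ^ a * (φ y / y) ^ b) :=
          Real.log_le_log (div_pos hφc hc) hkey
      _ = a * Real.log (φ x / x) + b * Real.log (φ y / y) := by
          rw [Real.log_mul (by positivity) (by positivity),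
            Real.log_rpow (by positivity), Real.log_rpow (by positivity)]
  rw [Real.log_div hφc.ne' hc.ne', Real.log_div hφx.ne' hx'.ne',
    Real.log_div hφy.ne' hy'.ne'] at hlog
  linarith [hlog]
end

section
/- Let φ be a nondegenerate Bernstein function of class B_N, with data (m, σ², Π̄). (i) If σ² > 0 or Π̄(0⁺) = ∞, then lim_{u→∞} u² φ'(u)/φ(u) = ∞. (ii) If σ² = 0 and Π̄(0⁺) < ∞, then lim_{u→∞} u² φ'(u)/φ(u) = Π̄(0⁺) / (m + ∫₀^∞ Π̄(y) dy). (Paper: Proposition 'propBernsteinlog'.) -/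
/-!
Write `ψ(u) = ∫ (1 - e^{-uy}) Π̄(y) dy`, so that `φ = m + σ²u + ψ` and, differentiating under the
integral (dominated by `max(1, 2/u) · min(1, y) · Π̄(y)`), `φ' = σ² + ψ'` with
`ψ'(u) = ∫ y e^{-uy} Π̄(y) dy`.

(ii) The substitution `y = t/u` gives `u² ψ'(u) = ∫ t e^{-t} Π̄(t/u) dt → Π̄(0⁺) · Γ(2)` by
dominated convergence, while `φ(u) → m + ∫ Π̄` since `1 - e^{-uy} ↑ 1`.

(i) It suffices that `φ = o(u² φ')`. If `σ² > 0` this holds because `φ = O(u)` and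
`u² φ' ≥ σ² u²`. If `Π̄(0⁺) = ∞`, let `L(u) = u² ∫₀^{1/u} y Π̄(y) dy`. Then `L ≤ e · u² ψ'`, and
`L ≥ Π̄(1/u) / 2 → ∞` by monotonicity of `Π̄`. Splitting `ψ` at `1/u` and `∫_{1/u}^∞ Π̄` at a fixed
`δ` gives `ψ(u) ≤ L/u + δ Π̄(1/u) + ∫_δ^∞ Π̄ ≤ (1/u + 2δ) L + C_δ`, so `m + ψ = o(L)` as `δ` is
arbitrary.
-/

open MeasureTheory Set Filter Real Asymptotics
open scoped Topology

noncomputable def bernsteinIntegral (Pib : ℝ → ℝ) (u : ℝ) : ℝ :=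
  ∫ y in Ioi (0:ℝ), (1 - exp (-(u * y))) * Pib y

noncomputable def bernsteinIntegralDeriv (Pib : ℝ → ℝ) (u : ℝ) : ℝ :=
  ∫ y in Ioi (0:ℝ), y * exp (-(u * y)) * Pib y

lemma mul_exp_neg_le_one (t : ℝ) : t * exp (-t) ≤ 1 := by
  calc t * exp (-t) ≤ exp t * exp (-t) :=
        mul_le_mul_of_nonneg_right (by linarith [add_one_le_exp t]) (exp_nonneg _)
    _ = 1 := by rw [← exp_add, add_neg_cancel, exp_zero]

lemma abs_mul_exp_neg_mul_le {u y : ℝ} (hu : 0 < u) (hy : 0 ≤ y) :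
    |y * exp (-(u * y))| ≤ max 1 u⁻¹ * min 1 y := by
  rw [abs_of_nonneg (by positivity)]
  rcases le_total y 1 with h1 | h1
  · rw [min_eq_right h1]
    calc y * exp (-(u * y)) ≤ 1 * y := by
          rw [one_mul]
          exact mul_le_of_le_one_right hy (exp_le_one_iff.2 (by nlinarith))
      _ ≤ max 1 u⁻¹ * y := by gcongr; exact le_max_left _ _
  · rw [min_eq_left h1, mul_one]
    calc y * exp (-(u * y)) = u⁻¹ * ((u * y) * exp (-(u * y))) := by field_simp
      _ ≤ u⁻¹ * 1 := by gcongr; exact mul_exp_neg_le_one _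
      _ ≤ max 1 u⁻¹ := by rw [mul_one]; exact le_max_right _ _

lemma abs_one_sub_exp_neg_mul_le {u y : ℝ} (hu : 0 ≤ u) (hy : 0 ≤ y) :
    |1 - exp (-(u * y))| ≤ max 1 u * min 1 y := by
  have hle : exp (-(u * y)) ≤ 1 := exp_le_one_iff.2 (by nlinarith)
  have hge : 1 - u * y ≤ exp (-(u * y)) := by linarith [add_one_le_exp (-(u * y))]
  rw [abs_of_nonneg (by linarith)]
  rcases le_total y 1 with h1 | h1
  · rw [min_eq_right h1]
    nlinarith [le_max_right 1 u]
  · rw [min_eq_left h1, mul_one]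
    linarith [le_max_left 1 u, exp_nonneg (-(u * y))]

lemma integral_Ioi_mul_exp_neg : ∫ t in Ioi (0:ℝ), t * exp (-t) = 1 := by
  simpa [show (2:ℝ) - 1 = 1 by norm_num] using
    integral_rpow_mul_exp_neg_mul_Ioi (a := 2) (r := 1) two_pos one_pos

lemma integrableOn_Ioi_mul_exp_neg : IntegrableOn (fun t : ℝ => t * exp (-t)) (Ioi 0) := by
  simpa [mul_comm, show (2:ℝ) - 1 = 1 by norm_num] using GammaIntegral_convergent (s := 2) two_pos

lemma tendsto_div_atTop_of_isLittleO {α : Type*} {l : Filter α} {f g : α → ℝ} (hfg : f =o[l] g)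
    (hf : ∀ᶠ x in l, 0 < f x) (hg : ∀ᶠ x in l, 0 ≤ g x) :
    Tendsto (fun x => g x / f x) l atTop := by
  have hpos : ∀ᶠ x in l, 0 < f x / g x := by
    filter_upwards [hf, hg, hfg.bound one_pos] with x hfx hgx hle
    rw [one_mul, Real.norm_of_nonneg hfx.le, Real.norm_of_nonneg hgx] at hle
    exact div_pos hfx (hfx.trans_le hle)
  refine (tendsto_inv_nhdsGT_zero.comp
    (tendsto_nhdsWithin_iff.2 ⟨hfg.tendsto_div_nhds_zero, hpos⟩)).congr fun x => ?_
  simp only [Function.comp_apply, inv_div]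

lemma isLittleO_id_sq_atTop : (fun u : ℝ => u) =o[atTop] fun u => u ^ 2 := by
  simpa using isLittleO_pow_pow_atTop_of_lt (𝕜 := ℝ) one_lt_two

section LevyTail

variable {Pib : ℝ → ℝ}

lemma aestronglyMeasurable_of_integrableOn_min_one_mul
    (hint : IntegrableOn (fun y => min 1 y * Pib y) (Ioi 0)) {s : Set ℝ} (hs : s ⊆ Ioi 0) :
    AEStronglyMeasurable Pib (volume.restrict s) := by
  have h : AEStronglyMeasurable (fun y => (min 1 y)⁻¹ * (min 1 y * Pib y))
      (volume.restrict (Ioi 0)) :=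
    (measurable_const.min measurable_id).inv.aestronglyMeasurable.mul hint.aestronglyMeasurable
  refine (h.congr ?_).mono_measure (Measure.restrict_mono hs le_rfl)
  filter_upwards [ae_restrict_mem measurableSet_Ioi] with y (hy : 0 < y)
  rw [inv_mul_cancel_left₀ (lt_min one_pos hy).ne']

lemma integrableOn_mul_of_abs_le_mul_min_one
    (hint : IntegrableOn (fun y => min 1 y * Pib y) (Ioi 0)) {s : Set ℝ} (hs : s ⊆ Ioi 0)
    (hsm : MeasurableSet s) {g : ℝ → ℝ} (hg : AEStronglyMeasurable g (volume.restrict s))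
    {K : ℝ} (hK : ∀ y ∈ s, |g y| ≤ K * min 1 y) :
    IntegrableOn (fun y => g y * Pib y) s := by
  refine Integrable.mono' ((hint.mono_set hs).norm.const_mul K)
    (hg.mul (aestronglyMeasurable_of_integrableOn_min_one_mul hint hs)) ?_
  filter_upwards [ae_restrict_mem hsm] with y hy
  have hy0 : 0 < min 1 y := lt_min one_pos (hs hy)
  rw [norm_mul, norm_mul, Real.norm_of_nonneg hy0.le, ← mul_assoc]
  exact mul_le_mul_of_nonneg_right (hK y hy) (norm_nonneg _)

lemma integrableOn_Ioi_of_pos (hint : IntegrableOn (fun y => min 1 y * Pib y) (Ioi 0))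
    {a : ℝ} (ha : 0 < a) : IntegrableOn Pib (Ioi a) := by
  have h := integrableOn_mul_of_abs_le_mul_min_one hint (Ioi_subset_Ioi ha.le) measurableSet_Ioi
    aestronglyMeasurable_const (g := fun _ => 1) (K := (min 1 a)⁻¹) fun y (hy : a < y) => by
      rw [abs_one, inv_mul_eq_div, one_le_div (lt_min one_pos ha)]
      exact min_le_min_left 1 hy.le
  simpa only [one_mul] using h

lemma integrableOn_mul_Ioc (hint : IntegrableOn (fun y => min 1 y * Pib y) (Ioi 0)) (s : ℝ) :
    IntegrableOn (fun y => y * Pib y) (Ioc 0 s) :=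
  integrableOn_mul_of_abs_le_mul_min_one hint Ioc_subset_Ioi_self measurableSet_Ioc
    aestronglyMeasurable_id (K := max 1 s) fun y hy => by
      rw [abs_of_pos hy.1]
      rcases le_total y 1 with h1 | h1
      · rw [min_eq_right h1]; nlinarith [le_max_left 1 s, hy.1]
      · rw [min_eq_left h1, mul_one]; exact hy.2.trans (le_max_right 1 s)

lemma integrableOn_bernsteinIntegral_integrand
    (hint : IntegrableOn (fun y => min 1 y * Pib y) (Ioi 0)) {u : ℝ} (hu : 0 ≤ u) :
    IntegrableOn (fun y => (1 - exp (-(u * y))) * Pib y) (Ioi 0) :=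
  integrableOn_mul_of_abs_le_mul_min_one hint subset_rfl measurableSet_Ioi
    (by fun_prop) fun _ hy => abs_one_sub_exp_neg_mul_le hu (le_of_lt hy)

lemma integrableOn_bernsteinIntegralDeriv_integrand
    (hint : IntegrableOn (fun y => min 1 y * Pib y) (Ioi 0)) {u : ℝ} (hu : 0 < u) :
    IntegrableOn (fun y => y * exp (-(u * y)) * Pib y) (Ioi 0) :=
  integrableOn_mul_of_abs_le_mul_min_one hint subset_rfl measurableSet_Ioi
    (by fun_prop) fun _ hy => abs_mul_exp_neg_mul_le hu (le_of_lt hy)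

lemma hasDerivAt_bernsteinIntegral (hint : IntegrableOn (fun y => min 1 y * Pib y) (Ioi 0))
    {u : ℝ} (hu : 0 < u) :
    HasDerivAt (bernsteinIntegral Pib) (bernsteinIntegralDeriv Pib u) u := by
  have hPib := aestronglyMeasurable_of_integrableOn_min_one_mul hint subset_rfl
  refine (hasDerivAt_integral_of_dominated_loc_of_deriv_le
    (F := fun x y => (1 - exp (-(x * y))) * Pib y) (F' := fun x y => y * exp (-(x * y)) * Pib y)
    (bound := fun y => max 1 (u / 2)⁻¹ * ‖min 1 y * Pib y‖)
    (Metric.ball_mem_nhds u (half_pos hu))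
    (Eventually.of_forall fun _ => (by fun_prop : AEStronglyMeasurable _ _).mul hPib)
    (integrableOn_bernsteinIntegral_integrand hint hu.le)
    ((by fun_prop : AEStronglyMeasurable _ _).mul hPib) ?_ (hint.norm.const_mul _) ?_).2
  · filter_upwards [ae_restrict_mem measurableSet_Ioi] with y (hy : 0 < y) x hx
    rw [Metric.mem_ball, Real.dist_eq, abs_lt] at hx
    have hdecay : |y * exp (-(x * y))| ≤ |y * exp (-(u / 2 * y))| := by
      rw [abs_of_nonneg (by positivity), abs_of_nonneg (by positivity)]
      exact mul_le_mul_of_nonneg_left (exp_le_exp.2 (by nlinarith)) hy.le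
    rw [norm_mul _ (Pib y), norm_mul (min 1 y), Real.norm_of_nonneg (lt_min one_pos hy).le,
      ← mul_assoc, Real.norm_eq_abs]
    exact mul_le_mul_of_nonneg_right
      (hdecay.trans (abs_mul_exp_neg_mul_le (half_pos hu) hy.le)) (norm_nonneg _)
  · refine Eventually.of_forall fun y x _ => ?_
    have hlin : HasDerivAt (fun v => -(v * y)) (-y) x := (hasDerivAt_mul_const y).neg
    exact ((hlin.exp.const_sub 1).mul_const (Pib y)).congr_deriv (by ring)

lemma hasDerivAt_of_eq_bernstein {φ : ℝ → ℝ} {m σ2 : ℝ}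
    (hint : IntegrableOn (fun y => min 1 y * Pib y) (Ioi 0))
    (hrep : ∀ u, 0 < u → φ u = m + σ2 * u + bernsteinIntegral Pib u) {u : ℝ} (hu : 0 < u) :
    HasDerivAt φ (σ2 + bernsteinIntegralDeriv Pib u) u := by
  have h := (((hasDerivAt_id u).const_mul σ2).const_add m).add
    (hasDerivAt_bernsteinIntegral hint hu)
  rw [mul_one] at h
  exact h.congr_of_eventuallyEq (eventually_of_mem (Ioi_mem_nhds hu) hrep)

lemma bernsteinIntegral_nonneg (h0 : ∀ y, 0 < y → 0 ≤ Pib y) {u : ℝ} (hu : 0 ≤ u) :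
    0 ≤ bernsteinIntegral Pib u :=
  setIntegral_nonneg measurableSet_Ioi fun y (hy : 0 < y) =>
    mul_nonneg (by linarith [exp_le_one_iff.2 (by nlinarith : -(u * y) ≤ 0)]) (h0 y hy)

lemma bernsteinIntegralDeriv_nonneg (h0 : ∀ y, 0 < y → 0 ≤ Pib y) (u : ℝ) :
    0 ≤ bernsteinIntegralDeriv Pib u :=
  setIntegral_nonneg measurableSet_Ioi fun y (hy : 0 < y) =>
    mul_nonneg (mul_nonneg hy.le (exp_nonneg _)) (h0 y hy)

lemma bernsteinIntegral_le (h0 : ∀ y, 0 < y → 0 ≤ Pib y)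
    (hint : IntegrableOn (fun y => min 1 y * Pib y) (Ioi 0)) {u : ℝ} (hu : 0 ≤ u) :
    bernsteinIntegral Pib u ≤ max 1 u * ∫ y in Ioi 0, min 1 y * Pib y := by
  rw [← integral_const_mul]
  refine setIntegral_mono_on (integrableOn_bernsteinIntegral_integrand hint hu)
    (hint.const_mul _) measurableSet_Ioi fun y (hy : 0 < y) => ?_
  rw [← mul_assoc]
  exact mul_le_mul_of_nonneg_right
    ((le_abs_self _).trans (abs_one_sub_exp_neg_mul_le hu hy.le)) (h0 y hy)

lemma bernsteinIntegral_le_integral (h0 : ∀ y, 0 < y → 0 ≤ Pib y)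
    (hPib : IntegrableOn Pib (Ioi 0)) {u : ℝ} (hu : 0 ≤ u) :
    bernsteinIntegral Pib u ≤ ∫ y in Ioi 0, Pib y := by
  refine setIntegral_mono_on ?_ hPib measurableSet_Ioi fun y (hy : 0 < y) =>
    mul_le_of_le_one_left (h0 y hy) (by linarith [exp_nonneg (-(u * y))])
  refine hPib.bdd_mul (c := 1) (by fun_prop) ?_
  filter_upwards [ae_restrict_mem measurableSet_Ioi] with y (hy : 0 < y)
  rw [Real.norm_eq_abs, abs_le]
  constructor <;> nlinarith [exp_pos (-(u * y)), exp_le_one_iff.2 (by nlinarith : -(u * y) ≤ 0)]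

lemma setIntegral_Ioi_mul_pos (h0 : ∀ y, 0 < y → 0 ≤ Pib y) (hanti : AntitoneOn Pib (Ioi 0))
    {y₀ : ℝ} (hy₀ : 0 < y₀) (hPy₀ : Pib y₀ ≠ 0) {g : ℝ → ℝ} (hg : ∀ y, 0 < y → 0 < g y)
    (hgPib : IntegrableOn (fun y => g y * Pib y) (Ioi 0)) :
    0 < ∫ y in Ioi 0, g y * Pib y := by
  have hnonneg : 0 ≤ᵐ[volume.restrict (Ioi 0)] fun y => g y * Pib y := by
    filter_upwards [ae_restrict_mem measurableSet_Ioi] with y (hy : 0 < y)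
    exact mul_nonneg (hg y hy).le (h0 y hy)
  rw [setIntegral_pos_iff_support_of_nonneg_ae hnonneg hgPib]
  refine lt_of_lt_of_le (by simpa using hy₀) (measure_mono (s := Ioc 0 y₀) fun y hy => ?_)
  have hPy : 0 < Pib y := (lt_of_le_of_ne (h0 y₀ hy₀) hPy₀.symm).trans_le
    (hanti hy.1 hy₀ hy.2)
  exact ⟨(mul_pos (hg y hy.1) hPy).ne', hy.1⟩

lemma bernstein_pos {m σ2 : ℝ} (hm : 0 ≤ m) (hσ : 0 ≤ σ2) (h0 : ∀ y, 0 < y → 0 ≤ Pib y)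
    (hanti : AntitoneOn Pib (Ioi 0)) (hint : IntegrableOn (fun y => min 1 y * Pib y) (Ioi 0))
    (hnd : ¬ (m = 0 ∧ σ2 = 0 ∧ ∀ y : ℝ, 0 < y → Pib y = 0)) {u : ℝ} (hu : 0 < u) :
    0 < m + σ2 * u + bernsteinIntegral Pib u := by
  have hψ := bernsteinIntegral_nonneg h0 hu.le
  by_cases hmσ : m = 0 ∧ σ2 = 0
  · obtain ⟨y₀, hy₀, hPy₀⟩ : ∃ y₀, 0 < y₀ ∧ Pib y₀ ≠ 0 := by
      simpa [hmσ.1, hmσ.2] using hnd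
    rw [hmσ.1, hmσ.2, zero_mul, zero_add, zero_add]
    exact setIntegral_Ioi_mul_pos h0 hanti hy₀ hPy₀
      (fun y hy => by rw [sub_pos, exp_lt_one_iff, neg_lt_zero]; positivity)
      (integrableOn_bernsteinIntegral_integrand hint hu.le)
  · rcases not_and_or.1 hmσ with hm0 | hσ0
    · nlinarith [lt_of_le_of_ne hm (Ne.symm hm0)]
    · nlinarith [lt_of_le_of_ne hσ (Ne.symm hσ0)]

lemma isLittleO_bernstein_of_drift_pos {m σ2 : ℝ} (hσ : 0 < σ2) (h0 : ∀ y, 0 < y → 0 ≤ Pib y)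
    (hint : IntegrableOn (fun y => min 1 y * Pib y) (Ioi 0)) :
    (fun u => m + σ2 * u + bernsteinIntegral Pib u) =o[atTop]
      fun u => u ^ 2 * (σ2 + bernsteinIntegralDeriv Pib u) := by
  have hlin : (fun u => m + σ2 * u + bernsteinIntegral Pib u) =O[atTop] fun u : ℝ => u := by
    refine IsBigO.of_bound (|m| + σ2 + ∫ y in Ioi 0, min 1 y * Pib y) ?_
    filter_upwards [eventually_ge_atTop 1] with u hu
    have hψ := bernsteinIntegral_le h0 hint (zero_le_one.trans hu)
    have hψ0 := bernsteinIntegral_nonneg h0 (zero_le_one.trans hu)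
    rw [max_eq_right hu] at hψ
    rw [Real.norm_eq_abs, Real.norm_of_nonneg (zero_le_one.trans hu), abs_le]
    constructor <;> nlinarith [abs_nonneg m, neg_abs_le m, le_abs_self m]
  have hsq : (fun u : ℝ => u ^ 2) =O[atTop]
      fun u => u ^ 2 * (σ2 + bernsteinIntegralDeriv Pib u) := by
    refine IsBigO.of_bound σ2⁻¹ (Eventually.of_forall fun u => ?_)
    have hψ' := bernsteinIntegralDeriv_nonneg h0 u
    rw [Real.norm_of_nonneg (sq_nonneg u), Real.norm_of_nonneg (by positivity),
      le_inv_mul_iff₀ hσ]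
    nlinarith [sq_nonneg u]
  exact hlin.trans_isLittleO (isLittleO_id_sq_atTop.trans_isBigO hsq)

lemma inv_le_two_mul_sq_mul_setIntegral (hanti : AntitoneOn Pib (Ioi 0))
    (hint : IntegrableOn (fun y => min 1 y * Pib y) (Ioi 0)) {u : ℝ} (hu : 0 < u) :
    Pib u⁻¹ ≤ 2 * (u ^ 2 * ∫ y in Ioc 0 u⁻¹, y * Pib y) := by
  have hui : 0 < u⁻¹ := inv_pos.2 hu
  have hmono : ∫ y in Ioc 0 u⁻¹, y * Pib u⁻¹ ≤ ∫ y in Ioc 0 u⁻¹, y * Pib y :=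
    setIntegral_mono_on (continuous_id.mul continuous_const).integrableOn_Ioc
      (integrableOn_mul_Ioc hint _) measurableSet_Ioc
      fun y hy => mul_le_mul_of_nonneg_left (hanti hy.1 hui hy.2) hy.1.le
  have hval : ∫ y in Ioc 0 u⁻¹, y * Pib u⁻¹ = (u⁻¹) ^ 2 / 2 * Pib u⁻¹ := by
    rw [integral_mul_const, ← intervalIntegral.integral_of_le hui.le, integral_id]
    ring
  calc Pib u⁻¹ = 2 * (u ^ 2 * ((u⁻¹) ^ 2 / 2 * Pib u⁻¹)) := by field_simp
    _ ≤ 2 * (u ^ 2 * ∫ y in Ioc 0 u⁻¹, y * Pib y) := by rw [← hval]; gcongr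

lemma setIntegral_le_exp_one_mul_bernsteinIntegralDeriv (h0 : ∀ y, 0 < y → 0 ≤ Pib y)
    (hint : IntegrableOn (fun y => min 1 y * Pib y) (Ioi 0)) {u : ℝ} (hu : 0 < u) :
    ∫ y in Ioc 0 u⁻¹, y * Pib y ≤ exp 1 * bernsteinIntegralDeriv Pib u := by
  have hint' := integrableOn_bernsteinIntegralDeriv_integrand hint hu
  rw [bernsteinIntegralDeriv, ← integral_const_mul]
  calc ∫ y in Ioc 0 u⁻¹, y * Pib y
      ≤ ∫ y in Ioc 0 u⁻¹, exp 1 * (y * exp (-(u * y)) * Pib y) := by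
        refine setIntegral_mono_on (integrableOn_mul_Ioc hint _)
          ((hint'.mono_set Ioc_subset_Ioi_self).const_mul _) measurableSet_Ioc fun y hy => ?_
        have huy : u * y ≤ 1 := by
          simpa [mul_inv_cancel₀ hu.ne'] using mul_le_mul_of_nonneg_left hy.2 hu.le
        have hexp : 1 ≤ exp 1 * exp (-(u * y)) := by
          rw [← exp_add, one_le_exp_iff]; linarith
        calc y * Pib y = 1 * (y * Pib y) := (one_mul _).symm
          _ ≤ (exp 1 * exp (-(u * y))) * (y * Pib y) := by
            gcongr; exact mul_nonneg hy.1.le (h0 y hy.1)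
          _ = exp 1 * (y * exp (-(u * y)) * Pib y) := by ring
    _ ≤ ∫ y in Ioi 0, exp 1 * (y * exp (-(u * y)) * Pib y) := by
        refine setIntegral_mono_set (hint'.const_mul _) ?_ Ioc_subset_Ioi_self.eventuallyLE
        filter_upwards [ae_restrict_mem measurableSet_Ioi] with y (hy : 0 < y)
        have := h0 y hy
        positivity

lemma bernsteinIntegral_le_add (h0 : ∀ y, 0 < y → 0 ≤ Pib y)
    (hint : IntegrableOn (fun y => min 1 y * Pib y) (Ioi 0)) {u : ℝ} (hu : 0 < u) :
    bernsteinIntegral Pib u ≤ u * (∫ y in Ioc 0 u⁻¹, y * Pib y) + ∫ y in Ioi u⁻¹, Pib y := by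
  have hui : 0 < u⁻¹ := inv_pos.2 hu
  have hint' := integrableOn_bernsteinIntegral_integrand hint hu.le
  rw [bernsteinIntegral, ← Ioc_union_Ioi_eq_Ioi hui.le,
    setIntegral_union (Ioc_disjoint_Ioi le_rfl) measurableSet_Ioi
      (hint'.mono_set Ioc_subset_Ioi_self) (hint'.mono_set (Ioi_subset_Ioi hui.le)),
    ← integral_const_mul]
  gcongr ?_ + ?_
  · refine setIntegral_mono_on (hint'.mono_set Ioc_subset_Ioi_self)
      ((integrableOn_mul_Ioc hint _).const_mul _) measurableSet_Ioc fun y hy => ?_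
    have := h0 y hy.1
    have := add_one_le_exp (-(u * y))
    calc (1 - exp (-(u * y))) * Pib y ≤ (u * y) * Pib y := by gcongr; linarith
      _ = u * (y * Pib y) := by ring
  · refine setIntegral_mono_on (hint'.mono_set (Ioi_subset_Ioi hui.le))
      (integrableOn_Ioi_of_pos hint hui) measurableSet_Ioi fun y (hy : u⁻¹ < y) => ?_
    exact mul_le_of_le_one_left (h0 y (hui.trans hy)) (by linarith [exp_nonneg (-(u * y))])

lemma setIntegral_Ioi_le_add (h0 : ∀ y, 0 < y → 0 ≤ Pib y) (hanti : AntitoneOn Pib (Ioi 0))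
    (hint : IntegrableOn (fun y => min 1 y * Pib y) (Ioi 0)) {a δ : ℝ} (ha : 0 < a)
    (haδ : a ≤ δ) :
    ∫ y in Ioi a, Pib y ≤ δ * Pib a + ∫ y in Ioi δ, Pib y := by
  have hint' := integrableOn_Ioi_of_pos hint ha
  rw [← Ioc_union_Ioi_eq_Ioi haδ, setIntegral_union (Ioc_disjoint_Ioi le_rfl) measurableSet_Ioi
    (hint'.mono_set Ioc_subset_Ioi_self) (hint'.mono_set (Ioi_subset_Ioi haδ))]
  gcongr
  calc ∫ y in Ioc a δ, Pib y ≤ ∫ _ in Ioc a δ, Pib a :=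
        setIntegral_mono_on (hint'.mono_set Ioc_subset_Ioi_self)
          (integrableOn_const measure_Ioc_lt_top.ne) measurableSet_Ioc
          fun y hy => hanti ha (ha.trans hy.1) hy.1.le
    _ = (δ - a) * Pib a := by rw [setIntegral_const, volume_real_Ioc_of_le haδ, smul_eq_mul]
    _ ≤ δ * Pib a := by nlinarith [h0 a ha]

lemma tendsto_sq_mul_setIntegral_atTop (hanti : AntitoneOn Pib (Ioi 0))
    (hint : IntegrableOn (fun y => min 1 y * Pib y) (Ioi 0))
    (htop : Tendsto Pib (𝓝[>] 0) atTop) :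
    Tendsto (fun u => u ^ 2 * ∫ y in Ioc 0 u⁻¹, y * Pib y) atTop atTop := by
  refine tendsto_atTop_mono' _ ?_
    ((htop.comp tendsto_inv_atTop_nhdsGT_zero).atTop_div_const two_pos)
  filter_upwards [eventually_gt_atTop 0] with u hu
  have := inv_le_two_mul_sq_mul_setIntegral hanti hint hu
  simp only [Function.comp_apply]
  linarith

lemma isLittleO_add_bernsteinIntegral (m : ℝ) (h0 : ∀ y, 0 < y → 0 ≤ Pib y)
    (hanti : AntitoneOn Pib (Ioi 0)) (hint : IntegrableOn (fun y => min 1 y * Pib y) (Ioi 0))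
    (htop : Tendsto Pib (𝓝[>] 0) atTop) :
    (fun u => m + bernsteinIntegral Pib u) =o[atTop]
      fun u => u ^ 2 * ∫ y in Ioc 0 u⁻¹, y * Pib y := by
  rw [isLittleO_iff]
  intro ε hε
  obtain ⟨δ, hδ0, rfl⟩ : ∃ δ, 0 < δ ∧ ε = 4 * δ := ⟨ε / 4, by positivity, by ring⟩
  filter_upwards [eventually_ge_atTop δ⁻¹,
    (tendsto_sq_mul_setIntegral_atTop hanti hint htop).eventually_ge_atTop
      ((|m| + ∫ y in Ioi δ, Pib y) / δ)] with u huδ hL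
  have hu : 0 < u := (inv_pos.2 hδ0).trans_le huδ
  have hψ := bernsteinIntegral_le_add h0 hint hu
  have htail := setIntegral_Ioi_le_add h0 hanti hint (inv_pos.2 hu) (inv_le_of_inv_le₀ hδ0 huδ)
  have hPib := mul_le_mul_of_nonneg_left (inv_le_two_mul_sq_mul_setIntegral hanti hint hu) hδ0.le
  set A := ∫ y in Ioc 0 u⁻¹, y * Pib y
  have hA : 0 ≤ A := setIntegral_nonneg measurableSet_Ioc fun y hy => mul_nonneg hy.1.le (h0 y hy.1)
  have huA : u * A ≤ δ * (u ^ 2 * A) := by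
    have : 1 ≤ δ * u := by
      simpa [mul_inv_cancel₀ hδ0.ne'] using mul_le_mul_of_nonneg_left huδ hδ0.le
    nlinarith [mul_nonneg (sub_nonneg.2 this) (mul_nonneg hu.le hA)]
  have hconst : |m| + ∫ y in Ioi δ, Pib y ≤ δ * (u ^ 2 * A) := by rwa [div_le_iff₀' hδ0] at hL
  rw [Real.norm_of_nonneg (by positivity : 0 ≤ u ^ 2 * A)]
  calc ‖m + bernsteinIntegral Pib u‖ ≤ |m| + bernsteinIntegral Pib u := by
        rw [Real.norm_eq_abs]
        exact (abs_add_le _ _).trans (by rw [abs_of_nonneg (bernsteinIntegral_nonneg h0 hu.le)])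
    _ ≤ 4 * (δ * (u ^ 2 * A)) := by linarith
    _ = 4 * δ * (u ^ 2 * A) := by ring

lemma isLittleO_bernstein_of_tendsto_atTop {m σ2 : ℝ} (hσ : 0 ≤ σ2)
    (h0 : ∀ y, 0 < y → 0 ≤ Pib y) (hanti : AntitoneOn Pib (Ioi 0))
    (hint : IntegrableOn (fun y => min 1 y * Pib y) (Ioi 0))
    (htop : Tendsto Pib (𝓝[>] 0) atTop) :
    (fun u => m + σ2 * u + bernsteinIntegral Pib u) =o[atTop]
      fun u => u ^ 2 * (σ2 + bernsteinIntegralDeriv Pib u) := by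
  have hψ' := bernsteinIntegralDeriv_nonneg h0
  have hA : (fun u => u ^ 2 * ∫ y in Ioc 0 u⁻¹, y * Pib y) =O[atTop]
      fun u => u ^ 2 * bernsteinIntegralDeriv Pib u := by
    refine IsBigO.of_bound (exp 1) ?_
    filter_upwards [eventually_gt_atTop 0] with u hu
    have hA0 : 0 ≤ ∫ y in Ioc 0 u⁻¹, y * Pib y :=
      setIntegral_nonneg measurableSet_Ioc fun y hy => mul_nonneg hy.1.le (h0 y hy.1)
    rw [Real.norm_of_nonneg (by positivity), Real.norm_of_nonneg (mul_nonneg (sq_nonneg u) (hψ' u))]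
    calc u ^ 2 * ∫ y in Ioc 0 u⁻¹, y * Pib y ≤ u ^ 2 * (exp 1 * bernsteinIntegralDeriv Pib u) := by
          gcongr; exact setIntegral_le_exp_one_mul_bernsteinIntegralDeriv h0 hint hu
      _ = exp 1 * (u ^ 2 * bernsteinIntegralDeriv Pib u) := by ring
  have hderiv : (fun u => u ^ 2 * bernsteinIntegralDeriv Pib u) =O[atTop]
      fun u => u ^ 2 * (σ2 + bernsteinIntegralDeriv Pib u) :=
    IsBigO.of_bound' (Eventually.of_forall fun u => by
      simp only [Real.norm_eq_abs]
      exact abs_le_abs_of_nonneg (by nlinarith [hψ' u, sq_nonneg u]) (by nlinarith [sq_nonneg u]))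
  have hdrift : (fun u => σ2 * u ^ 2) =O[atTop]
      fun u => u ^ 2 * (σ2 + bernsteinIntegralDeriv Pib u) :=
    IsBigO.of_bound' (Eventually.of_forall fun u => by
      simp only [Real.norm_eq_abs]
      exact abs_le_abs_of_nonneg (by positivity) (by nlinarith [hψ' u, sq_nonneg u]))
  have hlin : (fun u : ℝ => σ2 * u) =o[atTop] fun u => σ2 * u ^ 2 :=
    (isBigO_refl (fun _ => σ2) atTop).mul_isLittleO isLittleO_id_sq_atTop
  refine (((isLittleO_add_bernsteinIntegral m h0 hanti hint htop).trans_isBigO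
    (hA.trans hderiv)).add (hlin.trans_isBigO hdrift)).congr_left fun u => by ring

lemma integrableOn_Ioi_zero_of_tendsto (hint : IntegrableOn (fun y => min 1 y * Pib y) (Ioi 0))
    {c : ℝ} (hc : Tendsto Pib (𝓝[>] 0) (𝓝 c)) : IntegrableOn Pib (Ioi 0) := by
  obtain ⟨a, ha : 0 < a, hbdd⟩ := mem_nhdsGT_iff_exists_Ioc_subset.1
    (hc.norm.eventually (eventually_le_nhds (lt_add_one ‖c‖)))
  have hIoc : IntegrableOn Pib (Ioc 0 a) :=
    Integrable.mono' (integrableOn_const measure_Ioc_lt_top.ne)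
      (aestronglyMeasurable_of_integrableOn_min_one_mul hint Ioc_subset_Ioi_self)
      ((ae_restrict_mem measurableSet_Ioc).mono fun y hy => hbdd hy)
  simpa only [Ioc_union_Ioi_eq_Ioi ha.le] using hIoc.union (integrableOn_Ioi_of_pos hint ha)

lemma tendsto_bernsteinIntegral_atTop (hPib : IntegrableOn Pib (Ioi 0)) :
    Tendsto (bernsteinIntegral Pib) atTop (𝓝 (∫ y in Ioi 0, Pib y)) := by
  refine tendsto_integral_filter_of_dominated_convergence (fun y => ‖Pib y‖)
    (Eventually.of_forall fun _ => (by fun_prop : AEStronglyMeasurable _ _).mul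
      hPib.aestronglyMeasurable) ?_ hPib.norm ?_
  · filter_upwards [eventually_ge_atTop 0] with u hu
    filter_upwards [ae_restrict_mem measurableSet_Ioi] with y (hy : 0 < y)
    rw [norm_mul]
    refine mul_le_of_le_one_left (norm_nonneg _) ?_
    rw [Real.norm_eq_abs, abs_le]
    constructor <;> nlinarith [exp_pos (-(u * y)), exp_le_one_iff.2 (by nlinarith : -(u * y) ≤ 0)]
  · filter_upwards [ae_restrict_mem measurableSet_Ioi] with y (hy : 0 < y)
    have hexp : Tendsto (fun u => exp (-(u * y))) atTop (𝓝 0) :=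
      tendsto_exp_atBot.comp (tendsto_neg_atTop_atBot.comp (tendsto_id.atTop_mul_const hy))
    simpa using (hexp.const_sub 1).mul_const (Pib y)

lemma sq_mul_bernsteinIntegralDeriv_eq {u : ℝ} (hu : 0 < u) :
    u ^ 2 * bernsteinIntegralDeriv Pib u = ∫ t in Ioi 0, t * exp (-t) * Pib (u⁻¹ * t) := by
  have hsubst := integral_comp_mul_left_Ioi (fun y => y * exp (-(u * y)) * Pib y) 0 (inv_pos.2 hu)
  rw [mul_zero, inv_inv, smul_eq_mul] at hsubst
  calc u ^ 2 * bernsteinIntegralDeriv Pib u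
      = u * ∫ t in Ioi 0, u⁻¹ * t * exp (-(u * (u⁻¹ * t))) * Pib (u⁻¹ * t) := by
        rw [hsubst, bernsteinIntegralDeriv]; ring
    _ = ∫ t in Ioi 0, t * exp (-t) * Pib (u⁻¹ * t) := by
        rw [← integral_const_mul]
        congr 1 with t
        rw [mul_inv_cancel_left₀ hu.ne']
        field_simp

lemma tendsto_sq_mul_bernsteinIntegralDeriv (h0 : ∀ y, 0 < y → 0 ≤ Pib y)
    (hanti : AntitoneOn Pib (Ioi 0)) {c : ℝ} (hc : Tendsto Pib (𝓝[>] 0) (𝓝 c)) :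
    Tendsto (fun u => u ^ 2 * bernsteinIntegralDeriv Pib u) atTop (𝓝 c) := by
  have hle : ∀ y, 0 < y → Pib y ≤ c := fun y hy => by
    refine ge_of_tendsto hc ?_
    filter_upwards [Ioc_mem_nhdsGT hy] with x hx using hanti hx.1 hy hx.2
  have hlim : Tendsto (fun u => ∫ t in Ioi 0, t * exp (-t) * Pib (u⁻¹ * t)) atTop
      (𝓝 (∫ t in Ioi 0, t * exp (-t) * c)) := by
    refine tendsto_integral_filter_of_dominated_convergence (fun t => t * exp (-t) * c) ?_ ?_
      (integrableOn_Ioi_mul_exp_neg.mul_const c) ?_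
    · filter_upwards [eventually_gt_atTop 0] with u hu
      have hscaled : AntitoneOn (fun t => Pib (u⁻¹ * t)) (Ioi 0) := fun x hx y hy hxy =>
        hanti (mul_pos (inv_pos.2 hu) hx) (mul_pos (inv_pos.2 hu) hy)
          (mul_le_mul_of_nonneg_left hxy (inv_pos.2 hu).le)
      exact (by fun_prop : AEStronglyMeasurable (fun t : ℝ => t * exp (-t)) _).mul
        (aemeasurable_restrict_of_antitoneOn measurableSet_Ioi hscaled).aestronglyMeasurable
    · filter_upwards [eventually_gt_atTop 0] with u hu
      filter_upwards [ae_restrict_mem measurableSet_Ioi] with t (ht : 0 < t)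
      have hut : 0 < u⁻¹ * t := mul_pos (inv_pos.2 hu) ht
      rw [Real.norm_of_nonneg (mul_nonneg (by positivity) (h0 _ hut))]
      exact mul_le_mul_of_nonneg_left (hle _ hut) (by positivity)
    · filter_upwards [ae_restrict_mem measurableSet_Ioi] with t (ht : 0 < t)
      refine (hc.comp (tendsto_nhdsWithin_iff.2 ⟨?_, ?_⟩)).const_mul (t * exp (-t))
      · simpa using tendsto_inv_atTop_zero.mul_const t
      · filter_upwards [eventually_gt_atTop 0] with u hu
        exact mul_pos (inv_pos.2 hu) ht
  rw [integral_mul_const, integral_Ioi_mul_exp_neg, one_mul] at hlim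
  exact hlim.congr' (by
    filter_upwards [eventually_gt_atTop 0] with u hu
    exact (sq_mul_bernsteinIntegralDeriv_eq hu).symm)

end LevyTail

/-- asymptotics of `u² φ'(u)/φ(u)` for a nondegenerate Bernstein function of
class `B_N` with data `(m, σ², Π̄)`. -/
theorem bernstein_BN_u_sq_deriv_ratio
    (φ Pib : ℝ → ℝ) (m σ2 : ℝ)
    (hm : 0 ≤ m) (hσ : 0 ≤ σ2)
    (hPib_nonneg : ∀ y : ℝ, 0 < y → 0 ≤ Pib y)
    (hPib_anti : ∀ x y : ℝ, 0 < x → x ≤ y → Pib y ≤ Pib x)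
    (hPib_int : IntegrableOn (fun y : ℝ => min 1 y * Pib y) (Set.Ioi 0))
    (hrep : ∀ u : ℝ, 0 < u →
      φ u = m + σ2 * u + ∫ y in Set.Ioi (0:ℝ), (1 - Real.exp (-(u * y))) * Pib y)
    (hnd : ¬ (m = 0 ∧ σ2 = 0 ∧ ∀ y : ℝ, 0 < y → Pib y = 0)) :
    ((0 < σ2 ∨ Filter.Tendsto Pib (nhdsWithin 0 (Set.Ioi 0)) Filter.atTop) →
      Filter.Tendsto (fun u : ℝ => u ^ 2 * deriv φ u / φ u) Filter.atTop Filter.atTop)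
    ∧ (∀ c : ℝ, σ2 = 0 → Filter.Tendsto Pib (nhdsWithin 0 (Set.Ioi 0)) (nhds c) →
      Filter.Tendsto (fun u : ℝ => u ^ 2 * deriv φ u / φ u) Filter.atTop
        (nhds (c / (m + ∫ y in Set.Ioi (0:ℝ), Pib y)))) := by
  have hanti : AntitoneOn Pib (Ioi 0) := fun x hx y _ hxy => hPib_anti x y hx hxy
  have hratio : ∀ᶠ u in atTop, u ^ 2 * (σ2 + bernsteinIntegralDeriv Pib u) /
      (m + σ2 * u + bernsteinIntegral Pib u) = u ^ 2 * deriv φ u / φ u := by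
    filter_upwards [eventually_gt_atTop 0] with u hu
    rw [(hasDerivAt_of_eq_bernstein hPib_int hrep hu).deriv, hrep u hu, bernsteinIntegral]
  have hpos : ∀ᶠ u in atTop, 0 < m + σ2 * u + bernsteinIntegral Pib u :=
    (eventually_gt_atTop 0).mono fun _ hu => bernstein_pos hm hσ hPib_nonneg hanti hPib_int hnd hu
  refine ⟨fun hcase => ?_, fun c hσ0 hc => ?_⟩
  · have hlo := hcase.elim (isLittleO_bernstein_of_drift_pos (m := m) · hPib_nonneg hPib_int)
      (isLittleO_bernstein_of_tendsto_atTop (m := m) hσ hPib_nonneg hanti hPib_int)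
    have hnum : ∀ᶠ u in atTop, 0 ≤ u ^ 2 * (σ2 + bernsteinIntegralDeriv Pib u) :=
      Eventually.of_forall fun u =>
        mul_nonneg (sq_nonneg u) (add_nonneg hσ (bernsteinIntegralDeriv_nonneg hPib_nonneg u))
    exact (tendsto_div_atTop_of_isLittleO hlo hpos hnum).congr' hratio
  · subst hσ0
    have hPib := integrableOn_Ioi_zero_of_tendsto hPib_int hc
    have hden : Tendsto (fun u => m + 0 * u + bernsteinIntegral Pib u) atTop
        (𝓝 (m + ∫ y in Ioi 0, Pib y)) := by
      simpa using (tendsto_bernsteinIntegral_atTop hPib).const_add m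
    have hlim_pos : 0 < m + ∫ y in Ioi 0, Pib y := by
      have := bernstein_pos hm hσ hPib_nonneg hanti hPib_int hnd one_pos
      linarith [bernsteinIntegral_le_integral hPib_nonneg hPib zero_le_one]
    refine ((tendsto_sq_mul_bernsteinIntegralDeriv hPib_nonneg hanti hc).div hden
      hlim_pos.ne').congr' ?_
    filter_upwards [hratio] with u h
    rw [← h, zero_add, Pi.div_apply]
end

section
/- Let φ(u) = m + σ²·u + ∫₀^∞ (1 − e^{−u y}) Π̄(y) dy be a Bernstein function of class B_N with σ² > 0 and Π̄̄(0⁺) = ∫₀^∞ Π̄(y) dy < ∞, and write Π̄̄(y) = ∫_y^∞ Π̄(r) dr. (i) For every 𝔪 > (m + Π̄̄(0⁺))/σ², the function g_𝔪(y) = e^{−𝔪 y} ( 𝔪σ² − m + 𝔪 ∫₀^y e^{𝔪 r} Π̄̄(r) dr − e^{𝔪 y} Π̄̄(y) ) is nonnegative for all y > 0, and for every u > 0 one has φ(u)/(u + 𝔪) = m/𝔪 + ∫₀^∞ (1 − e^{−u y}) g_𝔪(y) dy; in particular u ↦ φ(u)/(u + 𝔪) is a Bernstein function. (ii) If u₀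 > 0 satisfies ∫₀^∞ e^{u₀ y} Π̄̄(y) dy < ∞ and m = σ² u₀ + u₀ ∫₀^∞ e^{u₀ y} Π̄̄(y) dy (i.e. the analytic extension of φ vanishes at −u₀), then u₀ ≤ m/σ², with equality if and only if Π̄̄(0⁺) = 0. (Paper: Proposition 'lem:bernst_ratio', item 1.) -/
/-!
Integrating `r ↦ 𝔪 e^{𝔪r} Π̄̄(r)` by parts (i.e. by Fubini on the triangle `0 < r < s`) gives
`g_𝔪(y) = e^{-𝔪y} (𝔪σ² - m - Π̄̄(0⁺) + ∫₀^y e^{𝔪s} Π̄(s) ds)`, which is visibly nonnegative once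
`𝔪σ² ≥ m + Π̄̄(0⁺)`. A second exchange of integrals on the triangle `0 < s < y` turns
`∫ (1 - e^{-uy}) g_𝔪(y) dy` into an expression in `Π̄̄(0⁺)` and the Laplace transform of `Π̄`, and
multiplying by `u + 𝔪` recovers `φ(u)`. For (ii) the same exchange gives
`u₀ ∫ e^{u₀y} Π̄̄(y) dy = ∫ (e^{u₀x} - 1) Π̄(x) dx`, which vanishes exactly when `Π̄ = 0` a.e.
All integrands are nonnegative, so each exchange is justified by Tonelli.
-/

open MeasureTheory

/-- The double tail `Π̄̄(y) = ∫_y^∞ Π̄(r) dr`. -/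
noncomputable def PiBar2 (Pib : ℝ → ℝ) (y : ℝ) : ℝ := ∫ r in Set.Ioi y, Pib r

/-- The candidate Lévy density of `u ↦ φ(u)/(u+𝔪)`. -/
noncomputable def gfun (Pib : ℝ → ℝ) (m σ2 M y : ℝ) : ℝ :=
  Real.exp (-(M * y)) *
    (M * σ2 - m + M * (∫ r in Set.Ioc (0:ℝ) y, Real.exp (M * r) * PiBar2 Pib r)
      - Real.exp (M * y) * PiBar2 Pib y)

open Set Real

section Triangle

variable {f g : ℝ → ℝ} {a : ℝ}

theorem integral_Ioi_indicator_lt_fst (x : ℝ) :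
    ∫ t in Ioi a, {p : ℝ × ℝ | p.2 < p.1}.indicator (fun p => f p.1 * g p.2) (x, t)
      = f x * ∫ t in Ioo a x, g t := by
  have hslice : (fun t => {p : ℝ × ℝ | p.2 < p.1}.indicator (fun p => f p.1 * g p.2) (x, t))
      = (Iio x).indicator (fun t => f x * g t) := by
    ext t
    simp only [indicator_apply, mem_ofPred_eq, mem_Iio]
  rw [hslice, integral_indicator measurableSet_Iio, Measure.restrict_restrict measurableSet_Iio,
    Iio_inter_Ioi, integral_const_mul]

theorem integral_Ioi_indicator_lt_snd {t : ℝ} (ht : a ≤ t) :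
    ∫ x in Ioi a, {p : ℝ × ℝ | p.2 < p.1}.indicator (fun p => f p.1 * g p.2) (x, t)
      = g t * ∫ x in Ioi t, f x := by
  have hslice : (fun x => {p : ℝ × ℝ | p.2 < p.1}.indicator (fun p => f p.1 * g p.2) (x, t))
      = (Ioi t).indicator (fun x => g t * f x) := by
    ext x
    simp only [indicator_apply, mem_ofPred_eq, mem_Ioi, mul_comm]
  rw [hslice, integral_indicator measurableSet_Ioi, Measure.restrict_restrict measurableSet_Ioi,
    inter_eq_left.2 (Ioi_subset_Ioi ht), integral_const_mul]

theorem integrable_indicator_lt_mul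
    (hf : ∀ x > a, 0 ≤ f x) (hg : ∀ t > a, 0 ≤ g t)
    (hfm : AEStronglyMeasurable f (volume.restrict (Ioi a)))
    (hgm : AEStronglyMeasurable g (volume.restrict (Ioi a)))
    (hf_int : ∀ t > a, IntegrableOn f (Ioi t))
    (hgf_int : IntegrableOn (fun t => g t * ∫ x in Ioi t, f x) (Ioi a)) :
    Integrable ({p : ℝ × ℝ | p.2 < p.1}.indicator fun p => f p.1 * g p.2)
      ((volume.restrict (Ioi a)).prod (volume.restrict (Ioi a))) := by
  have hFm : AEStronglyMeasurable ({p : ℝ × ℝ | p.2 < p.1}.indicator fun p => f p.1 * g p.2)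
      ((volume.restrict (Ioi a)).prod (volume.restrict (Ioi a))) :=
    (hfm.comp_fst.mul hgm.comp_snd).indicator (measurableSet_lt measurable_snd measurable_fst)
  refine (integrable_prod_iff' hFm).2 ⟨?_, hgf_int.congr ?_⟩
  · filter_upwards [ae_restrict_mem measurableSet_Ioi] with t ht
    have hslice : (fun x => {p : ℝ × ℝ | p.2 < p.1}.indicator (fun p => f p.1 * g p.2) (x, t))
        = (Ioi t).indicator (fun x => f x * g t) := by
      ext x
      simp only [indicator_apply, mem_ofPred_eq, mem_Ioi]
    rw [hslice, integrable_indicator_iff measurableSet_Ioi, IntegrableOn,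
      Measure.restrict_restrict measurableSet_Ioi, inter_eq_left.2 (Ioi_subset_Ioi (le_of_lt ht))]
    exact (hf_int t ht).mul_const _
  · filter_upwards [ae_restrict_mem measurableSet_Ioi] with t (ht : a < t)
    rw [← integral_Ioi_indicator_lt_snd ht.le]
    refine setIntegral_congr_fun measurableSet_Ioi fun x (hx : a < x) => ?_
    exact (Real.norm_of_nonneg (indicator_nonneg (fun p _ => mul_nonneg (hf _ hx) (hg _ ht)) _)).symm

theorem integrableOn_mul_integral_Ioo
    (hf : ∀ x > a, 0 ≤ f x) (hg : ∀ t > a, 0 ≤ g t)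
    (hfm : AEStronglyMeasurable f (volume.restrict (Ioi a)))
    (hgm : AEStronglyMeasurable g (volume.restrict (Ioi a)))
    (hf_int : ∀ t > a, IntegrableOn f (Ioi t))
    (hgf_int : IntegrableOn (fun t => g t * ∫ x in Ioi t, f x) (Ioi a)) :
    IntegrableOn (fun x => f x * ∫ t in Ioo a x, g t) (Ioi a) := by
  simpa only [IntegrableOn, integral_Ioi_indicator_lt_fst] using
    (integrable_indicator_lt_mul hf hg hfm hgm hf_int hgf_int).integral_prod_left

theorem integral_Ioi_mul_integral_Ioo
    (hf : ∀ x > a, 0 ≤ f x) (hg : ∀ t > a, 0 ≤ g t)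
    (hfm : AEStronglyMeasurable f (volume.restrict (Ioi a)))
    (hgm : AEStronglyMeasurable g (volume.restrict (Ioi a)))
    (hf_int : ∀ t > a, IntegrableOn f (Ioi t))
    (hgf_int : IntegrableOn (fun t => g t * ∫ x in Ioi t, f x) (Ioi a)) :
    ∫ x in Ioi a, f x * ∫ t in Ioo a x, g t = ∫ t in Ioi a, g t * ∫ x in Ioi t, f x := by
  have hswap := integral_integral_swap
    (f := fun x t => {p : ℝ × ℝ | p.2 < p.1}.indicator (fun p => f p.1 * g p.2) (x, t))
    (integrable_indicator_lt_mul hf hg hfm hgm hf_int hgf_int)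
  simp only [integral_Ioi_indicator_lt_fst] at hswap
  rw [hswap]
  exact setIntegral_congr_fun measurableSet_Ioi fun t (ht : a < t) =>
    integral_Ioi_indicator_lt_snd ht.le

end Triangle

theorem integral_Ioo_mul_exp_mul (c : ℝ) {a b : ℝ} (hab : a ≤ b) :
    ∫ t in Ioo a b, c * exp (c * t) = exp (c * b) - exp (c * a) := by
  rw [← integral_Ioc_eq_integral_Ioo, ← intervalIntegral.integral_of_le hab]
  refine intervalIntegral.integral_eq_sub_of_hasDerivAt (f := fun t => exp (c * t)) (fun t _ => ?_)
    ((by fun_prop : Continuous fun t => c * exp (c * t)).intervalIntegrable a b)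
  simpa [mul_comm] using ((hasDerivAt_id t).const_mul c).exp

theorem one_sub_exp_mul_exp (u M y : ℝ) :
    (1 - exp (-(u * y))) * exp (-(M * y)) = exp (-M * y) - exp (-(u + M) * y) := by
  rw [sub_mul, one_mul, ← exp_add]
  ring_nf

theorem integrableOn_one_sub_exp_mul_exp {u M : ℝ} (hM : 0 < M) (huM : 0 < u + M) (t : ℝ) :
    IntegrableOn (fun y => (1 - exp (-(u * y))) * exp (-(M * y))) (Ioi t) := by
  simp only [one_sub_exp_mul_exp]
  exact (integrableOn_exp_mul_Ioi (by linarith) t).sub (integrableOn_exp_mul_Ioi (by linarith) t)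

theorem integral_Ioi_one_sub_exp_mul_exp {u M : ℝ} (hM : 0 < M) (huM : 0 < u + M) (t : ℝ) :
    ∫ y in Ioi t, (1 - exp (-(u * y))) * exp (-(M * y))
      = exp (-(M * t)) / M - exp (-((u + M) * t)) / (u + M) := by
  simp only [one_sub_exp_mul_exp]
  rw [integral_sub (integrableOn_exp_mul_Ioi (by linarith) t)
    (integrableOn_exp_mul_Ioi (by linarith) t), integral_exp_mul_Ioi (by linarith),
    integral_exp_mul_Ioi (by linarith)]
  simp only [neg_mul, div_neg, neg_div, neg_neg]

theorem exp_mul_mul_integral_Ioi_one_sub_exp_mul_exp {u M : ℝ} (hM : 0 < M) (huM : 0 < u + M)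
    (s : ℝ) :
    exp (M * s) * ∫ y in Ioi s, (1 - exp (-(u * y))) * exp (-(M * y))
      = 1 / M - exp (-(u * s)) / (u + M) := by
  have e1 : exp (M * s) * exp (-(M * s)) = 1 := by rw [← exp_add]; simp
  have e2 : exp (M * s) * exp (-((u + M) * s)) = exp (-(u * s)) := by rw [← exp_add]; ring_nf
  rw [integral_Ioi_one_sub_exp_mul_exp hM huM]
  linear_combination e1 / M - e2 / (u + M)

section PiBar2

variable {Pib : ℝ → ℝ}

theorem PiBar2_nonneg (hnn : ∀ y > 0, 0 ≤ Pib y) {y : ℝ} (hy : 0 ≤ y) : 0 ≤ PiBar2 Pib y :=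
  setIntegral_nonneg measurableSet_Ioi fun r (hr : y < r) => hnn r (hy.trans_lt hr)

theorem PiBar2_eq_integral_Ioc_add (hint : IntegrableOn Pib (Ioi 0)) {x y : ℝ} (hx : 0 ≤ x)
    (hxy : x ≤ y) : PiBar2 Pib x = (∫ s in Ioc x y, Pib s) + PiBar2 Pib y := by
  rw [PiBar2, ← Ioc_union_Ioi_eq_Ioi hxy]
  exact setIntegral_union (Ioc_disjoint_Ioi le_rfl) measurableSet_Ioi
    (hint.mono_set fun s hs => hx.trans_lt hs.1) (hint.mono_set (Ioi_subset_Ioi (hx.trans hxy)))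

theorem PiBar2_antitoneOn (hnn : ∀ y > 0, 0 ≤ Pib y) (hint : IntegrableOn Pib (Ioi 0)) :
    AntitoneOn (PiBar2 Pib) (Ici 0) := fun x (hx : 0 ≤ x) y _ hxy => by
  rw [PiBar2_eq_integral_Ioc_add hint hx hxy, le_add_iff_nonneg_left]
  exact setIntegral_nonneg measurableSet_Ioc fun s hs => hnn s (hx.trans_lt hs.1)

theorem integrableOn_Icc_exp_mul_PiBar2 (hnn : ∀ y > 0, 0 ≤ Pib y)
    (hint : IntegrableOn Pib (Ioi 0)) (M y : ℝ) :
    IntegrableOn (fun t => exp (M * t) * PiBar2 Pib t) (Icc 0 y) :=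
  (((PiBar2_antitoneOn hnn hint).mono Icc_subset_Ici_self).integrableOn_isCompact
    isCompact_Icc).continuousOn_mul (by fun_prop) isCompact_Icc

theorem integrableOn_mul_exp_min_sub_one (hint : IntegrableOn Pib (Ioi 0)) {M : ℝ} (hM : 0 ≤ M)
    (y : ℝ) : IntegrableOn (fun x => Pib x * (exp (M * min x y) - 1)) (Ioi 0) := by
  refine hint.mul_bdd (c := exp (M * y) + 1)
    (by fun_prop : Continuous fun x => exp (M * min x y) - 1).aestronglyMeasurable
    (Filter.Eventually.of_forall fun x => (norm_sub_le _ _).trans ?_)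
  rw [norm_of_nonneg (exp_pos _).le, norm_one]
  gcongr
  exact min_le_right x y

theorem mul_integral_exp_mul_PiBar2 (hnn : ∀ y > 0, 0 ≤ Pib y) (hint : IntegrableOn Pib (Ioi 0))
    {M y : ℝ} (hM : 0 ≤ M) (hy : 0 ≤ y) :
    M * ∫ r in Ioc 0 y, exp (M * r) * PiBar2 Pib r
      = ∫ x in Ioi 0, Pib x * (exp (M * min x y) - 1) := by
  set g := (Iio y).indicator fun t => M * exp (M * t)
  have hg_nonneg : ∀ t > 0, 0 ≤ g t := fun t _ => indicator_nonneg (fun t _ => by positivity) t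
  have hgm : AEStronglyMeasurable g (volume.restrict (Ioi 0)) :=
    (by fun_prop : Continuous fun t => M * exp (M * t)).aestronglyMeasurable.indicator
      measurableSet_Iio
  have hPib_Ioi : ∀ t > 0, IntegrableOn Pib (Ioi t) := fun t ht =>
    hint.mono_set (Ioi_subset_Ioi ht.le)
  have hg_PiBar2 : (fun t => g t * PiBar2 Pib t)
      = (Iio y).indicator fun t => M * (exp (M * t) * PiBar2 Pib t) := by
    ext t
    by_cases ht : t ∈ Iio y <;> simp [g, ht, mul_assoc]
  have hgPiBar2_int : IntegrableOn (fun t => g t * PiBar2 Pib t) (Ioi 0) := by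
    rw [hg_PiBar2, IntegrableOn, integrable_indicator_iff measurableSet_Iio, IntegrableOn,
      Measure.restrict_restrict measurableSet_Iio, Iio_inter_Ioi]
    exact IntegrableOn.mono_set ((integrableOn_Icc_exp_mul_PiBar2 hnn hint M y).const_mul M)
      Ioo_subset_Icc_self
  have hinner : ∀ x ∈ Ioi (0 : ℝ), Pib x * ∫ t in Ioo 0 x, g t = Pib x * (exp (M * min x y) - 1) :=
    fun x (hx : 0 < x) => by
      rw [integral_indicator measurableSet_Iio, Measure.restrict_restrict measurableSet_Iio,
        inter_comm, Ioo_inter_Iio, integral_Ioo_mul_exp_mul M (le_min hx.le hy), mul_zero, exp_zero]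
  rw [← setIntegral_congr_fun measurableSet_Ioi hinner, integral_Ioi_mul_integral_Ioo hnn hg_nonneg
    hint.aestronglyMeasurable hgm hPib_Ioi hgPiBar2_int]
  change _ = ∫ t in Ioi 0, g t * PiBar2 Pib t
  rw [hg_PiBar2, integral_indicator measurableSet_Iio, Measure.restrict_restrict measurableSet_Iio,
    Iio_inter_Ioi, integral_const_mul, integral_Ioc_eq_integral_Ioo]

theorem integral_mul_exp_min_sub_one (hint : IntegrableOn Pib (Ioi 0)) {M y : ℝ} (hM : 0 ≤ M)
    (hy : 0 ≤ y) :
    ∫ x in Ioi 0, Pib x * (exp (M * min x y) - 1)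
      = (∫ s in Ioc 0 y, exp (M * s) * Pib s) - PiBar2 Pib 0 + exp (M * y) * PiBar2 Pib y := by
  have h_int := integrableOn_mul_exp_min_sub_one hint hM y
  have hD_int : IntegrableOn (fun s => exp (M * s) * Pib s) (Ioc 0 y) :=
    IntegrableOn.continuousOn_mul_of_subset (by fun_prop) (hint.mono_set Ioc_subset_Ioi_self)
      isCompact_Icc measurableSet_Ioc Ioc_subset_Icc_self
  calc ∫ x in Ioi 0, Pib x * (exp (M * min x y) - 1)
      = (∫ s in Ioc 0 y, (exp (M * s) * Pib s - Pib s))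
          + ∫ s in Ioi y, (exp (M * y) - 1) * Pib s := by
        rw [← Ioc_union_Ioi_eq_Ioi hy, setIntegral_union (Ioc_disjoint_Ioi le_rfl) measurableSet_Ioi
          (h_int.mono_set Ioc_subset_Ioi_self) (h_int.mono_set (Ioi_subset_Ioi hy))]
        congr 1
        · refine setIntegral_congr_fun measurableSet_Ioc fun s hs => ?_
          rw [min_eq_left hs.2]
          ring
        · refine setIntegral_congr_fun measurableSet_Ioi fun s (hs : y < s) => ?_
          rw [min_eq_right hs.le]
          ring
    _ = (∫ s in Ioc 0 y, exp (M * s) * Pib s) - PiBar2 Pib 0 + exp (M * y) * PiBar2 Pib y := by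
        rw [integral_sub hD_int (hint.mono_set Ioc_subset_Ioi_self), integral_const_mul,
          PiBar2_eq_integral_Ioc_add hint le_rfl hy, PiBar2]
        ring

theorem gfun_eq (hnn : ∀ y > 0, 0 ≤ Pib y) (hint : IntegrableOn Pib (Ioi 0)) {m σ2 M y : ℝ}
    (hM : 0 ≤ M) (hy : 0 ≤ y) :
    gfun Pib m σ2 M y
      = exp (-(M * y)) * (M * σ2 - m - PiBar2 Pib 0 + ∫ s in Ioc 0 y, exp (M * s) * Pib s) := by
  rw [gfun, mul_integral_exp_mul_PiBar2 hnn hint hM hy, integral_mul_exp_min_sub_one hint hM hy]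
  ring

theorem gfun_nonneg (hnn : ∀ y > 0, 0 ≤ Pib y) (hint : IntegrableOn Pib (Ioi 0)) {m σ2 M y : ℝ}
    (hM : 0 ≤ M) (h : m + PiBar2 Pib 0 ≤ M * σ2) (hy : 0 ≤ y) : 0 ≤ gfun Pib m σ2 M y := by
  rw [gfun_eq hnn hint hM hy]
  have hD : 0 ≤ ∫ s in Ioc 0 y, exp (M * s) * Pib s :=
    setIntegral_nonneg measurableSet_Ioc fun s hs => mul_nonneg (exp_pos _).le (hnn s hs.1)
  exact mul_nonneg (exp_pos _).le (by linarith)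

theorem integrableOn_exp_neg_mul_mul (hint : IntegrableOn Pib (Ioi 0)) {u : ℝ} (hu : 0 ≤ u) :
    IntegrableOn (fun s => exp (-(u * s)) * Pib s) (Ioi 0) := by
  refine hint.bdd_mul (c := 1) (by fun_prop) ?_
  filter_upwards [ae_restrict_mem measurableSet_Ioi] with s (hs : 0 < s)
  rw [norm_of_nonneg (exp_pos _).le, exp_le_one_iff, neg_nonpos]
  positivity

theorem integral_one_sub_exp_mul (hint : IntegrableOn Pib (Ioi 0)) {u : ℝ} (hu : 0 ≤ u) :
    ∫ y in Ioi 0, (1 - exp (-(u * y))) * Pib y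
      = PiBar2 Pib 0 - ∫ y in Ioi 0, exp (-(u * y)) * Pib y := by
  simp only [sub_mul, one_mul]
  exact integral_sub hint (integrableOn_exp_neg_mul_mul hint hu)

theorem integral_one_sub_exp_mul_gfun (hnn : ∀ y > 0, 0 ≤ Pib y) (hint : IntegrableOn Pib (Ioi 0))
    {m σ2 M u : ℝ} (hM : 0 < M) (hu : 0 ≤ u) :
    ∫ y in Ioi 0, (1 - exp (-(u * y))) * gfun Pib m σ2 M y
      = (M * σ2 - m - PiBar2 Pib 0) * (1 / M - 1 / (u + M)) + PiBar2 Pib 0 / M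
        - (∫ s in Ioi 0, exp (-(u * s)) * Pib s) / (u + M) := by
  have huM : 0 < u + M := by linarith
  set w := fun y => (1 - exp (-(u * y))) * exp (-(M * y))
  set g := fun s => exp (M * s) * Pib s
  have hw_nonneg : ∀ y > 0, 0 ≤ w y := fun y hy =>
    mul_nonneg (sub_nonneg.2 (exp_le_one_iff.2 (neg_nonpos.2 (by positivity)))) (exp_pos _).le
  have hg_nonneg : ∀ s > 0, 0 ≤ g s := fun s hs => mul_nonneg (exp_pos _).le (hnn s hs)
  have hwm : AEStronglyMeasurable w (volume.restrict (Ioi 0)) :=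
    (by fun_prop : Continuous w).aestronglyMeasurable
  have hgm : AEStronglyMeasurable g (volume.restrict (Ioi 0)) :=
    (by fun_prop : Continuous fun s => exp (M * s)).aestronglyMeasurable.mul
      hint.aestronglyMeasurable
  have hw_int : ∀ t > 0, IntegrableOn w (Ioi t) := fun t _ =>
    integrableOn_one_sub_exp_mul_exp hM huM t
  have hgw : (fun s => g s * ∫ y in Ioi s, w y)
      = fun s => Pib s / M - exp (-(u * s)) * Pib s / (u + M) := by
    ext s
    rw [mul_right_comm, exp_mul_mul_integral_Ioi_one_sub_exp_mul_exp hM huM]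
    ring
  have hgw_int : IntegrableOn (fun s => g s * ∫ y in Ioi s, w y) (Ioi 0) := by
    rw [hgw]
    exact (hint.div_const M).sub ((integrableOn_exp_neg_mul_mul hint hu).div_const _)
  have hsplit : ∀ y ∈ Ioi (0 : ℝ), (1 - exp (-(u * y))) * gfun Pib m σ2 M y
      = (M * σ2 - m - PiBar2 Pib 0) * w y + w y * ∫ t in Ioo 0 y, g t := fun y (hy : 0 < y) => by
    rw [gfun_eq hnn hint hM.le hy.le, integral_Ioc_eq_integral_Ioo]
    ring
  rw [setIntegral_congr_fun measurableSet_Ioi hsplit, integral_add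
    ((integrableOn_one_sub_exp_mul_exp hM huM 0).const_mul _)
    (integrableOn_mul_integral_Ioo hw_nonneg hg_nonneg hwm hgm hw_int hgw_int),
    integral_const_mul, integral_Ioi_mul_integral_Ioo hw_nonneg hg_nonneg hwm hgm hw_int hgw_int,
    hgw, integral_sub (hint.div_const M) ((integrableOn_exp_neg_mul_mul hint hu).div_const _),
    integral_div, integral_div, integral_Ioi_one_sub_exp_mul_exp hM huM]
  simp only [mul_zero, neg_zero, exp_zero, PiBar2]
  ring

theorem integral_mul_exp_mul_sub_one_eq_zero_iff (hnn : ∀ y > 0, 0 ≤ Pib y)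
    (hint : IntegrableOn Pib (Ioi 0)) {c : ℝ} (hc : 0 < c)
    (h_int : IntegrableOn (fun x => Pib x * (exp (c * x) - 1)) (Ioi 0)) :
    ∫ x in Ioi 0, Pib x * (exp (c * x) - 1) = 0 ↔ PiBar2 Pib 0 = 0 := by
  have h_nonneg : 0 ≤ᵐ[volume.restrict (Ioi 0)] fun x => Pib x * (exp (c * x) - 1) := by
    filter_upwards [ae_restrict_mem measurableSet_Ioi] with x (hx : 0 < x)
    exact mul_nonneg (hnn x hx) (sub_nonneg.2 (one_le_exp (by positivity)))
  have hPib_nonneg : 0 ≤ᵐ[volume.restrict (Ioi 0)] Pib := by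
    filter_upwards [ae_restrict_mem measurableSet_Ioi] with x hx
    exact hnn x hx
  rw [integral_eq_zero_iff_of_nonneg_ae h_nonneg h_int, PiBar2,
    integral_eq_zero_iff_of_nonneg_ae hPib_nonneg hint]
  refine Filter.eventually_congr ?_
  filter_upwards [ae_restrict_mem measurableSet_Ioi] with x (hx : 0 < x)
  have hexp : exp (c * x) - 1 ≠ 0 := sub_ne_zero.2 (one_lt_exp_iff.2 (by positivity)).ne'
  simp only [Pi.zero_apply, mul_eq_zero, hexp, or_false]

theorem integral_exp_mul_PiBar2_eq_zero_iff (hnn : ∀ y > 0, 0 ≤ Pib y)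
    (hint : IntegrableOn Pib (Ioi 0)) {c : ℝ} (hc : 0 < c)
    (hI : IntegrableOn (fun y => exp (c * y) * PiBar2 Pib y) (Ioi 0)) :
    ∫ y in Ioi 0, exp (c * y) * PiBar2 Pib y = 0 ↔ PiBar2 Pib 0 = 0 := by
  set g := fun t => c * exp (c * t)
  have hg_nonneg : ∀ t > 0, 0 ≤ g t := fun t _ => by positivity
  have hgm : AEStronglyMeasurable g (volume.restrict (Ioi 0)) :=
    (by fun_prop : Continuous g).aestronglyMeasurable
  have hPib_Ioi : ∀ t > 0, IntegrableOn Pib (Ioi t) := fun t ht =>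
    hint.mono_set (Ioi_subset_Ioi ht.le)
  have hgPiBar2_int : IntegrableOn (fun t => g t * ∫ x in Ioi t, Pib x) (Ioi 0) := by
    simpa only [g, mul_assoc, IntegrableOn, PiBar2] using hI.const_mul c
  have hinner : ∀ x ∈ Ioi (0 : ℝ), Pib x * ∫ t in Ioo 0 x, g t = Pib x * (exp (c * x) - 1) :=
    fun x (hx : 0 < x) => by rw [integral_Ioo_mul_exp_mul c hx.le, mul_zero, exp_zero]
  have h_int : IntegrableOn (fun x => Pib x * (exp (c * x) - 1)) (Ioi 0) :=
    (integrableOn_mul_integral_Ioo hnn hg_nonneg hint.aestronglyMeasurable hgm hPib_Ioi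
      hgPiBar2_int).congr_fun hinner measurableSet_Ioi
  have hswap : c * ∫ y in Ioi 0, exp (c * y) * PiBar2 Pib y
      = ∫ x in Ioi 0, Pib x * (exp (c * x) - 1) := by
    rw [← setIntegral_congr_fun measurableSet_Ioi hinner, integral_Ioi_mul_integral_Ioo hnn
      hg_nonneg hint.aestronglyMeasurable hgm hPib_Ioi hgPiBar2_int, ← integral_const_mul]
    simp only [g, mul_assoc, PiBar2]
  rw [← integral_mul_exp_mul_sub_one_eq_zero_iff hnn hint hc h_int, ← hswap, mul_eq_zero,
    or_iff_right hc.ne']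

end PiBar2

theorem bernstein_ratio_small_perturbation_general
    (φ Pib : ℝ → ℝ) (m σ2 : ℝ)
    (hm : 0 ≤ m) (hσ : 0 < σ2)
    (hPib_nonneg : ∀ y : ℝ, 0 < y → 0 ≤ Pib y)
    (hPib_int : IntegrableOn Pib (Set.Ioi 0))
    (hrep : ∀ u : ℝ, 0 < u →
      φ u = m + σ2 * u + ∫ y in Set.Ioi (0:ℝ), (1 - Real.exp (-(u * y))) * Pib y) :
    (∀ M : ℝ, (m + ∫ y in Set.Ioi (0:ℝ), Pib y) / σ2 < M →
      (∀ y : ℝ, 0 < y → 0 ≤ gfun Pib m σ2 M y)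
      ∧ ∀ u : ℝ, 0 < u →
          φ u / (u + M)
            = m / M + ∫ y in Set.Ioi (0:ℝ), (1 - Real.exp (-(u * y))) * gfun Pib m σ2 M y)
    ∧ (∀ u₀ : ℝ, 0 < u₀ →
        IntegrableOn (fun y : ℝ => Real.exp (u₀ * y) * PiBar2 Pib y) (Set.Ioi 0) →
        m = σ2 * u₀ + u₀ * ∫ y in Set.Ioi (0:ℝ), Real.exp (u₀ * y) * PiBar2 Pib y →
        u₀ ≤ m / σ2 ∧ (u₀ = m / σ2 ↔ (∫ y in Set.Ioi (0:ℝ), Pib y) = 0)) := by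
  rw [show (∫ y in Ioi (0 : ℝ), Pib y) = PiBar2 Pib 0 from rfl]
  have hC : 0 ≤ PiBar2 Pib 0 := PiBar2_nonneg hPib_nonneg le_rfl
  refine ⟨fun M hM => ?_, fun u₀ hu₀ hI hm₀ => ?_⟩
  · have hMσ : m + PiBar2 Pib 0 < M * σ2 := (div_lt_iff₀ hσ).1 hM
    have hM0 : 0 < M := pos_of_mul_pos_left (by linarith) hσ.le
    refine ⟨fun y hy => gfun_nonneg hPib_nonneg hPib_int hM0.le hMσ.le hy.le, fun u hu => ?_⟩
    rw [hrep u hu, integral_one_sub_exp_mul hPib_int hu.le,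
      integral_one_sub_exp_mul_gfun hPib_nonneg hPib_int hM0 hu.le]
    field_simp
    ring
  · have hI_nonneg : 0 ≤ ∫ y in Ioi 0, exp (u₀ * y) * PiBar2 Pib y :=
      setIntegral_nonneg measurableSet_Ioi fun y (hy : 0 < y) =>
        mul_nonneg (exp_pos _).le (PiBar2_nonneg hPib_nonneg hy.le)
    rw [eq_div_iff hσ.ne', le_div_iff₀ hσ,
      ← integral_exp_mul_PiBar2_eq_zero_iff hPib_nonneg hPib_int hu₀ hI, hm₀]
    refine ⟨by linarith [mul_nonneg hu₀.le hI_nonneg], fun h => ?_, fun h => by rw [h]; ring⟩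
    exact (mul_eq_zero.1 (by linarith : u₀ * _ = 0)).resolve_left hu₀.ne'

/-- for a `B_N` Bernstein function with `σ² > 0` and finite `Π̄̄(0⁺)`,
(i) `φ(u)/(u+𝔪)` is a Bernstein function for `𝔪 > (m + Π̄̄(0⁺))/σ²`, with explicit
nonnegative Lévy density `g_𝔪`; (ii) any zero `−u₀` of the analytic extension of φ
satisfies `u₀ ≤ m/σ²`, with equality iff `Π̄̄(0⁺) = 0`. -/
theorem bernstein_ratio_small_perturbation
    (φ Pib : ℝ → ℝ) (m σ2 : ℝ)
    (hm : 0 ≤ m) (hσ : 0 < σ2)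
    (hPib_nonneg : ∀ y : ℝ, 0 < y → 0 ≤ Pib y)
    (hPib_anti : ∀ x y : ℝ, 0 < x → x ≤ y → Pib y ≤ Pib x)
    (hPib_int : IntegrableOn Pib (Set.Ioi 0))
    (hrep : ∀ u : ℝ, 0 < u →
      φ u = m + σ2 * u + ∫ y in Set.Ioi (0:ℝ), (1 - Real.exp (-(u * y))) * Pib y) :
    (∀ M : ℝ, (m + ∫ y in Set.Ioi (0:ℝ), Pib y) / σ2 < M →
      (∀ y : ℝ, 0 < y → 0 ≤ gfun Pib m σ2 M y)
      ∧ ∀ u : ℝ, 0 < u →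
          φ u / (u + M)
            = m / M + ∫ y in Set.Ioi (0:ℝ), (1 - Real.exp (-(u * y))) * gfun Pib m σ2 M y)
    ∧ (∀ u₀ : ℝ, 0 < u₀ →
        IntegrableOn (fun y : ℝ => Real.exp (u₀ * y) * PiBar2 Pib y) (Set.Ioi 0) →
        m = σ2 * u₀ + u₀ * ∫ y in Set.Ioi (0:ℝ), Real.exp (u₀ * y) * PiBar2 Pib y →
        u₀ ≤ m / σ2 ∧ (u₀ = m / σ2 ↔ (∫ y in Set.Ioi (0:ℝ), Pib y) = 0)) :=
  bernstein_ratio_small_perturbation_general φ Pib m σ2 hm hσ hPib_nonneg hPib_int hrep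
end

section
/- Let φ be a nondegenerate Bernstein function with data (m, σ², μ), extended to Re z ≥ 0 by φ(z) = m + σ²·z + ∫₀^∞ (1 − e^{−z y}) μ(dy). Then for every a > 0 and b ∈ ℝ: (i) 0 ≤ Re φ(a + i b) − φ(a) ≤ (b²/2) |φ''(a)| and |Im φ(a + i b)| ≤ |b| φ'(a); (ii) for every integer k ≥ 1, |Re φ^{(k)}(a + i b) − φ^{(k)}(a)| ≤ 2 |φ^{(k)}(a)| and |Im φ^{(k)}(a + i b)| ≤ |φ^{(k)}(a)|, where φ^{(k)} denotes the k-th complex derivative of the holomorphic extension; (iii) for every u > 0, ∫_u^∞ |φ''(y + i b)| / |φ(y + i b)| dy ≤ √10 · ∫_u^∞ |φ''(y)|/φ(y) dy ≤ 2√10/u and ∫_u^∞ ( |φ'(y + i b)| / |φ(y + i b)| )² dy ≤ 10 · ∫_u^∞ (φ'(y)/φ(y))² dy ≤ 10/u. (Paper: Lemma 'lem:specialEstimates'.) -/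
open MeasureTheory Set

namespace BE

lemma one_sub_cos_le (x : ℝ) : 1 - Real.cos x ≤ x ^ 2 / 2 := by
  have h1 := Real.cos_two_mul (x / 2)
  rw [show 2 * (x / 2) = x by ring] at h1
  have h2 := Real.sin_sq_add_cos_sq (x / 2)
  have h3 : Real.sin (x / 2) ^ 2 ≤ (x / 2) ^ 2 := Real.sin_sq_le_sq
  nlinarith

lemma sq_exp_le {x : ℝ} (hx : 0 ≤ x) : x ^ 2 * Real.exp (-x) ≤ 2 * (1 - Real.exp (-x)) := by
  have h := Real.quadratic_le_exp_of_nonneg hx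
  have h2 : Real.exp (-x) * Real.exp x = 1 := by rw [← Real.exp_add]; simp
  nlinarith [Real.exp_pos (-x), mul_nonneg hx (Real.exp_pos (-x)).le,
    mul_le_mul_of_nonneg_left h (Real.exp_pos (-x)).le]

lemma mul_exp_le {x : ℝ} (hx : 0 ≤ x) : x * Real.exp (-x) ≤ 1 - Real.exp (-x) := by
  have h := Real.add_one_le_exp x
  have h2 : Real.exp (-x) * Real.exp x = 1 := by rw [← Real.exp_add]; simp
  nlinarith [Real.exp_pos (-x), mul_le_mul_of_nonneg_left h (Real.exp_pos (-x)).le]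

variable {μ : Measure ℝ}

lemma ae_pos (hμ0 : μ (Set.Iic 0) = 0) : ∀ᵐ y ∂μ, 0 < y := by
  rw [ae_iff]
  convert hμ0 using 2
  ext y; simp [not_lt]

lemma integrable_pow_exp (hμ0 : μ (Set.Iic 0) = 0)
    (hμint : Integrable (fun y : ℝ => min 1 y) μ) {k : ℕ} (hk : 1 ≤ k) {c : ℝ} (hc : 0 < c) :
    Integrable (fun y : ℝ => y ^ k * Real.exp (-(c * y))) μ := by
  set C : ℝ := max 1 (k.factorial / c ^ k) with hC
  have hC1 : (1:ℝ) ≤ C := le_max_left _ _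
  refine Integrable.mono' (hμint.const_mul C) ?_ ?_
  · exact ((continuous_pow k).mul (Real.continuous_exp.comp
      (continuous_const.mul continuous_id).neg)).aestronglyMeasurable
  · filter_upwards [ae_pos hμ0] with y hy
    have hexp : (0:ℝ) < Real.exp (-(c * y)) := Real.exp_pos _
    have hnorm : ‖y ^ k * Real.exp (-(c * y))‖ = y ^ k * Real.exp (-(c * y)) := by
      rw [Real.norm_eq_abs, abs_of_nonneg (by positivity)]
    rw [hnorm]
    rcases le_or_gt y 1 with h1 | h1
    · have : y ^ k ≤ y := by
        calc y ^ k ≤ y ^ 1 := pow_le_pow_of_le_one hy.le h1 hk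
        _ = y := pow_one y
      have hmin : min 1 y = y := min_eq_right h1
      calc y ^ k * Real.exp (-(c * y)) ≤ y * 1 :=
            mul_le_mul this (Real.exp_le_one_iff.mpr (by nlinarith)) hexp.le hy.le
        _ = min 1 y := by rw [mul_one, hmin]
        _ ≤ C * min 1 y := le_mul_of_one_le_left (by rw [hmin]; exact hy.le) hC1
    · have hcy : (0:ℝ) < c * y := by positivity
      have h1' : (c * y) ^ k ≤ k.factorial * Real.exp (c * y) := by
        have h2 := Real.pow_div_factorial_le_exp (x := c * y) hcy.le k
        rw [div_le_iff₀ (by positivity : (0:ℝ) < (k.factorial : ℝ))] at h2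
        linarith
      have key : y ^ k * Real.exp (-(c * y)) ≤ k.factorial / c ^ k := by
        rw [Real.exp_neg]
        have hpos : (0:ℝ) < c ^ k * Real.exp (c * y) := by positivity
        refine le_of_mul_le_mul_right ?_ hpos
        have hh : y ^ k * (Real.exp (c * y))⁻¹ * (c ^ k * Real.exp (c * y)) = (c * y) ^ k := by
          field_simp [mul_pow]; ring
        have hh2 : (k.factorial : ℝ) / c ^ k * (c ^ k * Real.exp (c * y))
            = k.factorial * Real.exp (c * y) := by field_simp
        rw [hh, hh2]; exact h1'
      have hmin : min 1 y = 1 := min_eq_left h1.le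
      calc y ^ k * Real.exp (-(c * y)) ≤ k.factorial / c ^ k := key
        _ ≤ C := le_max_right _ _
        _ = C * min 1 y := by rw [hmin, mul_one]

lemma norm_cpow_exp (k : ℕ) (z : ℂ) {y : ℝ} (hy : 0 < y) :
    ‖(y : ℂ) ^ k * Complex.exp (-(z * y))‖ = y ^ k * Real.exp (-(z.re * y)) := by
  rw [norm_mul, norm_pow, Complex.norm_exp,
    Complex.norm_real, Real.norm_eq_abs, abs_of_pos hy]
  congr 2
  simp [Complex.mul_re]

lemma integrable_cpow_exp (hμ0 : μ (Set.Iic 0) = 0)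
    (hμint : Integrable (fun y : ℝ => min 1 y) μ) {k : ℕ} (hk : 1 ≤ k) {z : ℂ}
    (hz : 0 < z.re) :
    Integrable (fun y : ℝ => (y : ℂ) ^ k * Complex.exp (-(z * y))) μ := by
  refine Integrable.mono' (integrable_pow_exp hμ0 hμint hk hz) ?_ ?_
  · apply Continuous.aestronglyMeasurable
    exact ((Complex.continuous_ofReal.pow k).mul
      (Complex.continuous_exp.comp (continuous_const.mul Complex.continuous_ofReal).neg))
  · filter_upwards [ae_pos hμ0] with y hy
    rw [norm_cpow_exp k z hy]

lemma integrable_one_sub (hμ0 : μ (Set.Iic 0) = 0)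
    (hμint : Integrable (fun y : ℝ => min 1 y) μ) {z : ℂ} (hz : 0 ≤ z.re) :
    Integrable (fun y : ℝ => 1 - Complex.exp (-(z * y))) μ := by
  refine Integrable.mono' (hμint.const_mul (2 + 2 * ‖z‖)) ?_ ?_
  · apply Continuous.aestronglyMeasurable
    exact continuous_const.sub
      (Complex.continuous_exp.comp (continuous_const.mul Complex.continuous_ofReal).neg)
  · filter_upwards [ae_pos hμ0] with y hy
    have habs : ‖-(z * y)‖ = ‖z‖ * y := by
      rw [norm_neg, norm_mul, Complex.norm_real, Real.norm_eq_abs, abs_of_pos hy]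
    have hub : ‖Complex.exp (-(z * y))‖ ≤ 1 := by
      rw [Complex.norm_exp, Real.exp_le_one_iff]
      simp only [Complex.neg_re, Complex.mul_re, Complex.ofReal_re, Complex.ofReal_im,
        mul_zero, sub_zero, neg_nonpos]
      positivity
    have hrw : ‖1 - Complex.exp (-(z * y))‖ = ‖Complex.exp (-(z * y)) - 1‖ := norm_sub_rev _ _
    rcases le_or_gt ‖-(z * y)‖ 1 with hc | hc
    · have := Complex.norm_exp_sub_one_le hc
      rw [hrw]
      refine this.trans ?_
      rw [habs]
      rcases le_or_gt y 1 with h1 | h1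
      · rw [min_eq_right h1]
        nlinarith [norm_nonneg z, hy]
      · rw [min_eq_left h1.le]
        rw [habs] at hc
        nlinarith [norm_nonneg z]
    · have h2 : ‖1 - Complex.exp (-(z * y))‖ ≤ 2 := by
        calc ‖1 - Complex.exp (-(z * y))‖ ≤ ‖(1 : ℂ)‖ + ‖Complex.exp (-(z * y))‖ :=
              norm_sub_le _ _
          _ ≤ 1 + 1 := by rw [norm_one]; linarith
          _ = 2 := by norm_num
      refine h2.trans ?_
      rw [habs] at hc
      rcases le_or_gt y 1 with h1 | h1
      · rw [min_eq_right h1]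
        nlinarith [norm_nonneg z]
      · rw [min_eq_left h1.le]
        nlinarith [norm_nonneg z]

noncomputable def G (μ : Measure ℝ) (k : ℕ) (z : ℂ) : ℂ :=
  ∫ y, (y : ℂ) ^ k * Complex.exp (-(z * y)) ∂μ

noncomputable def F (μ : Measure ℝ) (z : ℂ) : ℂ :=
  ∫ y, (1 - Complex.exp (-(z * y))) ∂μ

lemma hasDerivAt_G (hμ0 : μ (Set.Iic 0) = 0)
    (hμint : Integrable (fun y : ℝ => min 1 y) μ) {k : ℕ} (hk : 1 ≤ k) {z₀ : ℂ}
    (hz : 0 < z₀.re) :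
    HasDerivAt (G μ k) (-(G μ (k + 1) z₀)) z₀ := by
  have hε : 0 < z₀.re / 2 := by linarith
  have hball : ∀ x ∈ Metric.ball z₀ (z₀.re / 2), z₀.re / 2 ≤ x.re := by
    intro x hx
    rw [Metric.mem_ball, Complex.dist_eq] at hx
    have := Complex.abs_re_le_norm (x - z₀)
    rw [Complex.sub_re] at this
    have := abs_le.mp (this.trans hx.le)
    linarith [this.1]
  have key := hasDerivAt_integral_of_dominated_loc_of_deriv_le (μ := μ)
      (F := fun (x : ℂ) (y : ℝ) => (y : ℂ) ^ k * Complex.exp (-(x * y)))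
      (F' := fun (x : ℂ) (y : ℝ) => -((y : ℂ) ^ (k + 1) * Complex.exp (-(x * y))))
      (x₀ := z₀) (bound := fun y => y ^ (k + 1) * Real.exp (-(z₀.re / 2 * y))) (Metric.ball_mem_nhds z₀ hε)
      ?_ ?_ ?_ ?_ ?_ ?_
  · have h2 : ∫ y, -((y : ℂ) ^ (k + 1) * Complex.exp (-(z₀ * y))) ∂μ
        = -(G μ (k + 1) z₀) := by
      rw [integral_neg]; rfl
    rw [h2] at key
    exact key.2
  · filter_upwards with x
    exact ((Complex.continuous_ofReal.pow k).mul
      (Complex.continuous_exp.comp (continuous_const.mul Complex.continuous_ofReal).neg)).aestronglyMeasurable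
  · exact integrable_cpow_exp hμ0 hμint hk hz
  · exact ((Complex.continuous_ofReal.pow (k+1)).mul
      (Complex.continuous_exp.comp (continuous_const.mul Complex.continuous_ofReal).neg)).aestronglyMeasurable.neg
  · filter_upwards [ae_pos hμ0] with y hy
    intro x hx
    rw [norm_neg, norm_cpow_exp (k + 1) x hy]
    have hxre := hball x hx
    have : Real.exp (-(x.re * y)) ≤ Real.exp (-(z₀.re / 2 * y)) := by
      rw [Real.exp_le_exp]
      nlinarith
    nlinarith [pow_pos hy (k + 1), Real.exp_pos (-(x.re * y)), pow_nonneg hy.le (k+1)]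
  · exact integrable_pow_exp hμ0 hμint (by omega) hε
  · filter_upwards with y
    intro x hx
    have h1 : HasDerivAt (fun w : ℂ => -(w * y)) (-(y : ℂ)) x := by
      have := ((hasDerivAt_id' x).mul_const (y : ℂ)).neg; rwa [one_mul] at this
    have h2 : HasDerivAt (fun w : ℂ => Complex.exp (-(w * y)))
        (Complex.exp (-(x * y)) * -(y : ℂ)) x := h1.cexp
    have h3 := h2.const_mul ((y : ℂ) ^ k)
    exact h3.congr_deriv (by ring)

lemma hasDerivAt_F (hμ0 : μ (Set.Iic 0) = 0)
    (hμint : Integrable (fun y : ℝ => min 1 y) μ) {z₀ : ℂ} (hz : 0 < z₀.re) :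
    HasDerivAt (F μ) (G μ 1 z₀) z₀ := by
  have hε : 0 < z₀.re / 2 := by linarith
  have hball : ∀ x ∈ Metric.ball z₀ (z₀.re / 2), z₀.re / 2 ≤ x.re := by
    intro x hx
    rw [Metric.mem_ball, Complex.dist_eq] at hx
    have := Complex.abs_re_le_norm (x - z₀)
    rw [Complex.sub_re] at this
    have := abs_le.mp (this.trans hx.le)
    linarith [this.1]
  have key := hasDerivAt_integral_of_dominated_loc_of_deriv_le (μ := μ)
      (F := fun (x : ℂ) (y : ℝ) => 1 - Complex.exp (-(x * y)))
      (F' := fun (x : ℂ) (y : ℝ) => (y : ℂ) ^ 1 * Complex.exp (-(x * y)))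
      (x₀ := z₀) (bound := fun y => y ^ 1 * Real.exp (-(z₀.re / 2 * y))) (Metric.ball_mem_nhds z₀ hε)
      ?_ ?_ ?_ ?_ ?_ ?_
  · exact key.2
  · filter_upwards with x
    exact (continuous_const.sub
      (Complex.continuous_exp.comp (continuous_const.mul Complex.continuous_ofReal).neg)).aestronglyMeasurable
  · exact integrable_one_sub hμ0 hμint hz.le
  · exact ((Complex.continuous_ofReal.pow 1).mul
      (Complex.continuous_exp.comp (continuous_const.mul Complex.continuous_ofReal).neg)).aestronglyMeasurable
  · filter_upwards [ae_pos hμ0] with y hy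
    intro x hx
    rw [norm_cpow_exp 1 x hy]
    have hxre := hball x hx
    have : Real.exp (-(x.re * y)) ≤ Real.exp (-(z₀.re / 2 * y)) := by
      rw [Real.exp_le_exp]
      nlinarith
    nlinarith [pow_pos hy 1, Real.exp_pos (-(x.re * y)), pow_nonneg hy.le 1]
  · exact integrable_pow_exp hμ0 hμint le_rfl hε
  · filter_upwards with y
    intro x hx
    have h1 : HasDerivAt (fun w : ℂ => -(w * y)) (-(y : ℂ)) x := by
      have := ((hasDerivAt_id' x).mul_const (y : ℂ)).neg; rwa [one_mul] at this
    have h2 : HasDerivAt (fun w : ℂ => Complex.exp (-(w * y)))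
        (Complex.exp (-(x * y)) * -(y : ℂ)) x := h1.cexp
    have h3 := (hasDerivAt_const x (1:ℂ)).sub h2
    exact h3.congr_deriv (by ring)

noncomputable def D (m σ2 : ℝ) (μ : Measure ℝ) : ℕ → ℂ → ℂ
  | 0 => fun z => (m : ℂ) + (σ2 : ℂ) * z + F μ z
  | 1 => fun z => (σ2 : ℂ) + G μ 1 z
  | (k + 2) => fun z => (-1 : ℂ) ^ (k + 1) * G μ (k + 2) z

lemma hasDerivAt_D (m σ2 : ℝ) (hμ0 : μ (Set.Iic 0) = 0)
    (hμint : Integrable (fun y : ℝ => min 1 y) μ) (k : ℕ) {z : ℂ} (hz : 0 < z.re) :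
    HasDerivAt (D m σ2 μ k) (D m σ2 μ (k + 1) z) z := by
  match k with
  | 0 =>
    have h1 : HasDerivAt (fun w : ℂ => (m : ℂ) + (σ2 : ℂ) * w) (σ2 : ℂ) z := by
      simpa using ((hasDerivAt_id' z).const_mul (σ2 : ℂ)).const_add (m : ℂ)
    exact h1.add (hasDerivAt_F hμ0 hμint hz)
  | 1 =>
    have h1 := (hasDerivAt_G hμ0 hμint le_rfl hz).const_add (σ2 : ℂ)
    have h2 : D m σ2 μ 2 z = -(G μ 2 z) := by
      show ((-1 : ℂ) ^ (0 + 1) * G μ 2 z) = -(G μ 2 z)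
      ring
    rw [h2]
    exact h1
  | (k + 2) =>
    have h1 := (hasDerivAt_G hμ0 hμint (by omega : 1 ≤ k + 2) hz).const_mul
      ((-1 : ℂ) ^ (k + 1))
    have h2 : D m σ2 μ (k + 3) z = (-1 : ℂ) ^ (k + 1) * -(G μ (k + 3) z) := by
      show ((-1 : ℂ) ^ (k + 2) * G μ (k + 3) z) = _
      ring
    rw [h2]
    exact h1

lemma iteratedDeriv_phi (m σ2 : ℝ) (hμ0 : μ (Set.Iic 0) = 0)
    (hμint : Integrable (fun y : ℝ => min 1 y) μ) {φC : ℂ → ℂ}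
    (hrepC : ∀ z : ℂ, 0 ≤ z.re →
      φC z = (m : ℂ) + (σ2 : ℂ) * z + ∫ y, (1 - Complex.exp (-(z * (y : ℂ)))) ∂μ)
    (k : ℕ) : ∀ {z : ℂ}, 0 < z.re → iteratedDeriv k φC z = D m σ2 μ k z := by
  induction k with
  | zero =>
    intro z hz
    rw [iteratedDeriv_zero, hrepC z hz.le]
    rfl
  | succ k ih =>
    intro z hz
    rw [iteratedDeriv_succ]
    have hopen : IsOpen {w : ℂ | 0 < w.re} := isOpen_lt continuous_const Complex.continuous_re
    have hev : iteratedDeriv k φC =ᶠ[nhds z] D m σ2 μ k :=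
      Filter.eventuallyEq_of_mem (hopen.mem_nhds hz) (fun w hw => ih hw)
    rw [hev.deriv_eq]
    exact (hasDerivAt_D m σ2 hμ0 hμint k hz).deriv

noncomputable def g (μ : Measure ℝ) (k : ℕ) (a : ℝ) : ℝ :=
  ∫ y, y ^ k * Real.exp (-(a * y)) ∂μ

noncomputable def p (μ : Measure ℝ) (a : ℝ) : ℝ :=
  ∫ y, (1 - Real.exp (-(a * y))) ∂μ

lemma G_real (k : ℕ) (a : ℝ) : G μ k (a : ℂ) = ((g μ k a : ℝ) : ℂ) := by
  have h : (fun y : ℝ => (y : ℂ) ^ k * Complex.exp (-((a : ℂ) * y)))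
      = fun y : ℝ => ((y ^ k * Real.exp (-(a * y)) : ℝ) : ℂ) := by
    funext y
    push_cast [Complex.ofReal_exp]
    norm_num
  rw [G, h]
  exact integral_ofReal (𝕜 := ℂ)

lemma F_real (a : ℝ) : F μ (a : ℂ) = ((p μ a : ℝ) : ℂ) := by
  have h : (fun y : ℝ => 1 - Complex.exp (-((a : ℂ) * y)))
      = fun y : ℝ => ((1 - Real.exp (-(a * y)) : ℝ) : ℂ) := by
    funext y
    push_cast [Complex.ofReal_exp]
    norm_num
  rw [F, h]
  exact integral_ofReal (𝕜 := ℂ)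

lemma g_nonneg (hμ0 : μ (Set.Iic 0) = 0) (k : ℕ) (a : ℝ) : 0 ≤ g μ k a := by
  refine integral_nonneg_of_ae ?_
  filter_upwards [ae_pos hμ0] with y hy
  positivity

lemma p_nonneg (hμ0 : μ (Set.Iic 0) = 0) {a : ℝ} (ha : 0 < a) : 0 ≤ p μ a := by
  refine integral_nonneg_of_ae ?_
  filter_upwards [ae_pos hμ0] with y hy
  have h2 : Real.exp (-(a * y)) ≤ 1 := Real.exp_le_one_iff.mpr (by nlinarith)
  show (0:ℝ) ≤ 1 - Real.exp (-(a * y))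
  linarith

lemma G_norm_le (hμ0 : μ (Set.Iic 0) = 0) (k : ℕ) {z : ℂ} :
    ‖G μ k z‖ ≤ g μ k z.re := by
  refine (norm_integral_le_integral_norm _).trans (le_of_eq ?_)
  refine integral_congr_ae ?_
  filter_upwards [ae_pos hμ0] with y hy
  exact norm_cpow_exp k z hy

variable {m σ2 : ℝ} {φC : ℂ → ℂ}

lemma integrable_p (hμ0 : μ (Set.Iic 0) = 0)
    (hμint : Integrable (fun y : ℝ => min 1 y) μ) {a : ℝ} (ha : 0 < a) :
    Integrable (fun y : ℝ => 1 - Real.exp (-(a * y))) μ := by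
  have h := (integrable_one_sub hμ0 hμint (z := (a:ℂ)) (by simpa using ha.le)).re
  refine h.congr (Filter.Eventually.of_forall fun y => ?_)
  simp [Complex.sub_re, Complex.exp_re, Complex.neg_re, Complex.neg_im, Complex.mul_re,
    Complex.mul_im, Real.cos_neg]

lemma integrable_cos (hμ0 : μ (Set.Iic 0) = 0)
    (hμint : Integrable (fun y : ℝ => min 1 y) μ) {a b : ℝ} (ha : 0 < a) :
    Integrable (fun y : ℝ => 1 - Real.exp (-(a * y)) * Real.cos (b * y)) μ := by
  have hz : ((a:ℂ) + b * Complex.I).re = a := by simp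
  have h := (integrable_one_sub hμ0 hμint (z := (a:ℂ) + b * Complex.I)
    (by rw [hz]; exact ha.le)).re
  refine h.congr (Filter.Eventually.of_forall fun y => ?_)
  simp [Complex.sub_re, Complex.exp_re, Complex.neg_re, Complex.neg_im, Complex.mul_re,
    Complex.mul_im, Real.cos_neg]

lemma integrable_sin (hμ0 : μ (Set.Iic 0) = 0)
    (hμint : Integrable (fun y : ℝ => min 1 y) μ) {a b : ℝ} (ha : 0 < a) :
    Integrable (fun y : ℝ => Real.exp (-(a * y)) * Real.sin (b * y)) μ := by
  have hz : ((a:ℂ) + b * Complex.I).re = a := by simp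
  have h := (integrable_one_sub hμ0 hμint (z := (a:ℂ) + b * Complex.I)
    (by rw [hz]; exact ha.le)).im
  refine h.congr (Filter.Eventually.of_forall fun y => ?_)
  simp [Complex.sub_im, Complex.exp_im, Complex.neg_re, Complex.neg_im, Complex.mul_re,
    Complex.mul_im, Real.sin_neg]

lemma D0_re_z {a b : ℝ} : (D m σ2 μ 0 ((a:ℂ) + b * Complex.I)).re
    = m + σ2 * a + (F μ ((a:ℂ) + b * Complex.I)).re := by
  show ((m : ℂ) + (σ2 : ℂ) * _ + F μ _).re = _
  simp [Complex.add_re, Complex.mul_re]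

lemma D0_re_real {a : ℝ} : (D m σ2 μ 0 (a:ℂ)).re = m + σ2 * a + p μ a := by
  show ((m : ℂ) + (σ2 : ℂ) * _ + F μ _).re = _
  rw [F_real]
  simp [Complex.add_re, Complex.mul_re]

lemma re_diff (hμ0 : μ (Set.Iic 0) = 0)
    (hμint : Integrable (fun y : ℝ => min 1 y) μ) {a : ℝ} (b : ℝ) (ha : 0 < a) :
    (D m σ2 μ 0 ((a:ℂ) + b * Complex.I)).re - (D m σ2 μ 0 (a:ℂ)).re
      = ∫ y, Real.exp (-(a * y)) * (1 - Real.cos (b * y)) ∂μ := by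
  set z : ℂ := (a:ℂ) + b * Complex.I with hzdef
  have hzre : z.re = a := by simp [hzdef]
  have hzim : z.im = b := by simp [hzdef]
  have hint : Integrable (fun y : ℝ => 1 - Complex.exp (-(z * y))) μ :=
    integrable_one_sub hμ0 hμint (by rw [hzre]; exact ha.le)
  have hinta : Integrable (fun y : ℝ => 1 - Complex.exp (-((a:ℂ) * y))) μ :=
    integrable_one_sub hμ0 hμint (by simpa using ha.le)
  have hre : (F μ z).re - (F μ (a:ℂ)).re
      = ∫ y, ((1 - Complex.exp (-(z * y))) - (1 - Complex.exp (-((a:ℂ) * y)))).re ∂μ := by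
    rw [← Complex.sub_re, F, F, ← integral_sub hint hinta]
    have := Complex.reCLM.integral_comp_comm (hint.sub hinta)
    simpa using this.symm
  rw [D0_re_z, D0_re_real]
  have hpa : (F μ (a:ℂ)).re = p μ a := by rw [F_real]; simp
  rw [← hpa]
  have : (∫ y, ((1 - Complex.exp (-(z * y))) - (1 - Complex.exp (-((a:ℂ) * y)))).re ∂μ)
      = ∫ y, Real.exp (-(a * y)) * (1 - Real.cos (b * y)) ∂μ := by
    refine integral_congr_ae (Filter.Eventually.of_forall fun y => ?_)
    simp [Complex.sub_re, Complex.exp_re, Complex.neg_re, Complex.neg_im, Complex.mul_re,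
      Complex.mul_im, hzre, hzim, Real.cos_neg]
    ring
  rw [← this, ← hre]
  ring

lemma re_diff_nonneg (hμ0 : μ (Set.Iic 0) = 0)
    (hμint : Integrable (fun y : ℝ => min 1 y) μ) {a : ℝ} (b : ℝ) (ha : 0 < a) :
    0 ≤ (D m σ2 μ 0 ((a:ℂ) + b * Complex.I)).re - (D m σ2 μ 0 (a:ℂ)).re := by
  rw [re_diff hμ0 hμint b ha]
  refine integral_nonneg_of_ae (Filter.Eventually.of_forall fun y => ?_)
  show (0:ℝ) ≤ Real.exp (-(a * y)) * (1 - Real.cos (b * y))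
  nlinarith [Real.cos_le_one (b * y), (Real.exp_pos (-(a * y))).le]

lemma re_diff_le (hμ0 : μ (Set.Iic 0) = 0)
    (hμint : Integrable (fun y : ℝ => min 1 y) μ) {a : ℝ} (b : ℝ) (ha : 0 < a) :
    (D m σ2 μ 0 ((a:ℂ) + b * Complex.I)).re - (D m σ2 μ 0 (a:ℂ)).re
      ≤ b ^ 2 / 2 * g μ 2 a := by
  rw [re_diff hμ0 hμint b ha]
  have hI1 : Integrable (fun y : ℝ => Real.exp (-(a * y)) * (1 - Real.cos (b * y))) μ := by
    refine ((integrable_cos hμ0 hμint (b := b) ha).sub (integrable_p hμ0 hμint ha)).congr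
      (Filter.Eventually.of_forall fun y => ?_)
    simp only [Pi.sub_apply]
    ring
  have hI2 : Integrable (fun y : ℝ => b ^ 2 / 2 * (y ^ 2 * Real.exp (-(a * y)))) μ :=
    (integrable_pow_exp hμ0 hμint (by norm_num) ha).const_mul _
  have hmono : ∀ y : ℝ, Real.exp (-(a * y)) * (1 - Real.cos (b * y))
      ≤ b ^ 2 / 2 * (y ^ 2 * Real.exp (-(a * y))) := by
    intro y
    have h1 := one_sub_cos_le (b * y)
    have h2 := (Real.exp_pos (-(a * y))).le
    nlinarith [Real.cos_le_one (b * y)]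
  calc (∫ y, Real.exp (-(a * y)) * (1 - Real.cos (b * y)) ∂μ)
      ≤ ∫ y, b ^ 2 / 2 * (y ^ 2 * Real.exp (-(a * y))) ∂μ :=
        integral_mono hI1 hI2 hmono
    _ = b ^ 2 / 2 * g μ 2 a := by rw [g, integral_const_mul]

lemma im_le (hμ0 : μ (Set.Iic 0) = 0)
    (hμint : Integrable (fun y : ℝ => min 1 y) μ) (hσ : 0 ≤ σ2) {a : ℝ} (b : ℝ) (ha : 0 < a) :
    |(D m σ2 μ 0 ((a:ℂ) + b * Complex.I)).im| ≤ |b| * (σ2 + g μ 1 a) := by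
  set z : ℂ := (a:ℂ) + b * Complex.I with hzdef
  have hzre : z.re = a := by simp [hzdef]
  have hzim : z.im = b := by simp [hzdef]
  have hint : Integrable (fun y : ℝ => 1 - Complex.exp (-(z * y))) μ :=
    integrable_one_sub hμ0 hμint (by rw [hzre]; exact ha.le)
  have him : (D m σ2 μ 0 z).im = σ2 * b + ∫ y, Real.exp (-(a * y)) * Real.sin (b * y) ∂μ := by
    show ((m : ℂ) + (σ2 : ℂ) * z + F μ z).im = _
    have h1 : (F μ z).im = ∫ y, Real.exp (-(a * y)) * Real.sin (b * y) ∂μ := by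
      rw [F]
      have := Complex.imCLM.integral_comp_comm hint
      simp only [Complex.imCLM_apply] at this
      rw [← this]
      refine integral_congr_ae (Filter.Eventually.of_forall fun y => ?_)
      simp [Complex.sub_im, Complex.exp_im, Complex.neg_re, Complex.neg_im, Complex.mul_re,
        Complex.mul_im, hzre, hzim, Real.sin_neg]
    simp [Complex.add_im, Complex.mul_im, hzre, hzim, h1]
  rw [him]
  have hIs : Integrable (fun y : ℝ => Real.exp (-(a * y)) * Real.sin (b * y)) μ :=
    integrable_sin hμ0 hμint ha
  have h2 : |∫ y, Real.exp (-(a * y)) * Real.sin (b * y) ∂μ| ≤ |b| * g μ 1 a := by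
    have habs := norm_integral_le_integral_norm (μ := μ)
      (f := fun y : ℝ => Real.exp (-(a * y)) * Real.sin (b * y))
    simp only [Real.norm_eq_abs] at habs
    refine habs.trans ?_
    have hI1 : Integrable (fun y : ℝ => |b| * (y ^ 1 * Real.exp (-(a * y)))) μ :=
      (integrable_pow_exp hμ0 hμint le_rfl ha).const_mul _
    calc (∫ y, |Real.exp (-(a * y)) * Real.sin (b * y)| ∂μ)
        ≤ ∫ y, |b| * (y ^ 1 * Real.exp (-(a * y))) ∂μ := by
          refine integral_mono_ae hIs.abs hI1 ?_
          filter_upwards [ae_pos hμ0] with y hy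
          rw [abs_mul, abs_of_pos (Real.exp_pos _)]
          have : |Real.sin (b * y)| ≤ |b * y| := Real.abs_sin_le_abs
          rw [abs_mul, abs_of_pos hy] at this
          have h3 := (Real.exp_pos (-(a * y))).le
          nlinarith
      _ = |b| * g μ 1 a := by rw [g, integral_const_mul]
  calc |σ2 * b + ∫ y, Real.exp (-(a * y)) * Real.sin (b * y) ∂μ|
      ≤ |σ2 * b| + |∫ y, Real.exp (-(a * y)) * Real.sin (b * y) ∂μ| := abs_add_le _ _
    _ ≤ σ2 * |b| + |b| * g μ 1 a := by
        rw [abs_mul, abs_of_nonneg hσ]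
        linarith
    _ = |b| * (σ2 + g μ 1 a) := by ring

lemma D1_real {a : ℝ} : D m σ2 μ 1 (a:ℂ) = ((σ2 + g μ 1 a : ℝ) : ℂ) := by
  show (σ2 : ℂ) + G μ 1 (a:ℂ) = _
  rw [G_real]
  push_cast
  ring

lemma D1_re_real {a : ℝ} : (D m σ2 μ 1 (a:ℂ)).re = σ2 + g μ 1 a := by
  rw [D1_real]; simp

lemma D1_norm_real (hμ0 : μ (Set.Iic 0) = 0) (hσ : 0 ≤ σ2) {a : ℝ} :
    ‖D m σ2 μ 1 (a:ℂ)‖ = σ2 + g μ 1 a := by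
  rw [D1_real, Complex.norm_real, Real.norm_eq_abs,
    abs_of_nonneg (by linarith [g_nonneg hμ0 1 a])]

lemma D2_norm_real (hμ0 : μ (Set.Iic 0) = 0) {a : ℝ} :
    ‖D m σ2 μ 2 (a:ℂ)‖ = g μ 2 a := by
  show ‖(-1 : ℂ) ^ (0 + 1) * G μ 2 (a:ℂ)‖ = _
  rw [norm_mul, G_real, Complex.norm_real, Real.norm_eq_abs,
    abs_of_nonneg (g_nonneg hμ0 2 a)]
  simp

lemma D_norm_le (hμ0 : μ (Set.Iic 0) = 0) (hσ : 0 ≤ σ2) {k : ℕ} (hk : 1 ≤ k)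
    {a : ℝ} (b : ℝ) (ha : 0 < a) :
    ‖D m σ2 μ k ((a:ℂ) + b * Complex.I)‖ ≤ ‖D m σ2 μ k (a:ℂ)‖ := by
  have hzre : ((a:ℂ) + b * Complex.I).re = a := by simp
  match k with
  | 1 =>
    rw [D1_norm_real hμ0 hσ]
    calc ‖(σ2 : ℂ) + G μ 1 ((a:ℂ) + b * Complex.I)‖
        ≤ ‖(σ2 : ℂ)‖ + ‖G μ 1 ((a:ℂ) + b * Complex.I)‖ := norm_add_le _ _
      _ ≤ σ2 + g μ 1 a := by
          have h1 := G_norm_le hμ0 (μ := μ) (k := 1) (z := (a:ℂ) + b * Complex.I)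
          rw [hzre] at h1
          have h2 : ‖(σ2 : ℂ)‖ = σ2 := by
            rw [Complex.norm_real, Real.norm_eq_abs, abs_of_nonneg hσ]
          linarith
  | (k + 2) =>
    have hDz : ‖D m σ2 μ (k + 2) ((a:ℂ) + b * Complex.I)‖
        = ‖G μ (k + 2) ((a:ℂ) + b * Complex.I)‖ := by
      show ‖(-1 : ℂ) ^ (k + 1) * G μ (k + 2) _‖ = _
      rw [norm_mul, norm_pow, norm_neg, norm_one, one_pow, one_mul]
    have hDa : ‖D m σ2 μ (k + 2) (a:ℂ)‖ = g μ (k + 2) a := by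
      show ‖(-1 : ℂ) ^ (k + 1) * G μ (k + 2) _‖ = _
      rw [norm_mul, norm_pow, norm_neg, norm_one, one_pow, one_mul, G_real,
        Complex.norm_real, Real.norm_eq_abs, abs_of_nonneg (g_nonneg hμ0 _ a)]
    rw [hDz, hDa]
    have h1 := G_norm_le hμ0 (μ := μ) (k := k + 2) (z := (a:ℂ) + b * Complex.I)
    rwa [hzre] at h1

lemma D0_re_pos (hμ0 : μ (Set.Iic 0) = 0)
    (hμint : Integrable (fun y : ℝ => min 1 y) μ) (hm : 0 ≤ m) (hσ : 0 ≤ σ2)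
    (hnd : ¬(m = 0 ∧ σ2 = 0 ∧ μ = 0)) {a : ℝ} (ha : 0 < a) :
    0 < (D m σ2 μ 0 (a:ℂ)).re := by
  rw [D0_re_real]
  have hp := p_nonneg hμ0 (μ := μ) ha
  by_cases hm0 : m = 0
  · by_cases hs0 : σ2 = 0
    · have hμne : μ ≠ 0 := fun h => hnd ⟨hm0, hs0, h⟩
      have hppos : 0 < p μ a := by
        rcases hp.lt_or_eq with h | h
        · exact h
        · exfalso
          have hint := integrable_p hμ0 hμint ha
          have hnn : 0 ≤ᵐ[μ] fun y : ℝ => 1 - Real.exp (-(a * y)) := by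
            filter_upwards [ae_pos hμ0] with y hy
            have : Real.exp (-(a * y)) ≤ 1 := Real.exp_le_one_iff.mpr (by nlinarith)
            simp only [Pi.zero_apply]
            linarith
          have hzero : (fun y : ℝ => 1 - Real.exp (-(a * y))) =ᵐ[μ] 0 :=
            (integral_eq_zero_iff_of_nonneg_ae hnn hint).mp h.symm
          have : ∀ᵐ (y : ℝ) ∂μ, False := by
            filter_upwards [hzero, ae_pos hμ0] with y h0 hy
            have hlt : Real.exp (-(a * y)) < 1 := by
              rw [Real.exp_lt_one_iff]
              nlinarith
            simp only [Pi.zero_apply] at h0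
            linarith
          have huniv : μ Set.univ = 0 := by
            have := ae_iff.mp this
            simpa using this
          exact hμne (Measure.measure_univ_eq_zero.mp huniv)
      nlinarith
    · have : 0 < σ2 := lt_of_le_of_ne hσ (Ne.symm hs0)
      nlinarith
  · have : 0 < m := lt_of_le_of_ne hm (Ne.symm hm0)
    nlinarith

lemma D0_re_lower (hμ0 : μ (Set.Iic 0) = 0)
    (hμint : Integrable (fun y : ℝ => min 1 y) μ) {a : ℝ} (b : ℝ) (ha : 0 < a) :
    (D m σ2 μ 0 (a:ℂ)).re ≤ ‖D m σ2 μ 0 ((a:ℂ) + b * Complex.I)‖ := by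
  have h1 := re_diff_nonneg (m := m) (σ2 := σ2) hμ0 hμint b ha
  have h2 := Complex.re_le_norm (D m σ2 μ 0 ((a:ℂ) + b * Complex.I))
  linarith

lemma ratio2_bound (hμ0 : μ (Set.Iic 0) = 0)
    (hμint : Integrable (fun y : ℝ => min 1 y) μ) (hm : 0 ≤ m) (hσ : 0 ≤ σ2)
    {a : ℝ} (ha : 0 < a) :
    a ^ 2 * g μ 2 a ≤ 2 * (D m σ2 μ 0 (a:ℂ)).re := by
  rw [D0_re_real]
  have h1 : a ^ 2 * g μ 2 a = ∫ y, a ^ 2 * (y ^ 2 * Real.exp (-(a * y))) ∂μ := by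
    rw [g, integral_const_mul]
  have h2 : (∫ y, a ^ 2 * (y ^ 2 * Real.exp (-(a * y))) ∂μ)
      ≤ ∫ y, 2 * (1 - Real.exp (-(a * y))) ∂μ := by
    refine integral_mono_ae
      ((integrable_pow_exp hμ0 hμint (by norm_num) ha).const_mul _)
      ((integrable_p hμ0 hμint ha).const_mul 2) ?_
    filter_upwards [ae_pos hμ0] with y hy
    have := sq_exp_le (x := a * y) (by positivity)
    calc a ^ 2 * (y ^ 2 * Real.exp (-(a * y))) = (a * y) ^ 2 * Real.exp (-(a * y)) := by ring
      _ ≤ 2 * (1 - Real.exp (-(a * y))) := this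
  have h3 : (∫ y, 2 * (1 - Real.exp (-(a * y))) ∂μ) = 2 * p μ a := by
    rw [p, integral_const_mul]
  nlinarith [p_nonneg hμ0 (μ := μ) ha]

lemma ratio1_bound (hμ0 : μ (Set.Iic 0) = 0)
    (hμint : Integrable (fun y : ℝ => min 1 y) μ) (hm : 0 ≤ m) (hσ : 0 ≤ σ2)
    {a : ℝ} (ha : 0 < a) :
    a * (σ2 + g μ 1 a) ≤ (D m σ2 μ 0 (a:ℂ)).re := by
  rw [D0_re_real]
  have h1 : a * g μ 1 a = ∫ y, a * (y ^ 1 * Real.exp (-(a * y))) ∂μ := by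
    rw [g, integral_const_mul]
  have h2 : (∫ y, a * (y ^ 1 * Real.exp (-(a * y))) ∂μ)
      ≤ ∫ y, (1 - Real.exp (-(a * y))) ∂μ := by
    refine integral_mono_ae
      ((integrable_pow_exp hμ0 hμint le_rfl ha).const_mul _)
      (integrable_p hμ0 hμint ha) ?_
    filter_upwards [ae_pos hμ0] with y hy
    have := mul_exp_le (x := a * y) (by positivity)
    calc a * (y ^ 1 * Real.exp (-(a * y))) = (a * y) * Real.exp (-(a * y)) := by ring
      _ ≤ 1 - Real.exp (-(a * y)) := this
  have h3 : (∫ y, (1 - Real.exp (-(a * y))) ∂μ) = p μ a := rfl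
  nlinarith

end BE

open BE

/-- estimates for the holomorphic extension of a nondegenerate Bernstein
function on the right half-plane (Lemma `lem:specialEstimates`). -/
theorem bernstein_complex_estimates
    (φC : ℂ → ℂ) (m σ2 : ℝ) (μ : Measure ℝ)
    (hm : 0 ≤ m) (hσ : 0 ≤ σ2)
    (hμ0 : μ (Set.Iic 0) = 0)
    (hμint : Integrable (fun y : ℝ => min 1 y) μ)
    (hrepC : ∀ z : ℂ, 0 ≤ z.re →
      φC z = (m : ℂ) + (σ2 : ℂ) * z + ∫ y, (1 - Complex.exp (-(z * (y : ℂ)))) ∂μ)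
    (hnd : ¬ (m = 0 ∧ σ2 = 0 ∧ μ = 0)) :
    (∀ a : ℝ, 0 < a → ∀ b : ℝ,
        0 ≤ (φC ((a : ℂ) + (b : ℂ) * Complex.I)).re - (φC (a : ℂ)).re
      ∧ (φC ((a : ℂ) + (b : ℂ) * Complex.I)).re - (φC (a : ℂ)).re
          ≤ b ^ 2 / 2 * ‖iteratedDeriv 2 φC (a : ℂ)‖
      ∧ |(φC ((a : ℂ) + (b : ℂ) * Complex.I)).im| ≤ |b| * (deriv φC (a : ℂ)).re)
    ∧ (∀ a : ℝ, 0 < a → ∀ b : ℝ, ∀ k : ℕ, 1 ≤ k →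
        |(iteratedDeriv k φC ((a : ℂ) + (b : ℂ) * Complex.I)).re
            - (iteratedDeriv k φC (a : ℂ)).re| ≤ 2 * ‖iteratedDeriv k φC (a : ℂ)‖
      ∧ |(iteratedDeriv k φC ((a : ℂ) + (b : ℂ) * Complex.I)).im|
          ≤ ‖iteratedDeriv k φC (a : ℂ)‖)
    ∧ (∀ u : ℝ, 0 < u → ∀ b : ℝ,
        (∫ y in Set.Ioi u,
            ‖iteratedDeriv 2 φC ((y : ℂ) + (b : ℂ) * Complex.I)‖
              / ‖φC ((y : ℂ) + (b : ℂ) * Complex.I)‖)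
          ≤ Real.sqrt 10 * ∫ y in Set.Ioi u, ‖iteratedDeriv 2 φC (y : ℂ)‖ / (φC (y : ℂ)).re
      ∧ Real.sqrt 10 * (∫ y in Set.Ioi u, ‖iteratedDeriv 2 φC (y : ℂ)‖ / (φC (y : ℂ)).re)
          ≤ 2 * Real.sqrt 10 / u
      ∧ (∫ y in Set.Ioi u,
            (‖deriv φC ((y : ℂ) + (b : ℂ) * Complex.I)‖
              / ‖φC ((y : ℂ) + (b : ℂ) * Complex.I)‖) ^ 2)
          ≤ 10 * ∫ y in Set.Ioi u, ((deriv φC (y : ℂ)).re / (φC (y : ℂ)).re) ^ 2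
      ∧ 10 * (∫ y in Set.Ioi u, ((deriv φC (y : ℂ)).re / (φC (y : ℂ)).re) ^ 2) ≤ 10 / u) := by
  have hD : ∀ (k : ℕ) {z : ℂ}, 0 < z.re → iteratedDeriv k φC z = D m σ2 μ k z :=
    fun k {z} hz => iteratedDeriv_phi m σ2 hμ0 hμint hrepC k hz
  have hφ : ∀ {z : ℂ}, 0 < z.re → φC z = D m σ2 μ 0 z := fun {z} hz => by
    rw [hrepC z hz.le]; rfl
  have hzre : ∀ a b : ℝ, ((a : ℂ) + (b : ℂ) * Complex.I).re = a := by intro a b; simp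
  have hare : ∀ a : ℝ, ((a : ℂ)).re = a := fun a => by simp
  refine ⟨?_, ?_, ?_⟩
  · -- part (i)
    intro a ha b
    have h1 : (0:ℝ) < ((a : ℂ) + (b : ℂ) * Complex.I).re := by rw [hzre]; exact ha
    have h2 : (0:ℝ) < ((a : ℂ)).re := by rw [hare]; exact ha
    have e1 := hφ h1
    have e2 := hφ h2
    refine ⟨?_, ?_, ?_⟩
    · rw [e1, e2]; exact re_diff_nonneg hμ0 hμint b ha
    · rw [e1, e2]
      have hnrm : ‖iteratedDeriv 2 φC (a : ℂ)‖ = g μ 2 a := by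
        rw [hD 2 h2, D2_norm_real hμ0]
      rw [hnrm]
      exact re_diff_le hμ0 hμint b ha
    · rw [e1]
      have hdr : (deriv φC (a : ℂ)).re = σ2 + g μ 1 a := by
        rw [← iteratedDeriv_one, hD 1 h2, D1_re_real]
      rw [hdr]
      exact im_le hμ0 hμint hσ b ha
  · -- part (ii)
    intro a ha b k hk
    have h1 : (0:ℝ) < ((a : ℂ) + (b : ℂ) * Complex.I).re := by rw [hzre]; exact ha
    have h2 : (0:ℝ) < ((a : ℂ)).re := by rw [hare]; exact ha
    rw [hD k h1, hD k h2]
    have hnorm := D_norm_le (m := m) hμ0 hσ hk b ha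
    set w := D m σ2 μ k ((a : ℂ) + (b : ℂ) * Complex.I) with hw
    set v := D m σ2 μ k (a : ℂ) with hv
    have hwre : |w.re| ≤ ‖w‖ := by
      exact Complex.abs_re_le_norm w
    have hvre : |v.re| ≤ ‖v‖ := by
      exact Complex.abs_re_le_norm v
    have hwim : |w.im| ≤ ‖w‖ := by
      exact Complex.abs_im_le_norm w
    constructor
    · have htri : |w.re - v.re| ≤ |w.re| + |v.re| := by
        have := abs_add_le w.re (-v.re)
        rwa [← sub_eq_add_neg, abs_neg] at this
      linarith
    · linarith
  · -- part (iii)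
    intro u hu b
    have hmeas : MeasurableSet (Set.Ioi u) := measurableSet_Ioi
    set f1 : ℝ → ℝ := fun y =>
      ‖D m σ2 μ 2 ((y:ℂ) + (b:ℂ) * Complex.I)‖ / ‖D m σ2 μ 0 ((y:ℂ) + (b:ℂ) * Complex.I)‖
      with hf1
    set f2 : ℝ → ℝ := fun y => g μ 2 y / (D m σ2 μ 0 (y:ℂ)).re with hf2
    set f3 : ℝ → ℝ := fun y =>
      (‖D m σ2 μ 1 ((y:ℂ) + (b:ℂ) * Complex.I)‖
        / ‖D m σ2 μ 0 ((y:ℂ) + (b:ℂ) * Complex.I)‖) ^ 2 with hf3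
    set f4 : ℝ → ℝ := fun y => ((σ2 + g μ 1 y) / (D m σ2 μ 0 (y:ℂ)).re) ^ 2 with hf4
    -- pointwise facts on Ioi u
    have hyfacts : ∀ y ∈ Set.Ioi u, 0 < y := fun y hy => hu.trans hy
    have hrey : ∀ y : ℝ, ((y:ℂ) + (b:ℂ) * Complex.I).re = y := by intro y; simp
    have hpos : ∀ y ∈ Set.Ioi u, 0 < (D m σ2 μ 0 (y:ℂ)).re := fun y hy =>
      D0_re_pos hμ0 hμint hm hσ hnd (hyfacts y hy)
    have hlow : ∀ y ∈ Set.Ioi u,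
        (D m σ2 μ 0 (y:ℂ)).re ≤ ‖D m σ2 μ 0 ((y:ℂ) + (b:ℂ) * Complex.I)‖ := fun y hy =>
      D0_re_lower hμ0 hμint b (hyfacts y hy)
    have hn2 : ∀ y ∈ Set.Ioi u,
        ‖D m σ2 μ 2 ((y:ℂ) + (b:ℂ) * Complex.I)‖ ≤ g μ 2 y := fun y hy => by
      have := D_norm_le (m := m) hμ0 hσ (by norm_num : 1 ≤ 2) b (hyfacts y hy)
      rwa [D2_norm_real hμ0] at this
    have hn1 : ∀ y ∈ Set.Ioi u,
        ‖D m σ2 μ 1 ((y:ℂ) + (b:ℂ) * Complex.I)‖ ≤ σ2 + g μ 1 y := fun y hy => by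
      have := D_norm_le (m := m) hμ0 hσ le_rfl b (hyfacts y hy)
      rwa [D1_norm_real hμ0 hσ] at this
    have hrpow : ∀ y : ℝ, 0 < y → y ^ (-2 : ℝ) = (y ^ 2)⁻¹ := by
      intro y hy
      have h1 : y ^ (-2:ℝ) = (y ^ (2:ℝ))⁻¹ := by
        rw [← Real.rpow_neg hy.le]
      rw [h1, show (2:ℝ) = ((2:ℕ):ℝ) by norm_num, Real.rpow_natCast]
    have hc2 : ∀ y ∈ Set.Ioi u, f1 y ≤ f2 y := fun y hy =>
      div_le_div₀ (g_nonneg hμ0 2 y) (hn2 y hy) (hpos y hy) (hlow y hy)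
    have hratio1 : ∀ y ∈ Set.Ioi u,
        ‖D m σ2 μ 1 ((y:ℂ) + (b:ℂ) * Complex.I)‖
          / ‖D m σ2 μ 0 ((y:ℂ) + (b:ℂ) * Complex.I)‖
          ≤ (σ2 + g μ 1 y) / (D m σ2 μ 0 (y:ℂ)).re := fun y hy =>
      div_le_div₀ (add_nonneg hσ (g_nonneg hμ0 1 y)) (hn1 y hy) (hpos y hy) (hlow y hy)
    have hc1 : ∀ y ∈ Set.Ioi u, f3 y ≤ f4 y := fun y hy =>
      pow_le_pow_left₀ (div_nonneg (norm_nonneg _) (norm_nonneg _)) (hratio1 y hy) 2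
    have hb2 : ∀ y ∈ Set.Ioi u, f2 y ≤ 2 * y ^ (-2 : ℝ) := by
      intro y hy
      have hy0 := hyfacts y hy
      have h := ratio2_bound hμ0 hμint hm hσ hy0
      rw [hrpow y hy0, ← div_eq_mul_inv]
      show g μ 2 y / (D m σ2 μ 0 (y:ℂ)).re ≤ 2 / y ^ 2
      rw [div_le_div_iff₀ (hpos y hy) (by positivity)]
      nlinarith [h]
    have hb1 : ∀ y ∈ Set.Ioi u, f4 y ≤ y ^ (-2 : ℝ) := by
      intro y hy
      have hy0 := hyfacts y hy
      have h := ratio1_bound hμ0 hμint hm hσ hy0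
      have hr : (σ2 + g μ 1 y) / (D m σ2 μ 0 (y:ℂ)).re ≤ y⁻¹ := by
        rw [div_le_iff₀ (hpos y hy)]
        have h2 := mul_le_mul_of_nonneg_left h (le_of_lt (inv_pos.mpr hy0))
        have hyinv : y⁻¹ * y = 1 := inv_mul_cancel₀ hy0.ne'
        calc σ2 + g μ 1 y = y⁻¹ * y * (σ2 + g μ 1 y) := by rw [hyinv]; ring
          _ = y⁻¹ * (y * (σ2 + g μ 1 y)) := by ring
          _ ≤ y⁻¹ * (D m σ2 μ 0 (y:ℂ)).re := h2
      have hnn : 0 ≤ (σ2 + g μ 1 y) / (D m σ2 μ 0 (y:ℂ)).re :=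
        div_nonneg (add_nonneg hσ (g_nonneg hμ0 1 y)) (hpos y hy).le
      have := pow_le_pow_left₀ hnn hr 2
      rw [hrpow y hy0]
      calc f4 y ≤ (y⁻¹) ^ 2 := this
        _ = (y ^ 2)⁻¹ := by rw [inv_pow]
    -- continuity
    have hcontC : ∀ (k : ℕ) (c : ℝ),
        ContinuousOn (fun y : ℝ => D m σ2 μ k ((y:ℂ) + (c:ℂ) * Complex.I)) (Set.Ioi u) := by
      intro k c y hy
      have h0y : (0:ℝ) < ((y:ℂ) + (c:ℂ) * Complex.I).re := by
        simpa using hyfacts y hy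
      have hca : ContinuousAt (D m σ2 μ k) ((y:ℂ) + (c:ℂ) * Complex.I) :=
        (hasDerivAt_D m σ2 hμ0 hμint k h0y).continuousAt
      have hcz : ContinuousAt (fun y : ℝ => (y:ℂ) + (c:ℂ) * Complex.I) y :=
        (Complex.continuous_ofReal.add continuous_const).continuousAt
      have hcomp : ContinuousAt
          ((D m σ2 μ k) ∘ (fun y : ℝ => (y:ℂ) + (c:ℂ) * Complex.I)) y :=
        ContinuousAt.comp (x := y) (g := D m σ2 μ k)
          (f := fun y : ℝ => (y:ℂ) + (c:ℂ) * Complex.I) hca hcz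
      exact hcomp.continuousWithinAt
    have hcontR : ∀ k : ℕ, ContinuousOn (fun y : ℝ => D m σ2 μ k ((y:ℂ))) (Set.Ioi u) := by
      intro k y hy
      have h0y : (0:ℝ) < ((y:ℂ)).re := by simpa using hyfacts y hy
      have hca : ContinuousAt (D m σ2 μ k) ((y:ℂ)) :=
        (hasDerivAt_D m σ2 hμ0 hμint k h0y).continuousAt
      have hcomp : ContinuousAt ((D m σ2 μ k) ∘ (fun y : ℝ => (y:ℂ))) y :=
        ContinuousAt.comp (x := y) (g := D m σ2 μ k) (f := fun y : ℝ => (y:ℂ))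
          hca Complex.continuous_ofReal.continuousAt
      exact hcomp.continuousWithinAt
    have hg2c : ContinuousOn (fun y : ℝ => g μ 2 y) (Set.Ioi u) :=
      ((hcontR 2).norm).congr (fun y _ => (D2_norm_real hμ0).symm)
    have hg1c : ContinuousOn (fun y : ℝ => σ2 + g μ 1 y) (Set.Ioi u) :=
      ((hcontR 1).norm).congr (fun y _ => (D1_norm_real hμ0 hσ).symm)
    have hre0 : ContinuousOn (fun y : ℝ => (D m σ2 μ 0 ((y:ℂ))).re) (Set.Ioi u) :=
      Complex.continuous_re.comp_continuousOn (hcontR 0)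
    have hf2cont : ContinuousOn f2 (Set.Ioi u) :=
      hg2c.div hre0 (fun y hy => (hpos y hy).ne')
    have hf4cont : ContinuousOn f4 (Set.Ioi u) :=
      (hg1c.div hre0 (fun y hy => (hpos y hy).ne')).pow 2
    have hden : ∀ y ∈ Set.Ioi u, ‖D m σ2 μ 0 ((y:ℂ) + (b:ℂ) * Complex.I)‖ ≠ 0 :=
      fun y hy => (lt_of_lt_of_le (hpos y hy) (hlow y hy)).ne'
    have hf1cont : ContinuousOn f1 (Set.Ioi u) :=
      ((hcontC 2 b).norm).div ((hcontC 0 b).norm) hden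
    have hf3cont : ContinuousOn f3 (Set.Ioi u) :=
      (((hcontC 1 b).norm).div ((hcontC 0 b).norm) hden).pow 2
    -- integrability
    have hbnd1 : IntegrableOn (fun y : ℝ => y ^ (-2:ℝ)) (Set.Ioi u) :=
      integrableOn_Ioi_rpow_of_lt (by norm_num) hu
    have hbnd2 : IntegrableOn (fun y : ℝ => 2 * y ^ (-2:ℝ)) (Set.Ioi u) := hbnd1.const_mul 2
    have hf2nn : ∀ y ∈ Set.Ioi u, 0 ≤ f2 y :=
      fun y hy => div_nonneg (g_nonneg hμ0 2 y) (hpos y hy).le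
    have hf1nn : ∀ y ∈ Set.Ioi u, 0 ≤ f1 y :=
      fun y hy => div_nonneg (norm_nonneg _) (norm_nonneg _)
    have hf2i : IntegrableOn f2 (Set.Ioi u) := by
      refine Integrable.mono' hbnd2 (hf2cont.aestronglyMeasurable hmeas) ?_
      rw [ae_restrict_iff' hmeas]
      refine Filter.Eventually.of_forall fun y hy => ?_
      rw [Real.norm_eq_abs, abs_of_nonneg (hf2nn y hy)]
      exact hb2 y hy
    have hf1i : IntegrableOn f1 (Set.Ioi u) := by
      refine Integrable.mono' hf2i (hf1cont.aestronglyMeasurable hmeas) ?_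
      rw [ae_restrict_iff' hmeas]
      refine Filter.Eventually.of_forall fun y hy => ?_
      rw [Real.norm_eq_abs, abs_of_nonneg (hf1nn y hy)]
      exact hc2 y hy
    have hf4i : IntegrableOn f4 (Set.Ioi u) := by
      refine Integrable.mono' hbnd1 (hf4cont.aestronglyMeasurable hmeas) ?_
      rw [ae_restrict_iff' hmeas]
      refine Filter.Eventually.of_forall fun y hy => ?_
      rw [Real.norm_eq_abs, abs_of_nonneg (sq_nonneg _)]
      exact hb1 y hy
    have hf3i : IntegrableOn f3 (Set.Ioi u) := by
      refine Integrable.mono' hf4i (hf3cont.aestronglyMeasurable hmeas) ?_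
      rw [ae_restrict_iff' hmeas]
      refine Filter.Eventually.of_forall fun y hy => ?_
      rw [Real.norm_eq_abs, abs_of_nonneg (sq_nonneg _)]
      exact hc1 y hy
    -- integral values
    have hI2 : (∫ y in Set.Ioi u, y ^ (-2:ℝ)) = u⁻¹ := by
      rw [integral_Ioi_rpow_of_lt (by norm_num) hu,
        show (-2:ℝ) + 1 = -1 by norm_num, Real.rpow_neg_one]
      ring
    have hsqrt : (1:ℝ) ≤ Real.sqrt 10 := by
      rw [show (1:ℝ) = Real.sqrt 1 from Real.sqrt_one.symm]
      exact Real.sqrt_le_sqrt (by norm_num)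
    -- rewriting goals in terms of f1..f4
    have hEq1 : (∫ y in Set.Ioi u,
        ‖iteratedDeriv 2 φC ((y : ℂ) + (b : ℂ) * Complex.I)‖
          / ‖φC ((y : ℂ) + (b : ℂ) * Complex.I)‖) = ∫ y in Set.Ioi u, f1 y := by
      refine setIntegral_congr_fun hmeas fun y hy => ?_
      have h0 : (0:ℝ) < ((y:ℂ) + (b:ℂ) * Complex.I).re := by
        rw [hzre]; exact hyfacts y hy
      rw [hD 2 h0, hφ h0]
    have hEq2 : (∫ y in Set.Ioi u, ‖iteratedDeriv 2 φC (y : ℂ)‖ / (φC (y : ℂ)).re)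
        = ∫ y in Set.Ioi u, f2 y := by
      refine setIntegral_congr_fun hmeas fun y hy => ?_
      have h0 : (0:ℝ) < ((y:ℂ)).re := by simpa using hyfacts y hy
      rw [hD 2 h0, hφ h0, D2_norm_real hμ0]
    have hEq3 : (∫ y in Set.Ioi u,
        (‖deriv φC ((y : ℂ) + (b : ℂ) * Complex.I)‖
          / ‖φC ((y : ℂ) + (b : ℂ) * Complex.I)‖) ^ 2) = ∫ y in Set.Ioi u, f3 y := by
      refine setIntegral_congr_fun hmeas fun y hy => ?_
      have h0 : (0:ℝ) < ((y:ℂ) + (b:ℂ) * Complex.I).re := by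
        rw [hzre]; exact hyfacts y hy
      rw [← iteratedDeriv_one, hD 1 h0, hφ h0]
    have hEq4 : (∫ y in Set.Ioi u, ((deriv φC (y : ℂ)).re / (φC (y : ℂ)).re) ^ 2)
        = ∫ y in Set.Ioi u, f4 y := by
      refine setIntegral_congr_fun hmeas fun y hy => ?_
      have h0 : (0:ℝ) < ((y:ℂ)).re := by simpa using hyfacts y hy
      rw [← iteratedDeriv_one, hD 1 h0, hφ h0, D1_re_real]
    have hmono12 : (∫ y in Set.Ioi u, f1 y) ≤ ∫ y in Set.Ioi u, f2 y :=
      setIntegral_mono_on hf1i hf2i hmeas hc2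
    have hmono34 : (∫ y in Set.Ioi u, f3 y) ≤ ∫ y in Set.Ioi u, f4 y :=
      setIntegral_mono_on hf3i hf4i hmeas hc1
    have hf2nonneg : (0:ℝ) ≤ ∫ y in Set.Ioi u, f2 y := setIntegral_nonneg hmeas hf2nn
    have hf4nonneg : (0:ℝ) ≤ ∫ y in Set.Ioi u, f4 y :=
      setIntegral_nonneg hmeas fun y hy => sq_nonneg _
    have hint2 : (∫ y in Set.Ioi u, f2 y) ≤ 2 / u := by
      calc (∫ y in Set.Ioi u, f2 y) ≤ ∫ y in Set.Ioi u, 2 * y ^ (-2:ℝ) :=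
            setIntegral_mono_on hf2i hbnd2 hmeas hb2
        _ = 2 * ∫ y in Set.Ioi u, y ^ (-2:ℝ) := integral_const_mul 2 _
        _ = 2 / u := by rw [hI2]; ring
    have hint4 : (∫ y in Set.Ioi u, f4 y) ≤ u⁻¹ := by
      calc (∫ y in Set.Ioi u, f4 y) ≤ ∫ y in Set.Ioi u, y ^ (-2:ℝ) :=
            setIntegral_mono_on hf4i hbnd1 hmeas hb1
        _ = u⁻¹ := hI2
    refine ⟨?_, ?_, ?_, ?_⟩
    · rw [hEq1, hEq2]
      exact hmono12.trans (le_mul_of_one_le_left hf2nonneg hsqrt)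
    · rw [hEq2]
      calc Real.sqrt 10 * ∫ y in Set.Ioi u, f2 y
          ≤ Real.sqrt 10 * (2 / u) :=
            mul_le_mul_of_nonneg_left hint2 (Real.sqrt_nonneg 10)
        _ = 2 * Real.sqrt 10 / u := by ring
    · rw [hEq3, hEq4]
      exact hmono34.trans (le_mul_of_one_le_left hf4nonneg (by norm_num))
    · rw [hEq4]
      calc (10:ℝ) * ∫ y in Set.Ioi u, f4 y ≤ 10 * u⁻¹ :=
            mul_le_mul_of_nonneg_left hint4 (by norm_num)
        _ = 10 / u := by ring
end

section
/- Let φ be a Bernstein function of class B_N, extended to Re z ≥ 0 by φ(z) = m + σ²·z + ∫₀^∞ (1 − e^{−z y}) Π̄(y) dy. Then for all a > 0 and b > 0: Im φ(b a + i b) = σ² b + ∫₀^∞ sin(b y) e^{−b a y} Π̄(y) dy ≥ 0, and σ² b + (e^{−π a} − e^{−2π a}) ∫₀^{π/b} sin(b y) Π̄(y) dy ≤ Im φ(b a + i b) ≤ σ² b + b ∫₀^{π/b} y Π̄(y) dy. (Paper: Lemma 'lemma:WandPhi'.) -/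
/-!
Substituting `z = ba + ib` in the Lévy–Khintchine integral gives
`Im φ(z) = σ²b + ∫₀^∞ sin(by) g(y) dy` with `g(y) = e^{-bay} Π̄(y)` nonnegative and
nonincreasing.
Since `sin(b·)` is antiperiodic with antiperiod `T = π/b`, grouping consecutive half-periods
in pairs shows that `∫_{kT}^∞ sin(by) g(y) dy` has the sign of `sin(b·)` on `(kT, (k+1)T]`:
on each pair the integrand folds to `sin(by) (g(y) - g(y + T)) ≥ 0`. The tail from `0` gives
positivity; dropping the nonpositive tail from `T` and using `sin(by) e^{-bay} ≤ by` gives the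
upper bound; dropping the nonnegative tail from `2T` and folding `(T, 2T]` onto `(0, T]` gives the
lower bound, because `g(y) - g(y + T) ≥ e^{-πa} (1 - e^{-πa}) Π̄(y)` for `y ∈ (0, T]`.
-/

open MeasureTheory Set Filter Function

theorem MeasureTheory.IntegrableOn.intervalIntegrable_of_Ioi {f : ℝ → ℝ} {c u v : ℝ}
    (hf : IntegrableOn f (Ioi c)) (hu : c ≤ u) (huv : u ≤ v) :
    IntervalIntegrable f volume u v :=
  (intervalIntegrable_iff_integrableOn_Ioc_of_le huv).2 (hf.mono_set fun _ hy => hu.trans_lt hy.1)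

section Shift

variable {f : ℝ → ℝ} {d T : ℝ}

theorem IntervalIntegrable.comp_add_right_of_adjacent
    (h₂ : IntervalIntegrable f volume (d + T) (d + 2 * T)) :
    IntervalIntegrable (fun x => f (x + T)) volume d (d + T) := by
  simpa [two_mul, ← add_assoc] using h₂.comp_add_right T

theorem intervalIntegral.integral_two_mul_eq_integral_add_comp_add
    (h₁ : IntervalIntegrable f volume d (d + T))
    (h₂ : IntervalIntegrable f volume (d + T) (d + 2 * T)) :
    ∫ x in d..d + 2 * T, f x = ∫ x in d..d + T, (f x + f (x + T)) := by
  rw [integral_add h₁ h₂.comp_add_right_of_adjacent, integral_comp_add_right,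
    ← integral_add_adjacent_intervals h₁ h₂, two_mul, add_assoc]

end Shift

section Antiperiodic

variable {h g : ℝ → ℝ} {T : ℝ}

theorem intervalIntegral_antiperiodic_mul_nonneg {d : ℝ} (hT : 0 ≤ T) (hh : Antiperiodic h T)
    (hh₀ : ∀ y ∈ Ioc d (d + T), 0 ≤ h y) (hg : AntitoneOn g (Ioi d))
    (h₁ : IntervalIntegrable (fun y => h y * g y) volume d (d + T))
    (h₂ : IntervalIntegrable (fun y => h y * g y) volume (d + T) (d + 2 * T)) :
    0 ≤ ∫ y in d..d + 2 * T, h y * g y := by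
  rw [intervalIntegral.integral_two_mul_eq_integral_add_comp_add h₁ h₂,
    intervalIntegral.integral_of_le (by linarith)]
  refine setIntegral_nonneg measurableSet_Ioc fun y hy => ?_
  rw [hh y, neg_mul, ← sub_eq_add_neg, ← mul_sub]
  exact mul_nonneg (hh₀ y hy) (sub_nonneg.2 (hg hy.1 (by simp only [mem_Ioi]; linarith [hy.1])
    (by linarith)))

theorem setIntegral_Ioi_antiperiodic_mul_nonneg {c : ℝ} (hT : 0 < T) (hh : Antiperiodic h T)
    (hh₀ : ∀ y ∈ Ioc c (c + T), 0 ≤ h y) (hg : AntitoneOn g (Ioi c))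
    (hint : IntegrableOn (fun y => h y * g y) (Ioi c)) :
    0 ≤ ∫ y in Ioi c, h y * g y := by
  have hblocks : ∀ n : ℕ, 0 ≤ ∫ y in c..c + n * (2 * T), h y * g y := by
    intro n
    induction n with
    | zero => simp
    | succ n ih =>
      have hd : c ≤ c + n * (2 * T) := le_add_of_nonneg_right (by positivity)
      have hsucc : c + ((n + 1 : ℕ) : ℝ) * (2 * T) = c + n * (2 * T) + 2 * T := by
        push_cast; ring
      rw [hsucc, ← intervalIntegral.integral_add_adjacent_intervals
        (hint.intervalIntegrable_of_Ioi le_rfl hd)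
        (hint.intervalIntegrable_of_Ioi hd (by linarith))]
      refine add_nonneg ih (intervalIntegral_antiperiodic_mul_nonneg hT.le hh (fun y hy => ?_)
        (hg.mono (Ioi_subset_Ioi hd)) (hint.intervalIntegrable_of_Ioi hd (by linarith))
        (hint.intervalIntegrable_of_Ioi (by linarith) (by linarith)))
      rw [← hh.periodic_two_mul.sub_nat_mul_eq n]
      exact hh₀ _ ⟨by linarith [hy.1], by linarith [hy.2]⟩
  have hlim : Tendsto (fun n : ℕ => c + n * (2 * T)) atTop atTop :=
    tendsto_atTop_add_const_left _ _
      (tendsto_natCast_atTop_atTop.atTop_mul_const (by positivity))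
  exact ge_of_tendsto' (intervalIntegral_tendsto_integral_Ioi c hint hlim) hblocks

theorem setIntegral_Ioi_antiperiodic_mul_nonpos {c : ℝ} (hT : 0 < T) (hh : Antiperiodic h T)
    (hh₀ : ∀ y ∈ Ioc c (c + T), h y ≤ 0) (hg : AntitoneOn g (Ioi c))
    (hint : IntegrableOn (fun y => h y * g y) (Ioi c)) :
    ∫ y in Ioi c, h y * g y ≤ 0 := by
  have hneg := setIntegral_Ioi_antiperiodic_mul_nonneg (h := fun y => -h y) hT
    (fun y => by simp only [hh y]) (fun y hy => neg_nonneg.2 (hh₀ y hy)) hg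
    (by simp only [neg_mul]; exact hint.neg)
  simp only [neg_mul, integral_neg] at hneg
  linarith

end Antiperiodic

theorem Complex.norm_one_sub_exp_neg_le {w : ℂ} (hw : 0 ≤ w.re) :
    ‖1 - Complex.exp (-w)‖ ≤ 2 * min 1 ‖w‖ := by
  rcases le_total ‖w‖ 1 with h | h
  · rw [min_eq_right h, norm_sub_rev, ← norm_neg w]
    exact Complex.norm_exp_sub_one_le (by rwa [norm_neg])
  · rw [min_eq_left h]
    calc ‖1 - Complex.exp (-w)‖ ≤ ‖(1 : ℂ)‖ + ‖Complex.exp (-w)‖ := norm_sub_le _ _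
      _ ≤ 1 + 1 := by
        rw [norm_one, Complex.norm_exp, Complex.neg_re]
        gcongr
        exact Real.exp_le_one_iff.2 (by linarith)
      _ = 2 * 1 := by norm_num

theorem Complex.im_one_sub_exp_neg_mul_ofReal (z : ℂ) (y r : ℝ) :
    ((1 - Complex.exp (-(z * y))) * r).im = Real.sin (z.im * y) * Real.exp (-(z.re * y)) * r := by
  simp [Complex.exp_im, mul_comm (Real.exp _)]

theorem min_one_mul_le_max_one_mul_min_one {c y : ℝ} (hy : 0 ≤ y) :
    min 1 (c * y) ≤ max 1 c * min 1 y := by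
  rcases le_total y 1 with h | h
  · rw [min_eq_right h]
    exact (min_le_right _ _).trans (mul_le_mul_of_nonneg_right (le_max_right _ _) hy)
  · rw [min_eq_left h, mul_one]
    exact (min_le_left _ _).trans (le_max_left _ _)

section LevyIntegrand

variable {P : ℝ → ℝ}

theorem integrableOn_one_sub_exp_neg_mul {z : ℂ} (hz : 0 ≤ z.re)
    (hPm : AEStronglyMeasurable P (volume.restrict (Ioi 0)))
    (hP : IntegrableOn (fun y => min 1 y * P y) (Ioi 0)) :
    IntegrableOn (fun y : ℝ => (1 - Complex.exp (-(z * y))) * (P y : ℂ)) (Ioi 0) := by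
  refine (hP.norm.const_mul (2 * max 1 ‖z‖)).mono' ?_ ?_
  · have hexp : Continuous fun y : ℝ => 1 - Complex.exp (-(z * y)) := by fun_prop
    exact hexp.aestronglyMeasurable.mul (Complex.continuous_ofReal.comp_aestronglyMeasurable hPm)
  · filter_upwards [ae_restrict_mem measurableSet_Ioi] with y (hy : 0 < y)
    have hzy : ‖z * y‖ = ‖z‖ * y := by
      rw [norm_mul, Complex.norm_real, Real.norm_of_nonneg hy.le]
    have hre : 0 ≤ (z * y).re := by simpa using mul_nonneg hz hy.le
    calc ‖(1 - Complex.exp (-(z * y))) * (P y : ℂ)‖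
        = ‖1 - Complex.exp (-(z * y))‖ * ‖P y‖ := by rw [norm_mul, Complex.norm_real]
      _ ≤ 2 * (max 1 ‖z‖ * min 1 y) * ‖P y‖ := by
        gcongr
        exact (Complex.norm_one_sub_exp_neg_le hre).trans
          (by rw [hzy]; gcongr; exact min_one_mul_le_max_one_mul_min_one hy.le)
      _ = 2 * max 1 ‖z‖ * ‖min 1 y * P y‖ := by
        rw [norm_mul, Real.norm_of_nonneg (le_min zero_le_one hy.le)]; ring

theorem integrableOn_Ioc_mul_of_integrableOn_min_one_mul (T : ℝ)
    (hP : IntegrableOn (fun y => min 1 y * P y) (Ioi 0)) :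
    IntegrableOn (fun y => y * P y) (Ioc 0 T) := by
  have hIcc : IntegrableOn (fun y => min 1 y * P y) (Icc 0 T) :=
    (integrableOn_Icc_iff_integrableOn_Ioc).2 (hP.mono_set Ioc_subset_Ioi_self)
  have hmax : ContinuousOn (fun y : ℝ => max 1 y) (Icc 0 T) := by fun_prop
  refine ((hIcc.continuousOn_mul hmax isCompact_Icc).mono_set Ioc_subset_Icc_self).congr_fun
    (fun y _ => ?_) measurableSet_Ioc
  simp only [← mul_assoc, max_mul_min, one_mul]

theorem integrableOn_sin_const_mul_mul {s : Set ℝ} (b : ℝ)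
    (hPm : AEStronglyMeasurable P (volume.restrict s))
    (hP : IntegrableOn (fun y => y * P y) s) :
    IntegrableOn (fun y => Real.sin (b * y) * P y) s := by
  refine (hP.norm.const_mul |b|).mono'
    ((by fun_prop : Continuous fun y => Real.sin (b * y)).aestronglyMeasurable.mul hPm) ?_
  filter_upwards with y
  rw [norm_mul, norm_mul, ← mul_assoc, Real.norm_eq_abs, Real.norm_eq_abs, Real.norm_eq_abs]
  gcongr
  exact Real.abs_sin_le_abs.trans (abs_mul _ _).le

end LevyIntegrand

theorem Real.sin_const_mul_antiperiodic {b : ℝ} (hb : b ≠ 0) :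
    Antiperiodic (fun y => Real.sin (b * y)) (Real.pi / b) := by
  simpa only [inv_mul_eq_div] using Real.sin_antiperiodic.const_mul hb

theorem Real.sin_mul_nonneg_of_mem_Ioc {b y : ℝ} (hb : 0 < b) (hy : y ∈ Ioc 0 (Real.pi / b)) :
    0 ≤ Real.sin (b * y) :=
  Real.sin_nonneg_of_nonneg_of_le_pi (mul_nonneg hb.le hy.1.le)
    (by simpa [mul_div_cancel₀ _ hb.ne'] using mul_le_mul_of_nonneg_left hy.2 hb.le)

theorem antitoneOn_exp_neg_mul_mul {P : ℝ → ℝ} {κ : ℝ} (hκ : 0 ≤ κ)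
    (hP₀ : ∀ y ∈ Ioi 0, 0 ≤ P y) (hP : AntitoneOn P (Ioi 0)) :
    AntitoneOn (fun y => Real.exp (-(κ * y)) * P y) (Ioi 0) := fun x hx y hy hxy =>
  mul_le_mul (Real.exp_le_exp.2 (by nlinarith)) (hP hx hy hxy) (hP₀ y hy) (Real.exp_pos _).le

section SineTransform

open Real

variable {P : ℝ → ℝ} {a b : ℝ}

theorem integral_sin_mul_exp_mul_nonneg (ha : 0 ≤ a) (hb : 0 < b)
    (hP₀ : ∀ y ∈ Ioi 0, 0 ≤ P y) (hP : AntitoneOn P (Ioi 0))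
    (hf : IntegrableOn (fun y => sin (b * y) * exp (-(b * a * y)) * P y) (Ioi 0)) :
    0 ≤ ∫ y in Ioi 0, sin (b * y) * exp (-(b * a * y)) * P y := by
  simp only [mul_assoc (sin _)] at hf ⊢
  exact setIntegral_Ioi_antiperiodic_mul_nonneg (div_pos pi_pos hb)
    (sin_const_mul_antiperiodic hb.ne')
    (fun y hy => sin_mul_nonneg_of_mem_Ioc hb (by simpa using hy))
    (antitoneOn_exp_neg_mul_mul (by positivity) hP₀ hP) hf

theorem integral_sin_mul_exp_mul_le (ha : 0 ≤ a) (hb : 0 < b)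
    (hP₀ : ∀ y ∈ Ioi 0, 0 ≤ P y) (hP : AntitoneOn P (Ioi 0))
    (hf : IntegrableOn (fun y => sin (b * y) * exp (-(b * a * y)) * P y) (Ioi 0))
    (hyP : IntegrableOn (fun y => y * P y) (Ioc 0 (π / b))) :
    ∫ y in Ioi 0, sin (b * y) * exp (-(b * a * y)) * P y
      ≤ b * ∫ y in Ioc 0 (π / b), y * P y := by
  set T := π / b
  have hT : 0 < T := div_pos pi_pos hb
  have hanti : Antiperiodic (fun y => sin (b * y)) T := sin_const_mul_antiperiodic hb.ne'
  have htail : ∫ y in Ioi T, sin (b * y) * exp (-(b * a * y)) * P y ≤ 0 := by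
    simp only [mul_assoc (sin _)]
    refine setIntegral_Ioi_antiperiodic_mul_nonpos hT hanti (fun y hy => ?_)
      ((antitoneOn_exp_neg_mul_mul (by positivity) hP₀ hP).mono (Ioi_subset_Ioi hT.le))
      (by simpa only [mul_assoc (sin _)] using hf.mono_set (Ioi_subset_Ioi hT.le))
    have : sin (b * (y - T)) = -sin (b * y) := hanti.sub_eq y
    have hy' : y - T ∈ Ioc 0 T := ⟨by linarith [hy.1], by linarith [hy.2]⟩
    linarith [sin_mul_nonneg_of_mem_Ioc hb hy']
  have hhead : ∫ y in Ioc 0 T, sin (b * y) * exp (-(b * a * y)) * P y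
      ≤ ∫ y in Ioc 0 T, b * (y * P y) := by
    refine setIntegral_mono_on (hf.mono_set Ioc_subset_Ioi_self) (hyP.const_mul b) measurableSet_Ioc
      fun y hy => ?_
    have hs := sin_mul_nonneg_of_mem_Ioc hb hy
    have hPy := hP₀ y hy.1
    calc sin (b * y) * exp (-(b * a * y)) * P y ≤ sin (b * y) * 1 * P y := by
          gcongr
          exact exp_le_one_iff.2 (by have := hy.1; nlinarith [mul_pos hb this])
      _ ≤ b * (y * P y) := by
          rw [mul_one, ← mul_assoc]
          exact mul_le_mul_of_nonneg_right (sin_le (by nlinarith [hy.1])) hPy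
  rw [← intervalIntegral.integral_interval_add_Ioi hf (hf.mono_set (Ioi_subset_Ioi hT.le)),
    intervalIntegral.integral_of_le hT.le]
  rw [integral_const_mul] at hhead
  linarith

theorem mul_sin_mul_le_sin_mul_exp_mul_add_shift (ha : 0 ≤ a) (hb : 0 < b)
    (hP₀ : ∀ y ∈ Ioi 0, 0 ≤ P y) (hP : AntitoneOn P (Ioi 0)) {y : ℝ}
    (hy : y ∈ Ioc 0 (π / b)) :
    (exp (-(π * a)) - exp (-(2 * π * a))) * (sin (b * y) * P y)
      ≤ sin (b * y) * exp (-(b * a * y)) * P y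
        + sin (b * (y + π / b)) * exp (-(b * a * (y + π / b))) * P (y + π / b) := by
  set T := π / b
  have hT : 0 < T := div_pos pi_pos hb
  have hbT : b * T = π := mul_div_cancel₀ _ hb.ne'
  have hs := sin_mul_nonneg_of_mem_Ioc hb hy
  have hPy := hP₀ y hy.1
  have hPyT : P (y + T) ≤ P y := hP hy.1 (by simp only [mem_Ioi]; linarith [hy.1]) (by linarith)
  have hE : exp (-(π * a)) ≤ 1 := exp_le_one_iff.2 (by nlinarith [pi_pos])
  have hEy : exp (-(π * a)) ≤ exp (-(b * a * y)) :=
    exp_le_exp.2 (by nlinarith [mul_le_mul_of_nonneg_left hy.2 hb.le])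
  have hsin : sin (b * (y + T)) = -sin (b * y) := sin_const_mul_antiperiodic hb.ne' y
  have hexp : exp (-(b * a * (y + T))) = exp (-(b * a * y)) * exp (-(π * a)) := by
    rw [← exp_add]; congr 1; rw [← hbT]; ring
  have hE2 : exp (-(2 * π * a)) = exp (-(π * a)) * exp (-(π * a)) := by rw [← exp_add]; ring_nf
  rw [hsin, hexp, hE2]
  calc (exp (-(π * a)) - exp (-(π * a)) * exp (-(π * a))) * (sin (b * y) * P y)
      = sin (b * y) * exp (-(π * a)) * ((1 - exp (-(π * a))) * P y) := by ring
    _ ≤ sin (b * y) * exp (-(b * a * y)) * ((1 - exp (-(π * a))) * P y) := by gcongr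
    _ ≤ sin (b * y) * exp (-(b * a * y)) * (P y - exp (-(π * a)) * P (y + T)) := by
      gcongr
      nlinarith [exp_pos (-(π * a))]
    _ = _ := by ring

theorem mul_integral_sin_mul_le_integral_sin_mul_exp_mul (ha : 0 ≤ a) (hb : 0 < b)
    (hP₀ : ∀ y ∈ Ioi 0, 0 ≤ P y) (hP : AntitoneOn P (Ioi 0))
    (hf : IntegrableOn (fun y => sin (b * y) * exp (-(b * a * y)) * P y) (Ioi 0))
    (hsinP : IntegrableOn (fun y => sin (b * y) * P y) (Ioc 0 (π / b))) :
    (exp (-(π * a)) - exp (-(2 * π * a))) * ∫ y in Ioc 0 (π / b), sin (b * y) * P y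
      ≤ ∫ y in Ioi 0, sin (b * y) * exp (-(b * a * y)) * P y := by
  set T := π / b
  have hT : 0 < T := div_pos pi_pos hb
  set f := fun y => sin (b * y) * exp (-(b * a * y)) * P y with hfdef
  have h2T : (0 : ℝ) ≤ 2 * T := by positivity
  have htail : 0 ≤ ∫ y in Ioi (2 * T), f y := by
    have hanti : Antiperiodic (fun y => sin (b * y)) T := sin_const_mul_antiperiodic hb.ne'
    simp only [hfdef, mul_assoc (sin _)]
    refine setIntegral_Ioi_antiperiodic_mul_nonneg hT hanti (fun y hy => ?_)
      ((antitoneOn_exp_neg_mul_mul (by positivity) hP₀ hP).mono (Ioi_subset_Ioi h2T))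
      (by simpa only [hfdef, mul_assoc (sin _)] using hf.mono_set (Ioi_subset_Ioi h2T))
    have : sin (b * (y - 2 * T)) = sin (b * y) := hanti.periodic_two_mul.sub_eq y
    have hy' : y - 2 * T ∈ Ioc 0 T := ⟨by linarith [hy.1], by linarith [hy.2]⟩
    linarith [sin_mul_nonneg_of_mem_Ioc hb hy']
  have h₁ : IntervalIntegrable f volume 0 (0 + T) :=
    hf.intervalIntegrable_of_Ioi le_rfl (by linarith)
  have h₂ : IntervalIntegrable f volume (0 + T) (0 + 2 * T) :=
    hf.intervalIntegrable_of_Ioi (by linarith) (by linarith)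
  have hsplit := intervalIntegral.integral_two_mul_eq_integral_add_comp_add h₁ h₂
  have hpair := h₁.add h₂.comp_add_right_of_adjacent
  rw [zero_add, zero_add] at hsplit
  rw [zero_add] at hpair
  have hhead := intervalIntegral.integral_mono_on_of_le_Ioo hT.le
    ((intervalIntegrable_iff_integrableOn_Ioc_of_le hT.le).2 hsinP |>.const_mul _) hpair
    fun y hy => mul_sin_mul_le_sin_mul_exp_mul_add_shift ha hb hP₀ hP (Ioo_subset_Ioc_self hy)
  rw [← intervalIntegral.integral_interval_add_Ioi hf (hf.mono_set (Ioi_subset_Ioi h2T)),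
    ← intervalIntegral.integral_of_le hT.le, ← intervalIntegral.integral_const_mul]
  linarith

end SineTransform

theorem bernstein_BN_imaginary_part_bounds_general
    (φC : ℂ → ℂ) (Pib : ℝ → ℝ) (m σ2 : ℝ)
    (hσ : 0 ≤ σ2)
    (hPib_nonneg : ∀ y : ℝ, 0 < y → 0 ≤ Pib y)
    (hPib_anti : ∀ x y : ℝ, 0 < x → x ≤ y → Pib y ≤ Pib x)
    (hPib_int : IntegrableOn (fun y : ℝ => min 1 y * Pib y) (Set.Ioi 0))
    (hrepC : ∀ z : ℂ, 0 ≤ z.re →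
      φC z = (m : ℂ) + (σ2 : ℂ) * z
        + ∫ y in Set.Ioi (0:ℝ), (1 - Complex.exp (-(z * (y : ℂ)))) * (Pib y : ℂ)) :
    ∀ a b : ℝ, 0 < a → 0 < b →
      (φC (((b * a : ℝ) : ℂ) + (b : ℂ) * Complex.I)).im
          = σ2 * b + ∫ y in Set.Ioi (0:ℝ), Real.sin (b * y) * Real.exp (-(b * a * y)) * Pib y
      ∧ 0 ≤ (φC (((b * a : ℝ) : ℂ) + (b : ℂ) * Complex.I)).im
      ∧ σ2 * b + (Real.exp (-(Real.pi * a)) - Real.exp (-(2 * Real.pi * a)))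
            * (∫ y in Set.Ioc (0:ℝ) (Real.pi / b), Real.sin (b * y) * Pib y)
          ≤ (φC (((b * a : ℝ) : ℂ) + (b : ℂ) * Complex.I)).im
      ∧ (φC (((b * a : ℝ) : ℂ) + (b : ℂ) * Complex.I)).im
          ≤ σ2 * b + b * ∫ y in Set.Ioc (0:ℝ) (Real.pi / b), y * Pib y := by
  intro a b ha hb
  set z : ℂ := ((b * a : ℝ) : ℂ) + (b : ℂ) * Complex.I with hz
  have hzre : z.re = b * a := by simp [hz]
  have hzim : z.im = b := by simp [hz]
  have hz₀ : 0 ≤ z.re := by rw [hzre]; positivity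
  have hP : AntitoneOn Pib (Ioi 0) := fun x hx y _ hxy => hPib_anti x y hx hxy
  have hPm : AEStronglyMeasurable Pib (volume.restrict (Ioi 0)) :=
    (aemeasurable_restrict_of_antitoneOn measurableSet_Ioi hP).aestronglyMeasurable
  have hF := integrableOn_one_sub_exp_neg_mul hz₀ hPm hPib_int
  have hF_im : ∀ y : ℝ, ((1 - Complex.exp (-(z * y))) * (Pib y : ℂ)).im
      = Real.sin (b * y) * Real.exp (-(b * a * y)) * Pib y := fun y => by
    rw [Complex.im_one_sub_exp_neg_mul_ofReal, hzre, hzim]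
  have hf : IntegrableOn (fun y => Real.sin (b * y) * Real.exp (-(b * a * y)) * Pib y) (Ioi 0) := by
    have := hF.im
    simp only [RCLike.im_to_complex, hF_im] at this
    exact this
  have him : (φC z).im
      = σ2 * b + ∫ y in Ioi 0, Real.sin (b * y) * Real.exp (-(b * a * y)) * Pib y := by
    have := integral_im hF
    simp only [RCLike.im_to_complex, hF_im] at this
    rw [hrepC z hz₀, Complex.add_im, Complex.add_im, ← this]
    simp [hzim]
  have hyP := integrableOn_Ioc_mul_of_integrableOn_min_one_mul (Real.pi / b) hPib_int
  have hsinP := integrableOn_sin_const_mul_mul b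
    (hPm.mono_measure (Measure.restrict_mono Ioc_subset_Ioi_self le_rfl)) hyP
  rw [him]
  exact ⟨rfl,
    add_nonneg (mul_nonneg hσ hb.le) (integral_sin_mul_exp_mul_nonneg ha.le hb hPib_nonneg hP hf),
    add_le_add_right
      (mul_integral_sin_mul_le_integral_sin_mul_exp_mul ha.le hb hPib_nonneg hP hf hsinP) _,
    add_le_add_right (integral_sin_mul_exp_mul_le ha.le hb hPib_nonneg hP hf hyP) _⟩

/-- formula and two-sided bounds for the imaginary part
`Im φ(ba + ib)` of a `B_N` Bernstein function (Lemma `lemma:WandPhi`). -/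
theorem bernstein_BN_imaginary_part_bounds
    (φC : ℂ → ℂ) (Pib : ℝ → ℝ) (m σ2 : ℝ)
    (hm : 0 ≤ m) (hσ : 0 ≤ σ2)
    (hPib_nonneg : ∀ y : ℝ, 0 < y → 0 ≤ Pib y)
    (hPib_anti : ∀ x y : ℝ, 0 < x → x ≤ y → Pib y ≤ Pib x)
    (hPib_int : IntegrableOn (fun y : ℝ => min 1 y * Pib y) (Set.Ioi 0))
    (hrepC : ∀ z : ℂ, 0 ≤ z.re →
      φC z = (m : ℂ) + (σ2 : ℂ) * z
        + ∫ y in Set.Ioi (0:ℝ), (1 - Complex.exp (-(z * (y : ℂ)))) * (Pib y : ℂ)) :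
    ∀ a b : ℝ, 0 < a → 0 < b →
      (φC (((b * a : ℝ) : ℂ) + (b : ℂ) * Complex.I)).im
          = σ2 * b + ∫ y in Set.Ioi (0:ℝ), Real.sin (b * y) * Real.exp (-(b * a * y)) * Pib y
      ∧ 0 ≤ (φC (((b * a : ℝ) : ℂ) + (b : ℂ) * Complex.I)).im
      ∧ σ2 * b + (Real.exp (-(Real.pi * a)) - Real.exp (-(2 * Real.pi * a)))
            * (∫ y in Set.Ioc (0:ℝ) (Real.pi / b), Real.sin (b * y) * Pib y)
          ≤ (φC (((b * a : ℝ) : ℂ) + (b : ℂ) * Complex.I)).im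
      ∧ (φC (((b * a : ℝ) : ℂ) + (b : ℂ) * Complex.I)).im
          ≤ σ2 * b + b * ∫ y in Set.Ioc (0:ℝ) (Real.pi / b), y * Pib y :=
  bernstein_BN_imaginary_part_bounds_general φC Pib m σ2 hσ hPib_nonneg hPib_anti hPib_int hrepC
end

section
/- Let φ be a nondegenerate Bernstein function with extension φ(z) to Re z ≥ 0. Then for every b > 0 and u > 0: φ(b u) ≤ |φ(b u + i b)| ≤ √(1 + 1/u²) · φ(b u). Consequently, for every a ≥ 0 and b > 0, the quantity Θ_φ(a,b) = ∫_{a/b}^∞ log( |φ(b u + i b)| / φ(b u) ) du satisfies 0 ≤ Θ_φ(a,b) ≤ π/2. (Paper: Proposition 'prop:asymt_bound_Olver1', item 1, with inequalities (6.x) |φ(a+ib)| ≥ φ(a) and (eq:PhiEst).) -/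
open MeasureTheory

/-- The quantity `Θ_φ(a,b) = ∫_{a/b}^∞ log(|φ(bu + ib)|/φ(bu)) du`. -/
noncomputable def Theta (φC : ℂ → ℂ) (a b : ℝ) : ℝ :=
  ∫ u in Set.Ioi (a / b),
    Real.log (‖φC (((b * u : ℝ) : ℂ) + (b : ℂ) * Complex.I)‖ / (φC ((b * u : ℝ) : ℂ)).re)

/-!
For `Re z = x > 0` the real part of `1 - e^{-zy}` is at least `1 - e^{-xy}`, so
`φ(x) ≤ Re φ(z) ≤ |φ(z)|`. Writing `1 - e^{-w} = w ∫₀¹ e^{-sw} ds` gives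
`|1 - e^{-zy}| ≤ (|z|/x)(1 - e^{-xy})`; since `|z|/x ≥ 1` the terms `m` and `σ²z` are dominated
in the same way, so `|φ(z)| ≤ (|z|/x) φ(x)`. For `z = bu + ib` the ratio `|z|/x` is
`√(1 + 1/u²)`, so the integrand of `Θ` lies between `0` and `½ log(1 + 1/u²)`, whose integral
over `(0, ∞)` is `π`: a primitive is `u log(1 + 1/u²) + 2 arctan u`.
-/

open Set Filter Topology Complex

lemma norm_one_sub_cexp_neg_le {w : ℂ} (hw : 0 < w.re) :
    ‖1 - cexp (-w)‖ ≤ ‖w‖ / w.re * (1 - Real.exp (-w.re)) := by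
  have hw0 : w ≠ 0 := fun h => by simp [h] at hw
  have hc : ∫ t in (0:ℝ)..1, w * cexp (-w * t) = 1 - cexp (-w) := by
    rw [intervalIntegral.integral_const_mul, integral_exp_mul_complex (neg_ne_zero.2 hw0)]
    field_simp
    simp
  have hr : ∫ t in (0:ℝ)..1, ‖w‖ * Real.exp (-w.re * t) =
      ‖w‖ / w.re * (1 - Real.exp (-w.re)) := by
    rw [intervalIntegral.integral_const_mul,
      intervalIntegral.integral_comp_mul_left Real.exp (neg_ne_zero.2 hw.ne'), integral_exp]
    simp only [mul_zero, mul_one, Real.exp_zero, smul_eq_mul]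
    field_simp
    ring
  rw [← hc, ← hr]
  refine intervalIntegral.norm_integral_le_of_norm_le zero_le_one (ae_of_all _ fun t _ => ?_)
    (Continuous.intervalIntegrable (by fun_prop) _ _)
  simp [norm_exp]

lemma one_sub_exp_neg_le_mul_min {x y : ℝ} (hx : 0 ≤ x) (hy : 0 ≤ y) :
    1 - Real.exp (-(x * y)) ≤ (1 + x) * min 1 y := by
  have h1 := Real.add_one_le_exp (-(x * y))
  have h2 := Real.exp_pos (-(x * y))
  rcases le_total y 1 with h | h
  · rw [min_eq_right h]; nlinarith
  · rw [min_eq_left h]; linarith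

lemma one_sub_exp_neg_mul_nonneg {x y : ℝ} (hx : 0 ≤ x) (hy : 0 ≤ y) :
    0 ≤ 1 - Real.exp (-(x * y)) :=
  sub_nonneg.2 (Real.exp_le_one_iff.2 (neg_nonpos.2 (mul_nonneg hx hy)))

lemma ae_pos_of_measure_Iic_zero {μ : Measure ℝ} (hμ0 : μ (Iic 0) = 0) : ∀ᵐ y ∂μ, 0 < y := by
  rw [ae_iff]
  simp only [not_lt]
  exact hμ0

lemma norm_one_sub_cexp_neg_mul_le {z : ℂ} (hz : 0 < z.re) {y : ℝ} (hy : 0 < y) :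
    ‖1 - cexp (-(z * y))‖ ≤ ‖z‖ / z.re * (1 - Real.exp (-(z.re * y))) := by
  have hre : (z * y).re = z.re * y := by simp
  have h := norm_one_sub_cexp_neg_le (w := z * y) (by rw [hre]; positivity)
  rwa [hre, norm_mul, norm_real, Real.norm_of_nonneg hy.le, mul_div_mul_right _ _ hy.ne'] at h

lemma integral_one_sub_cexp_neg_ofReal_mul (μ : Measure ℝ) (x : ℝ) :
    ∫ y, (1 - cexp (-(x * y))) ∂μ = ((∫ y, (1 - Real.exp (-(x * y))) ∂μ : ℝ) : ℂ) := by
  rw [← integral_complex_ofReal]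
  push_cast
  rfl

lemma norm_ofReal_mul_add_mul_I {b u : ℝ} (hb : 0 < b) (hu : 0 < u) :
    ‖((b * u : ℝ) : ℂ) + b * I‖ = √(1 + 1 / u ^ 2) * (b * u) := by
  rw [norm_add_mul_I, show (b * u) ^ 2 + b ^ 2 = (1 + 1 / u ^ 2) * (b * u) ^ 2 by field_simp,
    Real.sqrt_mul (by positivity), Real.sqrt_sq (by positivity)]

lemma log_div_mem_Icc {p q c : ℝ} (hp : 0 < p) (hpq : p ≤ q) (hqc : q ≤ c * p) :
    Real.log (q / p) ∈ Icc 0 (Real.log c) :=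
  ⟨Real.log_nonneg ((one_le_div hp).2 hpq),
    Real.log_le_log (div_pos (hp.trans_le hpq) hp) ((div_le_iff₀ hp).2 hqc)⟩

section LevyIntegral

variable {μ : Measure ℝ} (hμ0 : μ (Iic 0) = 0)
include hμ0

lemma integral_one_sub_exp_neg_mul_nonneg {x : ℝ} (hx : 0 ≤ x) :
    0 ≤ ∫ y, (1 - Real.exp (-(x * y))) ∂μ :=
  integral_nonneg_of_ae <| (ae_pos_of_measure_Iic_zero hμ0).mono fun _ hy =>
    one_sub_exp_neg_mul_nonneg hx hy.le

variable (hμint : Integrable (fun y : ℝ => min 1 y) μ)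
include hμint

lemma integrable_one_sub_exp_neg_mul {x : ℝ} (hx : 0 ≤ x) :
    Integrable (fun y => 1 - Real.exp (-(x * y))) μ := by
  refine (hμint.const_mul (1 + x)).mono' (by fun_prop) ?_
  filter_upwards [ae_pos_of_measure_Iic_zero hμ0] with y hy
  rw [Real.norm_of_nonneg (one_sub_exp_neg_mul_nonneg hx hy.le)]
  exact one_sub_exp_neg_le_mul_min hx hy.le

lemma integrable_one_sub_cexp_neg_mul {z : ℂ} (hz : 0 < z.re) :
    Integrable (fun y : ℝ => 1 - cexp (-(z * y))) μ :=
  ((integrable_one_sub_exp_neg_mul hμ0 hμint hz.le).const_mul _).mono' (by fun_prop) <|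
    (ae_pos_of_measure_Iic_zero hμ0).mono fun _ hy => norm_one_sub_cexp_neg_mul_le hz hy

lemma norm_integral_one_sub_cexp_neg_mul_le {z : ℂ} (hz : 0 < z.re) :
    ‖∫ y, (1 - cexp (-(z * y))) ∂μ‖ ≤ ‖z‖ / z.re * ∫ y, (1 - Real.exp (-(z.re * y))) ∂μ := by
  rw [← integral_const_mul]
  exact norm_integral_le_of_norm_le ((integrable_one_sub_exp_neg_mul hμ0 hμint hz.le).const_mul _)
    ((ae_pos_of_measure_Iic_zero hμ0).mono fun _ hy => norm_one_sub_cexp_neg_mul_le hz hy)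

lemma integral_one_sub_exp_neg_mul_le_re {z : ℂ} (hz : 0 < z.re) :
    ∫ y, (1 - Real.exp (-(z.re * y))) ∂μ ≤ (∫ y, (1 - cexp (-(z * y))) ∂μ).re := by
  have hint := integrable_one_sub_cexp_neg_mul hμ0 hμint hz
  have hre : (∫ y, (1 - cexp (-(z * y))) ∂μ).re = ∫ y, (1 - cexp (-(z * y))).re ∂μ :=
    (integral_re hint).symm
  rw [hre]
  refine integral_mono (integrable_one_sub_exp_neg_mul hμ0 hμint hz.le) hint.re fun y => ?_
  have h := re_le_norm (cexp (-(z * y)))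
  rw [norm_exp] at h
  simp only [neg_re, re_mul_ofReal] at h
  simp only [sub_re, one_re]
  linarith

lemma integral_one_sub_exp_neg_mul_pos (hμ : μ ≠ 0) {x : ℝ} (hx : 0 < x) :
    0 < ∫ y, (1 - Real.exp (-(x * y))) ∂μ := by
  rw [integral_pos_iff_support_of_nonneg_ae ((ae_pos_of_measure_Iic_zero hμ0).mono fun _ hy =>
    one_sub_exp_neg_mul_nonneg hx.le hy.le) (integrable_one_sub_exp_neg_mul hμ0 hμint hx.le)]
  have hsupp : Ioi 0 ⊆ Function.support fun y => 1 - Real.exp (-(x * y)) := fun y hy => by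
    have : Real.exp (-(x * y)) < 1 := Real.exp_lt_one_iff.2 (by nlinarith [mem_Ioi.1 hy])
    exact sub_ne_zero.2 this.ne'
  have hIoi : μ (Ioi 0) ≠ 0 := fun h =>
    hμ <| Measure.measure_univ_eq_zero.1 <| by
      rw [← Iic_union_Ioi (a := (0 : ℝ))]
      exact measure_union_null hμ0 h
  exact (pos_iff_ne_zero.2 hIoi).trans_le (measure_mono hsupp)

end LevyIntegral

namespace Bernstein

variable {φC : ℂ → ℂ} {m σ2 : ℝ} {μ : Measure ℝ}
  (hrepC : ∀ z : ℂ, 0 ≤ z.re →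
    φC z = (m : ℂ) + (σ2 : ℂ) * z + ∫ y, (1 - Complex.exp (-(z * (y : ℂ)))) ∂μ)
include hrepC

lemma re_apply_ofReal {x : ℝ} (hx : 0 ≤ x) :
    (φC x).re = m + σ2 * x + ∫ y, (1 - Real.exp (-(x * y))) ∂μ := by
  rw [hrepC x (by simpa), integral_one_sub_cexp_neg_ofReal_mul]
  simp

variable (hμ0 : μ (Iic 0) = 0) (hμint : Integrable (fun y : ℝ => min 1 y) μ)
include hμ0 hμint

lemma re_apply_re_le_norm {z : ℂ} (hz : 0 < z.re) : (φC z.re).re ≤ ‖φC z‖ :=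
  calc (φC z.re).re = m + σ2 * z.re + ∫ y, (1 - Real.exp (-(z.re * y))) ∂μ :=
        re_apply_ofReal hrepC hz.le
    _ ≤ (φC z).re := by
        rw [hrepC z hz.le]
        simpa using integral_one_sub_exp_neg_mul_le_re hμ0 hμint hz
    _ ≤ ‖φC z‖ := re_le_norm _

lemma norm_apply_le (hm : 0 ≤ m) (hσ : 0 ≤ σ2) {z : ℂ} (hz : 0 < z.re) :
    ‖φC z‖ ≤ ‖z‖ / z.re * (φC z.re).re := by
  have hratio : 1 ≤ ‖z‖ / z.re := (one_le_div hz).2 (re_le_norm z)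
  have hS := integral_one_sub_exp_neg_mul_nonneg hμ0 hz.le
  rw [re_apply_ofReal hrepC hz.le, hrepC z hz.le]
  calc ‖(m : ℂ) + σ2 * z + ∫ y, (1 - cexp (-(z * y))) ∂μ‖
      ≤ m + σ2 * ‖z‖ + ‖z‖ / z.re * ∫ y, (1 - Real.exp (-(z.re * y))) ∂μ := by
        refine norm_add₃_le.trans ?_
        rw [norm_real, Real.norm_of_nonneg hm, norm_mul, norm_real, Real.norm_of_nonneg hσ]
        gcongr
        exact norm_integral_one_sub_cexp_neg_mul_le hμ0 hμint hz
    _ = m + ‖z‖ / z.re * (σ2 * z.re + ∫ y, (1 - Real.exp (-(z.re * y))) ∂μ) := by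
        field_simp
        ring
    _ ≤ ‖z‖ / z.re * (m + σ2 * z.re + ∫ y, (1 - Real.exp (-(z.re * y))) ∂μ) := by
        nlinarith [mul_le_mul_of_nonneg_right hratio hm]

lemma re_apply_ofReal_pos (hm : 0 ≤ m) (hσ : 0 ≤ σ2) (hnd : ¬ (m = 0 ∧ σ2 = 0 ∧ μ = 0))
    {x : ℝ} (hx : 0 < x) : 0 < (φC x).re := by
  rw [re_apply_ofReal hrepC hx.le]
  rcases eq_or_ne μ 0 with rfl | hμ
  · have : 0 < m ∨ 0 < σ2 := by
      by_contra! h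
      exact hnd ⟨le_antisymm h.1 hm, le_antisymm h.2 hσ, rfl⟩
    rw [integral_zero_measure, add_zero]
    rcases this with h | h <;> positivity
  · have := integral_one_sub_exp_neg_mul_pos hμ0 hμint hμ hx
    positivity

lemma re_apply_le_norm_apply_add_mul_I_le (hm : 0 ≤ m) (hσ : 0 ≤ σ2) {b u : ℝ}
    (hb : 0 < b) (hu : 0 < u) :
    (φC ((b * u : ℝ) : ℂ)).re ≤ ‖φC (((b * u : ℝ) : ℂ) + b * I)‖
      ∧ ‖φC (((b * u : ℝ) : ℂ) + b * I)‖ ≤ √(1 + 1 / u ^ 2) * (φC ((b * u : ℝ) : ℂ)).re := by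
  have hre : (((b * u : ℝ) : ℂ) + b * I).re = b * u := by simp
  have hz : 0 < (((b * u : ℝ) : ℂ) + b * I).re := by rw [hre]; positivity
  have hlow := re_apply_re_le_norm hrepC hμ0 hμint hz
  have hup := norm_apply_le hrepC hμ0 hμint hm hσ hz
  rw [hre] at hlow hup
  rw [norm_ofReal_mul_add_mul_I hb hu, mul_div_cancel_right₀ _ (by positivity)] at hup
  exact ⟨hlow, hup⟩

lemma log_norm_apply_add_mul_I_div_re_mem_Icc (hm : 0 ≤ m) (hσ : 0 ≤ σ2)
    (hnd : ¬ (m = 0 ∧ σ2 = 0 ∧ μ = 0)) {b u : ℝ} (hb : 0 < b) (hu : 0 < u) :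
    Real.log (‖φC (((b * u : ℝ) : ℂ) + b * I)‖ / (φC ((b * u : ℝ) : ℂ)).re)
      ∈ Icc 0 (Real.log (1 + 1 / u ^ 2) / 2) := by
  obtain ⟨hlow, hup⟩ := re_apply_le_norm_apply_add_mul_I_le hrepC hμ0 hμint hm hσ hb hu
  rw [← Real.log_sqrt (by positivity)]
  exact log_div_mem_Icc (re_apply_ofReal_pos hrepC hμ0 hμint hm hσ hnd (by positivity)) hlow hup

end Bernstein

noncomputable def logOneAddInvSqPrimitive (u : ℝ) : ℝ :=
  u * Real.log (1 + 1 / u ^ 2) + 2 * Real.arctan u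

lemma logOneAddInvSqPrimitive_eq (u : ℝ) :
    logOneAddInvSqPrimitive u =
      u * Real.log (u ^ 2 + 1) - 2 * (u * Real.log u) + 2 * Real.arctan u := by
  rcases eq_or_ne u 0 with rfl | hu
  · simp [logOneAddInvSqPrimitive]
  rw [logOneAddInvSqPrimitive, show 1 + 1 / u ^ 2 = (u ^ 2 + 1) / u ^ 2 by field_simp,
    Real.log_div (by positivity) (by positivity), Real.log_pow]
  push_cast
  ring

lemma continuous_logOneAddInvSqPrimitive : Continuous logOneAddInvSqPrimitive := by
  simp_rw [funext logOneAddInvSqPrimitive_eq]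
  exact ((continuous_id.mul ((by fun_prop : Continuous fun u : ℝ => u ^ 2 + 1).log
    fun u => by positivity)).sub (Real.continuous_mul_log.const_mul 2)).add
      (Real.continuous_arctan.const_mul 2)

lemma hasDerivAt_logOneAddInvSqPrimitive {u : ℝ} (hu : u ≠ 0) :
    HasDerivAt logOneAddInvSqPrimitive (Real.log (1 + 1 / u ^ 2)) u := by
  have h1 : HasDerivAt (fun v : ℝ => 1 + 1 / v ^ 2) (-(2 * u) / (u ^ 2) ^ 2) u := by
    simpa [one_div] using ((hasDerivAt_pow 2 u).inv (pow_ne_zero 2 hu)).const_add 1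
  have h := ((hasDerivAt_id u).mul (h1.log (by positivity))).add
    ((Real.hasDerivAt_arctan u).const_mul 2)
  refine h.congr_deriv ?_
  simp only [id]
  field_simp
  ring

lemma tendsto_logOneAddInvSqPrimitive_atTop :
    Tendsto logOneAddInvSqPrimitive atTop (𝓝 Real.pi) := by
  have hA : Tendsto (fun u : ℝ => u * Real.log (1 + 1 / u ^ 2)) atTop (𝓝 0) := by
    refine squeeze_zero' ?_ ?_ tendsto_inv_atTop_zero
    · filter_upwards [eventually_gt_atTop 0] with u hu
      exact mul_nonneg hu.le (Real.log_nonneg (by simp; positivity))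
    · filter_upwards [eventually_gt_atTop 0] with u hu
      calc u * Real.log (1 + 1 / u ^ 2) ≤ u * (1 / u ^ 2) := by
            gcongr
            linarith [Real.log_le_sub_one_of_pos (x := 1 + 1 / u ^ 2) (by positivity)]
        _ = u⁻¹ := by field_simp
  have hB : Tendsto (fun u : ℝ => 2 * Real.arctan u) atTop (𝓝 Real.pi) := by
    convert (tendsto_nhds_of_tendsto_nhdsWithin Real.tendsto_arctan_atTop).const_mul (2 : ℝ)
      using 2
    ring
  have h := hA.add hB
  rw [zero_add] at h
  exact h

lemma integrableOn_log_one_add_inv_sq {s : ℝ} (hs : 0 ≤ s) :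
    IntegrableOn (fun u : ℝ => Real.log (1 + 1 / u ^ 2)) (Ioi s) :=
  integrableOn_Ioi_deriv_of_nonneg continuous_logOneAddInvSqPrimitive.continuousWithinAt
    (fun _ hu => hasDerivAt_logOneAddInvSqPrimitive (hs.trans_lt hu).ne')
    (fun _ _ => Real.log_nonneg (by simp; positivity)) tendsto_logOneAddInvSqPrimitive_atTop

lemma integral_log_one_add_inv_sq_le {s : ℝ} (hs : 0 ≤ s) :
    ∫ u in Ioi s, Real.log (1 + 1 / u ^ 2) ≤ Real.pi := by
  rw [integral_Ioi_of_hasDerivAt_of_nonneg continuous_logOneAddInvSqPrimitive.continuousWithinAt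
    (fun _ hu => hasDerivAt_logOneAddInvSqPrimitive (hs.trans_lt hu).ne')
    (fun _ _ => Real.log_nonneg (by simp; positivity)) tendsto_logOneAddInvSqPrimitive_atTop]
  have h1 : 0 ≤ Real.arctan s := Real.arctan_nonneg.2 hs
  have h2 : 0 ≤ s * Real.log (1 + 1 / s ^ 2) :=
    mul_nonneg hs (Real.log_nonneg (by simp; positivity))
  rw [logOneAddInvSqPrimitive]
  linarith

/-- for a nondegenerate Bernstein function,
`φ(bu) ≤ |φ(bu + ib)| ≤ √(1 + 1/u²) φ(bu)` and `0 ≤ Θ_φ(a,b) ≤ π/2`. -/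
theorem bernstein_Theta_bounds
    (φC : ℂ → ℂ) (m σ2 : ℝ) (μ : Measure ℝ)
    (hm : 0 ≤ m) (hσ : 0 ≤ σ2)
    (hμ0 : μ (Set.Iic 0) = 0)
    (hμint : Integrable (fun y : ℝ => min 1 y) μ)
    (hrepC : ∀ z : ℂ, 0 ≤ z.re →
      φC z = (m : ℂ) + (σ2 : ℂ) * z + ∫ y, (1 - Complex.exp (-(z * (y : ℂ)))) ∂μ)
    (hnd : ¬ (m = 0 ∧ σ2 = 0 ∧ μ = 0)) :
    (∀ b u : ℝ, 0 < b → 0 < u →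
        (φC ((b * u : ℝ) : ℂ)).re ≤ ‖φC (((b * u : ℝ) : ℂ) + (b : ℂ) * Complex.I)‖
      ∧ ‖φC (((b * u : ℝ) : ℂ) + (b : ℂ) * Complex.I)‖
          ≤ Real.sqrt (1 + 1 / u ^ 2) * (φC ((b * u : ℝ) : ℂ)).re)
    ∧ (∀ a b : ℝ, 0 ≤ a → 0 < b →
        0 ≤ Theta φC a b ∧ Theta φC a b ≤ Real.pi / 2) := by
  refine ⟨fun b u hb hu =>
    Bernstein.re_apply_le_norm_apply_add_mul_I_le hrepC hμ0 hμint hm hσ hb hu, fun a b ha hb => ?_⟩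
  have hs : 0 ≤ a / b := by positivity
  have hlog : ∀ u ∈ Ioi (a / b),
      Real.log (‖φC (((b * u : ℝ) : ℂ) + b * I)‖ / (φC ((b * u : ℝ) : ℂ)).re)
        ∈ Icc 0 (Real.log (1 + 1 / u ^ 2) / 2) := fun u hu =>
    Bernstein.log_norm_apply_add_mul_I_div_re_mem_Icc hrepC hμ0 hμint hm hσ hnd hb (hs.trans_lt hu)
  refine ⟨setIntegral_nonneg measurableSet_Ioi fun u hu => (hlog u hu).1, ?_⟩
  calc Theta φC a b ≤ ∫ u in Ioi (a / b), Real.log (1 + 1 / u ^ 2) / 2 :=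
        integral_mono_of_nonneg
          ((ae_restrict_iff' measurableSet_Ioi).2 (ae_of_all _ fun u hu => (hlog u hu).1))
          ((integrableOn_log_one_add_inv_sq hs).div_const 2)
          ((ae_restrict_iff' measurableSet_Ioi).2 (ae_of_all _ fun u hu => (hlog u hu).2))
    _ ≤ Real.pi / 2 := by
        rw [integral_div]
        gcongr
        exact integral_log_one_add_inv_sq_le hs
end
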